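/- arXiv:1109.5159 — 15 statements merged into one kernel-verified Lean document; each statement's English description precedes it below -/
import Mathlib

section
/- For every integer m with 0 ≤ m ≤ M−1 there exists a real number ξ_m > 0 such that ξ_0 < ξ_1 < ⋯ < ξ_{M−1}, and for each such m (setting ξ_M = +∞), ξ_m is the unique zero in the interval (0, ξ_{m+1}) of the denominator function y ↦ S^{m+1}_tot − λ_{m+1} y − μ_{m+1} ψ_{m+1}(y); this function is positive on [0, ξ_m) and negative on (ξ_m, ξ_{m+1}). -/
open Filter Set Topology

def Fden (S lam mu : ℕ → ℝ) (ψ : ℕ → ℝ → ℝ) (m : ℕ) (y : ℝ) : ℝ :=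
  S (m+1) - lam (m+1) * y - mu (m+1) * ψ (m+1) y

def Jset (n : ℕ) (ξ : ℕ → ℝ) (m : ℕ) : Set ℝ :=
  if m + 1 ≤ n then Ico 0 (ξ (m+1)) else Ici 0

lemma auxBase (SM lamM muM : ℝ) (hS : 0 < SM) (hlam : 0 < lamM) (hmu : 0 < muM) :
    ∃ ξ : ℝ, 0 < ξ ∧ (SM - lamM * ξ - muM * ξ = 0) ∧
      StrictAntiOn (fun y => SM - lamM * y - muM * y) (Ici 0) ∧
      ContinuousOn (fun y => SM - lamM * y - muM * y) (Ici 0) := by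
  refine ⟨SM / (lamM + muM), by positivity, ?_, ?_, ?_⟩
  · have h : lamM + muM ≠ 0 := by positivity
    field_simp
    ring
  · intro x _ y _ hxy; dsimp; nlinarith
  · fun_prop

lemma auxStep (S1 lam1 mu1 c u1 ξ' : ℝ) (hS : 0 < S1) (hlam : 0 < lam1)
    (hmu : 0 < mu1) (hc : 0 < c) (hu : 0 < u1) (hξ' : 0 < ξ')
    (G : ℝ → ℝ) (J' : Set ℝ) (hsub : Ico 0 ξ' ⊆ J') (hξJ : ξ' ∈ J')
    (hGanti : StrictAntiOn G J') (hGcont : ContinuousOn G J') (hGz : G ξ' = 0) :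
    ∃ ξ, 0 < ξ ∧ ξ < ξ' ∧
      (S1 - lam1 * ξ - mu1 * (c * ξ / (u1 * G ξ)) = 0) ∧
      StrictAntiOn (fun y => S1 - lam1 * y - mu1 * (c * y / (u1 * G y))) (Ico 0 ξ') ∧
      ContinuousOn (fun y => S1 - lam1 * y - mu1 * (c * y / (u1 * G y))) (Ico 0 ξ') := by
  set F : ℝ → ℝ := fun y => S1 - lam1 * y - mu1 * (c * y / (u1 * G y)) with hFdef
  have hGpos : ∀ y ∈ Ico 0 ξ', 0 < G y := fun y hy => hGz ▸ hGanti (hsub hy) hξJ hy.2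
  have hcont : ContinuousOn F (Ico 0 ξ') := by
    apply ContinuousOn.sub
    · exact ContinuousOn.sub continuousOn_const (continuousOn_const.mul continuousOn_id)
    · exact continuousOn_const.mul ((continuousOn_const.mul continuousOn_id).div
        (continuousOn_const.mul (hGcont.mono hsub))
        (fun y hy => (mul_pos hu (hGpos y hy)).ne'))
  have hanti : StrictAntiOn F (Ico 0 ξ') := by
    intro x hx y hy hxy
    have hGx := hGpos x hx
    have hGy := hGpos y hy
    have hGxy : G y < G x := hGanti (hsub hx) (hsub hy) hxy
    have hdiv : c * x / (u1 * G x) ≤ c * y / (u1 * G y) :=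
      div_le_div₀ (mul_nonneg hc.le hy.1) (by nlinarith [hx.1]) (by positivity) (by nlinarith)
    simp only [hFdef]
    have := mul_le_mul_of_nonneg_left hdiv hmu.le
    nlinarith
  have hne : (𝓝[Ico 0 ξ'] ξ').NeBot := by
    apply mem_closure_iff_nhdsWithin_neBot.mp
    rw [closure_Ico hξ'.ne]
    exact right_mem_Icc.mpr hξ'.le
  have htend : Tendsto G (𝓝[Ico 0 ξ'] ξ') (𝓝 0) := by
    have h := (hGcont ξ' hξJ).mono hsub
    rwa [ContinuousWithinAt, hGz] at h
  set δ : ℝ := mu1 * c * (ξ'/2) / (u1 * (S1 + 1)) with hδ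
  have hδpos : 0 < δ := by positivity
  have h1 : ∀ᶠ y in 𝓝[Ico 0 ξ'] ξ', G y < δ := htend.eventually_lt_const hδpos
  have h2 : ∀ᶠ y in 𝓝[Ico 0 ξ'] ξ', ξ'/2 < y :=
    eventually_nhdsWithin_of_eventually_nhds (eventually_gt_nhds (by linarith))
  have h3 : ∀ᶠ y in 𝓝[Ico 0 ξ'] ξ', y ∈ Ico 0 ξ' := eventually_mem_nhdsWithin
  obtain ⟨y₀, hy₀δ, hy₀half, hy₀mem⟩ := (h1.and (h2.and h3)).exists
  have hGy₀ := hGpos y₀ hy₀mem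
  have hy0 : (0:ℝ) ≤ y₀ := hy₀mem.1
  have hFy₀ : F y₀ < 0 := by
    have hkey : mu1 * c * (ξ'/2) / (u1 * δ) ≤ mu1 * c * y₀ / (u1 * G y₀) :=
      div_le_div₀ (by positivity) (by nlinarith [mul_pos hmu hc]) (by positivity) (by nlinarith)
    have hval : mu1 * c * (ξ'/2) / (u1 * δ) = S1 + 1 := by
      rw [hδ]; field_simp
    rw [hval] at hkey
    have hassoc : mu1 * (c * y₀ / (u1 * G y₀)) = mu1 * c * y₀ / (u1 * G y₀) := by
      ring
    simp only [hFdef]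
    rw [hassoc]
    nlinarith
  have hF0 : F 0 = S1 := by simp [hFdef]
  have key := intermediate_value_Icc' hy0 (hcont.mono (Icc_subset_Ico_right hy₀mem.2))
  have hmem : (0:ℝ) ∈ Icc (F y₀) (F 0) := ⟨hFy₀.le, by rw [hF0]; exact hS.le⟩
  obtain ⟨ξ, hξmem, hξz⟩ := key hmem
  have hξpos : 0 < ξ := by
    rcases hξmem.1.eq_or_lt with h | h
    · exfalso; rw [← h, hF0] at hξz; linarith
    · exact h
  exact ⟨ξ, hξpos, lt_of_le_of_lt hξmem.2 hy₀mem.2, hξz, hanti, hcont⟩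

theorem stmt0
    (M : ℕ) (hM : 2 ≤ M)
    (d : ℝ) (hd : 0 < d)
    (u v w : ℕ → ℝ)
    (hu : ∀ m, 1 ≤ m → m ≤ M - 1 → 0 < u m)
    (hv : ∀ m, 1 ≤ m → m ≤ M - 1 → 0 < v m)
    (hw : ∀ m, 1 ≤ m → m ≤ M - 1 → 0 < w m)
    (S lam mu : ℕ → ℝ)
    (hS : ∀ m, 1 ≤ m → m ≤ M → 0 < S m)
    (hlam : ∀ m, 1 ≤ m → m ≤ M → 0 < lam m)
    (hmu : ∀ m, 1 ≤ m → m ≤ M → 0 < mu m)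
    (ψ : ℕ → ℝ → ℝ)
    (hψM : ∀ y, ψ M y = y)
    (hψrec : ∀ m, 2 ≤ m → m ≤ M → ∀ y,
      ψ (m - 1) y = d * (v (m - 1) / w (m - 1) + 1) * y /
        (u (m - 1) * (S m - lam m * y - mu m * ψ m y)))
    (hψ0 : ∀ y, ψ 0 y = d * y / (S 1 - lam 1 * y - mu 1 * ψ 1 y)) :
    ∃ ξ : ℕ → ℝ,
      (∀ m, m ≤ M - 1 → 0 < ξ m) ∧
      (∀ m, m + 1 ≤ M - 1 → ξ m < ξ (m + 1)) ∧
      (∀ m, m ≤ M - 1 →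
        (S (m + 1) - lam (m + 1) * ξ m - mu (m + 1) * ψ (m + 1) (ξ m) = 0) ∧
        (∀ y, 0 < y → (m + 1 ≤ M - 1 → y < ξ (m + 1)) →
          S (m + 1) - lam (m + 1) * y - mu (m + 1) * ψ (m + 1) y = 0 → y = ξ m) ∧
        (∀ y, 0 ≤ y → y < ξ m →
          0 < S (m + 1) - lam (m + 1) * y - mu (m + 1) * ψ (m + 1) y) ∧
        (∀ y, ξ m < y → (m + 1 ≤ M - 1 → y < ξ (m + 1)) →
          S (m + 1) - lam (m + 1) * y - mu (m + 1) * ψ (m + 1) y < 0)) := by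
  set n := M - 1 with hn
  have hnM : n + 1 = M := by omega
  -- rewrite ψ (m+1) in terms of Fden (m+1), for m+1 ≤ n
  have hψrw : ∀ m : ℕ, m + 1 ≤ n → ∀ y : ℝ, ψ (m+1) y =
      d * (v (m+1) / w (m+1) + 1) * y /
        (u (m+1) * (S (m+1+1) - lam (m+1+1) * y - mu (m+1+1) * ψ (m+1+1) y)) := by
    intro m hm y
    have h := hψrec (m+2) (by omega) (by omega) y
    exact h
  have hFeq : ∀ i : ℕ, i + 1 ≤ n → Fden S lam mu ψ i =
      fun y => S (i+1) - lam (i+1) * y - mu (i+1) *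
        (d * (v (i+1) / w (i+1) + 1) * y / (u (i+1) * Fden S lam mu ψ (i+1) y)) := by
    intro i hi
    funext y
    simp only [Fden]
    rw [hψrw i hi y]
  -- the invariant
  have base : ∃ ξ : ℕ → ℝ, ∀ m, n ≤ m → m ≤ n →
      0 < ξ m ∧ ξ m ∈ Jset n ξ m ∧ Fden S lam mu ψ m (ξ m) = 0 ∧
      StrictAntiOn (Fden S lam mu ψ m) (Jset n ξ m) ∧
      ContinuousOn (Fden S lam mu ψ m) (Jset n ξ m) := by
    obtain ⟨ξt, hξt0, hξtz, hξtanti, hξtcont⟩ :=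
      auxBase (S M) (lam M) (mu M) (hS M (by omega) le_rfl)
        (hlam M (by omega) le_rfl) (hmu M (by omega) le_rfl)
    refine ⟨fun _ => ξt, ?_⟩
    intro m hm1 hm2
    have hmn : m = n := le_antisymm hm2 hm1
    have hm' : m + 1 = M := by omega
    have hFn : Fden S lam mu ψ m = fun y => S M - lam M * y - mu M * y := by
      funext y
      simp only [Fden, hm', hψM]
    have hJn : Jset n (fun _ => ξt) m = Ici 0 := by
      rw [Jset, if_neg (by omega)]
    rw [hFn, hJn]
    exact ⟨hξt0, hξt0.le, hξtz, hξtanti, hξtcont⟩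
  have step : ∀ i : ℕ, i < n →
      (∃ ξ : ℕ → ℝ, ∀ m, i + 1 ≤ m → m ≤ n →
        0 < ξ m ∧ ξ m ∈ Jset n ξ m ∧ Fden S lam mu ψ m (ξ m) = 0 ∧
        StrictAntiOn (Fden S lam mu ψ m) (Jset n ξ m) ∧
        ContinuousOn (Fden S lam mu ψ m) (Jset n ξ m)) →
      (∃ ξ : ℕ → ℝ, ∀ m, i ≤ m → m ≤ n →
        0 < ξ m ∧ ξ m ∈ Jset n ξ m ∧ Fden S lam mu ψ m (ξ m) = 0 ∧
        StrictAntiOn (Fden S lam mu ψ m) (Jset n ξ m) ∧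
        ContinuousOn (Fden S lam mu ψ m) (Jset n ξ m)) := by
    intro i hi ⟨ξ, hξ⟩
    obtain ⟨hpos1, hmem1, hz1, hanti1, hcont1⟩ := hξ (i+1) le_rfl (by omega)
    have hsub : Ico 0 (ξ (i+1)) ⊆ Jset n ξ (i+1) := by
      by_cases h2 : i + 1 + 1 ≤ n
      · rw [Jset, if_pos h2] at hmem1 ⊢
        exact Ico_subset_Ico le_rfl hmem1.2.le
      · rw [Jset, if_neg h2]
        exact fun y hy => hy.1
    have hv' := hv (i+1) (by omega) (by omega)
    have hw' := hw (i+1) (by omega) (by omega)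
    obtain ⟨ζ, hζpos, hζlt, hζz, hζanti, hζcont⟩ :=
      auxStep (S (i+1)) (lam (i+1)) (mu (i+1)) (d * (v (i+1) / w (i+1) + 1)) (u (i+1))
        (ξ (i+1)) (hS _ (by omega) (by omega)) (hlam _ (by omega) (by omega))
        (hmu _ (by omega) (by omega)) (by positivity) (hu _ (by omega) (by omega)) hpos1
        (Fden S lam mu ψ (i+1)) (Jset n ξ (i+1)) hsub hmem1 hanti1 hcont1 hz1
    refine ⟨Function.update ξ i ζ, ?_⟩
    intro m hm1 hm2
    rcases eq_or_lt_of_le hm1 with rfl | hlt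
    · have e1 : Function.update ξ i ζ i = ζ := Function.update_self _ _ _
      have e2 : Function.update ξ i ζ (i+1) = ξ (i+1) :=
        Function.update_of_ne (by omega) _ _
      have hJ : Jset n (Function.update ξ i ζ) i = Ico 0 (ξ (i+1)) := by
        rw [Jset, if_pos (by omega : i + 1 ≤ n), e2]
      rw [e1, hJ, hFeq i (by omega)]
      exact ⟨hζpos, ⟨hζpos.le, hζlt⟩, hζz, hζanti, hζcont⟩
    · have e1 : Function.update ξ i ζ m = ξ m := Function.update_of_ne (by omega) _ _
      have e2 : Function.update ξ i ζ (m+1) = ξ (m+1) := Function.update_of_ne (by omega) _ _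
      have hJ : Jset n (Function.update ξ i ζ) m = Jset n ξ m := by
        simp only [Jset, e2]
      rw [e1, hJ]
      exact hξ m hlt hm2
  have hQ : ∃ ξ : ℕ → ℝ, ∀ m, m ≤ n →
      0 < ξ m ∧ ξ m ∈ Jset n ξ m ∧ Fden S lam mu ψ m (ξ m) = 0 ∧
      StrictAntiOn (Fden S lam mu ψ m) (Jset n ξ m) ∧
      ContinuousOn (Fden S lam mu ψ m) (Jset n ξ m) := by
    have h := Nat.decreasingInduction
      (motive := fun j _ => ∃ ξ : ℕ → ℝ, ∀ m, j ≤ m → m ≤ n →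
        0 < ξ m ∧ ξ m ∈ Jset n ξ m ∧ Fden S lam mu ψ m (ξ m) = 0 ∧
        StrictAntiOn (Fden S lam mu ψ m) (Jset n ξ m) ∧
        ContinuousOn (Fden S lam mu ψ m) (Jset n ξ m))
      step base (Nat.zero_le n)
    obtain ⟨ξ, hξ⟩ := h
    exact ⟨ξ, fun m hm => hξ m (Nat.zero_le m) hm⟩
  obtain ⟨ξ, hall⟩ := hQ
  refine ⟨ξ, fun m hm => (hall m hm).1, ?_, ?_⟩
  · intro m hm
    have h := (hall m (by omega)).2.1
    rw [Jset, if_pos hm] at h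
    exact h.2
  · intro m hm
    obtain ⟨h0, hmemJ, hz, hanti, hcont⟩ := hall m hm
    have hnext : m + 1 ≤ n → ξ m < ξ (m+1) := by
      intro h
      have h' := hmemJ
      rw [Jset, if_pos h] at h'
      exact h'.2
    have hyJ : ∀ y : ℝ, 0 ≤ y → (m + 1 ≤ n → y < ξ (m+1)) → y ∈ Jset n ξ m := by
      intro y hy hlt
      rw [Jset]
      split
      · next h => exact ⟨hy, hlt h⟩
      · exact hy
    refine ⟨hz, ?_, ?_, ?_⟩
    · intro y hy hlt hzero
      exact hanti.injOn (hyJ y hy.le hlt) hmemJ (by rw [hz]; exact hzero)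
    · intro y hy hylt
      have hy' := hyJ y hy (fun h => hylt.trans (hnext h))
      have h := hanti hy' hmemJ hylt
      rw [hz] at h
      exact h
    · intro y hylt hyub
      have hy' := hyJ y (le_trans h0.le hylt.le) hyub
      have h := hanti hmemJ hy' hylt
      rw [hz] at h
      exact h
end

section
/- For every integer m with 0 ≤ m ≤ M (setting ξ_M = ξ_{M+1} = +∞), the function ψ_m is continuous, nonnegative and strictly increasing on the interval [0, ξ_m), and satisfies ψ_m(0) = 0. -/
open Filter Set Topology

theorem stmt1
    (M : ℕ) (hM : 2 ≤ M)
    (d : ℝ) (hd : 0 < d)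
    (u v w : ℕ → ℝ)
    (hu : ∀ m, 1 ≤ m → m ≤ M - 1 → 0 < u m)
    (hv : ∀ m, 1 ≤ m → m ≤ M - 1 → 0 < v m)
    (hw : ∀ m, 1 ≤ m → m ≤ M - 1 → 0 < w m)
    (S lam mu : ℕ → ℝ)
    (hS : ∀ m, 1 ≤ m → m ≤ M → 0 < S m)
    (hlam : ∀ m, 1 ≤ m → m ≤ M → 0 < lam m)
    (hmu : ∀ m, 1 ≤ m → m ≤ M → 0 < mu m)
    (ψ : ℕ → ℝ → ℝ)
    (hψM : ∀ y, ψ M y = y)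
    (hψrec : ∀ m, 2 ≤ m → m ≤ M → ∀ y,
      ψ (m - 1) y = d * (v (m - 1) / w (m - 1) + 1) * y /
        (u (m - 1) * (S m - lam m * y - mu m * ψ m y)))
    (hψ0 : ∀ y, ψ 0 y = d * y / (S 1 - lam 1 * y - mu 1 * ψ 1 y))
    (ξ : ℕ → ℝ)
    (hξpos : ∀ m, 0 ≤ m → m ≤ M - 1 → 0 < ξ m)
    (hξlt : ∀ m, 0 ≤ m → m + 1 ≤ M - 1 → ξ m < ξ (m + 1))
    (hξzero : ∀ m, 0 ≤ m → m ≤ M - 1 →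
      S (m + 1) - lam (m + 1) * ξ m - mu (m + 1) * ψ (m + 1) (ξ m) = 0)
    (hξuniq : ∀ m, 0 ≤ m → m ≤ M - 1 → ∀ y, 0 < y → (m + 1 ≤ M - 1 → y < ξ (m + 1)) →
      S (m + 1) - lam (m + 1) * y - mu (m + 1) * ψ (m + 1) y = 0 → y = ξ m) :
    ∀ m, m ≤ M →
      ContinuousOn (ψ m) {y : ℝ | 0 ≤ y ∧ (m ≤ M - 1 → y < ξ m)} ∧
      (∀ y, 0 ≤ y → (m ≤ M - 1 → y < ξ m) → 0 ≤ ψ m y) ∧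
      StrictMonoOn (ψ m) {y : ℝ | 0 ≤ y ∧ (m ≤ M - 1 → y < ξ m)} ∧
      ψ m 0 = 0 := by

  suffices key : ∀ k m, m + k = M →
      (ContinuousOn (ψ m) {y : ℝ | 0 ≤ y ∧ (m ≤ M - 1 → y < ξ m)} ∧
      (∀ y, 0 ≤ y → (m ≤ M - 1 → y < ξ m) → 0 ≤ ψ m y) ∧
      StrictMonoOn (ψ m) {y : ℝ | 0 ≤ y ∧ (m ≤ M - 1 → y < ξ m)} ∧
      ψ m 0 = 0) by
    intro m hm
    exact key (M - m) m (by omega)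
  intro k
  induction k with
  | zero =>
    intro m hm
    have hmM : m = M := by omega
    subst hmM
    refine ⟨(continuousOn_id).congr (fun y _ => hψM y), fun y hy _ => by rw [hψM]; exact hy,
      fun a _ b _ hab => by rw [hψM, hψM]; exact hab, hψM 0⟩
  | succ k ih =>
    intro m hm
    obtain ⟨hcont, hnn, hmono, hz⟩ := ih (m + 1) (by omega)
    have hmM1 : m ≤ M - 1 := by omega
    have h1M : 1 ≤ m + 1 := by omega
    have hmM : m + 1 ≤ M := by omega
    -- the common formula
    obtain ⟨C, K, hC, hK, hform⟩ :
        ∃ C K : ℝ, 0 < C ∧ 0 < K ∧ ∀ y, ψ m y =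
          C * y / (K * (S (m+1) - lam (m+1) * y - mu (m+1) * ψ (m+1) y)) := by
      rcases Nat.eq_zero_or_pos m with h0 | h1
      · subst h0
        exact ⟨d, 1, hd, one_pos, fun y => by rw [hψ0, one_mul]⟩
      · have hvw : 0 < v m / w m + 1 := by
          have := hv m h1 hmM1
          have := hw m h1 hmM1
          positivity
        refine ⟨d * (v m / w m + 1), u m, by positivity, hu m h1 hmM1, fun y => ?_⟩
        have h := hψrec (m + 1) (by omega) (by omega) y
        simpa using h
    have hsub : ∀ y : ℝ, 0 ≤ y → y < ξ m →
        y ∈ {y : ℝ | 0 ≤ y ∧ (m + 1 ≤ M - 1 → y < ξ (m + 1))} :=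
      fun y hy hlt => ⟨hy, fun h => lt_trans hlt (hξlt m (by omega) h)⟩
    have hξmem : ξ m ∈ {y : ℝ | 0 ≤ y ∧ (m + 1 ≤ M - 1 → y < ξ (m + 1))} :=
      ⟨le_of_lt (hξpos m (by omega) hmM1), fun h => hξlt m (by omega) h⟩
    have hgpos : ∀ y : ℝ, 0 ≤ y → y < ξ m →
        0 < S (m+1) - lam (m+1) * y - mu (m+1) * ψ (m+1) y := by
      intro y hy hlt
      have hzξ := hξzero m (by omega) hmM1
      have h1 := hmono (hsub y hy hlt) hξmem hlt
      have hl := hlam (m+1) h1M hmM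
      have hmu1 := hmu (m+1) h1M hmM
      nlinarith
    have hDsub : {y : ℝ | 0 ≤ y ∧ (m ≤ M - 1 → y < ξ m)} ⊆
        {y : ℝ | 0 ≤ y ∧ (m + 1 ≤ M - 1 → y < ξ (m + 1))} :=
      fun y hy => hsub y hy.1 (hy.2 hmM1)
    refine ⟨?_, ?_, ?_, ?_⟩
    · refine ContinuousOn.congr ?_ (fun y _ => hform y)
      refine ContinuousOn.div ((continuous_const.mul continuous_id).continuousOn) ?_ ?_
      · exact continuousOn_const.mul
          (((continuousOn_const.sub (continuousOn_const.mul continuousOn_id)).sub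
            (continuousOn_const.mul (hcont.mono hDsub))))
      · intro y hy
        exact ne_of_gt (mul_pos hK (hgpos y hy.1 (hy.2 hmM1)))
    · intro y hy hlt
      rw [hform]
      have := hgpos y hy (hlt hmM1)
      positivity
    · intro a ha b hb hab
      rw [hform, hform]
      have hga := hgpos a ha.1 (ha.2 hmM1)
      have hgb := hgpos b hb.1 (hb.2 hmM1)
      have hgba : S (m+1) - lam (m+1) * b - mu (m+1) * ψ (m+1) b <
          S (m+1) - lam (m+1) * a - mu (m+1) * ψ (m+1) a := by
        have h1 := hmono (hDsub ha) (hDsub hb) hab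
        have hl := hlam (m+1) h1M hmM
        have hmu1 := hmu (m+1) h1M hmM
        nlinarith
      rw [div_lt_div_iff₀ (mul_pos hK hga) (mul_pos hK hgb)]
      have h1 : a * (S (m+1) - lam (m+1) * b - mu (m+1) * ψ (m+1) b) <
          b * (S (m+1) - lam (m+1) * a - mu (m+1) * ψ (m+1) a) := by
        nlinarith [ha.1]
      nlinarith [mul_pos hC hK, h1]
    · rw [hform]
      simp
end

section
/- For every integer m with 0 ≤ m ≤ M−1, the function ψ_m tends to +∞ as y tends to ξ_m from the left, i.e. lim_{y → ξ_m^−} ψ_m(y) = +∞. -/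
open Filter Set Topology

theorem stmt2
    (M : ℕ) (hM : 2 ≤ M)
    (d : ℝ) (hd : 0 < d)
    (u v w : ℕ → ℝ)
    (hu : ∀ m, 1 ≤ m → m ≤ M - 1 → 0 < u m)
    (hv : ∀ m, 1 ≤ m → m ≤ M - 1 → 0 < v m)
    (hw : ∀ m, 1 ≤ m → m ≤ M - 1 → 0 < w m)
    (S lam mu : ℕ → ℝ)
    (hS : ∀ m, 1 ≤ m → m ≤ M → 0 < S m)
    (hlam : ∀ m, 1 ≤ m → m ≤ M → 0 < lam m)
    (hmu : ∀ m, 1 ≤ m → m ≤ M → 0 < mu m)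
    (ψ : ℕ → ℝ → ℝ)
    (hψM : ∀ y, ψ M y = y)
    (hψrec : ∀ m, 2 ≤ m → m ≤ M → ∀ y,
      ψ (m - 1) y = d * (v (m - 1) / w (m - 1) + 1) * y /
        (u (m - 1) * (S m - lam m * y - mu m * ψ m y)))
    (hψ0 : ∀ y, ψ 0 y = d * y / (S 1 - lam 1 * y - mu 1 * ψ 1 y))
    (ξ : ℕ → ℝ)
    (hξpos : ∀ m, 0 ≤ m → m ≤ M - 1 → 0 < ξ m)
    (hξlt : ∀ m, 0 ≤ m → m + 1 ≤ M - 1 → ξ m < ξ (m + 1))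
    (hξzero : ∀ m, 0 ≤ m → m ≤ M - 1 →
      S (m + 1) - lam (m + 1) * ξ m - mu (m + 1) * ψ (m + 1) (ξ m) = 0)
    (hξuniq : ∀ m, 0 ≤ m → m ≤ M - 1 → ∀ y, 0 < y → (m + 1 ≤ M - 1 → y < ξ (m + 1)) →
      S (m + 1) - lam (m + 1) * y - mu (m + 1) * ψ (m + 1) y = 0 → y = ξ m) :
    ∀ m, m ≤ M - 1 → Tendsto (ψ m) (𝓝[<] (ξ m)) atTop := by
  have key : ∀ k m, m ≤ M - 1 → M - 1 - m ≤ k →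
      ContinuousOn (ψ (m+1)) (Icc 0 (ξ m)) ∧ ψ (m+1) 0 = 0 := by
    intro k
    induction k with
    | zero =>
      intro m hm hk
      have hmeq : m = M - 1 := by omega
      subst hmeq
      have hMeq : M - 1 + 1 = M := by omega
      rw [hMeq]
      have hid : ψ M = fun y => y := funext hψM
      rw [hid]
      exact ⟨continuousOn_id, rfl⟩
    | succ k ih =>
      intro m hm hk
      by_cases hme : m = M - 1
      · subst hme
        have hMeq : M - 1 + 1 = M := by omega
        rw [hMeq]
        have hid : ψ M = fun y => y := funext hψM
        rw [hid]
        exact ⟨continuousOn_id, rfl⟩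
      · have hm1 : m + 1 ≤ M - 1 := by omega
        obtain ⟨hc2, h02⟩ := ih (m+1) hm1 (by omega)
        set D1 : ℝ → ℝ := fun y => S (m+2) - lam (m+2) * y - mu (m+2) * ψ (m+2) y with hD1
        have hsub : Icc (0:ℝ) (ξ m) ⊆ Icc 0 (ξ (m+1)) :=
          Icc_subset_Icc le_rfl (le_of_lt (hξlt m (Nat.zero_le m) hm1))
        have hcD1 : ContinuousOn D1 (Icc 0 (ξ m)) := by
          apply ContinuousOn.sub
          apply ContinuousOn.sub
          · exact continuousOn_const
          · exact continuousOn_const.mul continuousOn_id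
          · exact continuousOn_const.mul (hc2.mono hsub)
        have hD1ne : ∀ y ∈ Icc (0:ℝ) (ξ m), D1 y ≠ 0 := by
          intro y hy
          rcases eq_or_lt_of_le hy.1 with h0 | h0
          · have : D1 0 = S (m+2) := by simp [hD1, h02]
            rw [← h0, this]
            exact (hS (m+2) (by omega) (by omega)).ne'
          · intro hzero
            have hy2 : y < ξ (m+1) := lt_of_le_of_lt hy.2 (hξlt m (Nat.zero_le m) hm1)
            have hequ := hξuniq (m+1) (Nat.zero_le _) hm1 y h0
              (fun h => lt_trans hy2 (hξlt (m+1) (Nat.zero_le _) h)) hzero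
            exact hy2.ne hequ
        have hψeq : ∀ y, ψ (m+1) y = d * (v (m+1) / w (m+1) + 1) * y / (u (m+1) * D1 y) := by
          intro y
          have h := hψrec (m+2) (by omega) (by omega) y
          simpa using h
        have hune : u (m+1) ≠ 0 := (hu (m+1) (by omega) hm1).ne'
        constructor
        · have hrw : ∀ x ∈ Icc (0:ℝ) (ξ m),
              ψ (m+1) x = d * (v (m+1) / w (m+1) + 1) * x / (u (m+1) * D1 x) :=
            fun x _ => hψeq x
          apply ContinuousOn.congr _ hrw
          apply ContinuousOn.div
          · exact continuousOn_const.mul continuousOn_id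
          · exact continuousOn_const.mul hcD1
          · intro x hx
            exact mul_ne_zero hune (hD1ne x hx)
        · rw [hψeq 0]
          simp
  intro m hm
  obtain ⟨hc, h0⟩ := key (M-1) m hm (by omega)
  set D : ℝ → ℝ := fun y => S (m+1) - lam (m+1) * y - mu (m+1) * ψ (m+1) y with hD
  have hcD : ContinuousOn D (Icc 0 (ξ m)) := by
    apply ContinuousOn.sub
    apply ContinuousOn.sub
    · exact continuousOn_const
    · exact continuousOn_const.mul continuousOn_id
    · exact continuousOn_const.mul hc
  have hξm : 0 < ξ m := hξpos m (Nat.zero_le m) hm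
  have hD0 : 0 < D 0 := by
    have : D 0 = S (m+1) := by simp [hD, h0]
    rw [this]; exact hS (m+1) (by omega) (by omega)
  have hDξ : D (ξ m) = 0 := hξzero m (Nat.zero_le m) hm
  have hDpos : ∀ y ∈ Ico (0:ℝ) (ξ m), 0 < D y := by
    intro y hy
    by_contra hle
    push_neg at hle
    have hne : D y ≠ 0 := by
      rcases eq_or_lt_of_le hy.1 with h0' | h0'
      · rw [← h0']; exact hD0.ne'
      · intro hz
        have hequ := hξuniq m (Nat.zero_le m) hm y h0'
          (fun h => lt_trans hy.2 (hξlt m (Nat.zero_le m) h)) hz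
        exact hy.2.ne hequ
    have hlt : D y < 0 := lt_of_le_of_ne hle hne
    have hsub : Icc (0:ℝ) y ⊆ Icc 0 (ξ m) := Icc_subset_Icc le_rfl hy.2.le
    have hIVT := intermediate_value_Icc' hy.1 (hcD.mono hsub)
    have h0mem : (0:ℝ) ∈ Icc (D y) (D 0) := ⟨hlt.le, hD0.le⟩
    obtain ⟨z, hz, hz0⟩ := hIVT h0mem
    have hzpos : 0 < z := by
      rcases eq_or_lt_of_le hz.1 with h | h
      · exfalso; rw [← h] at hz0; exact hD0.ne' hz0
      · exact h
    have hzlt : z < ξ m := lt_of_le_of_lt hz.2 hy.2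
    have hequ := hξuniq m (Nat.zero_le m) hm z hzpos
      (fun h => lt_trans hzlt (hξlt m (Nat.zero_le m) h)) hz0
    exact hzlt.ne hequ
  have hmemIoo : Ioo (0:ℝ) (ξ m) ∈ 𝓝[<] (ξ m) :=
    Ioo_mem_nhdsLT_of_mem ⟨hξm, le_refl _⟩
  have hDt : Tendsto D (𝓝[<] ξ m) (𝓝[>] (0:ℝ)) := by
    rw [tendsto_nhdsWithin_iff]
    constructor
    · have h1 : Tendsto D (𝓝[Icc 0 (ξ m)] ξ m) (𝓝 (D (ξ m))) :=
        hcD (ξ m) ⟨hξm.le, le_refl _⟩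
      rw [hDξ] at h1
      refine h1.mono_left ?_
      calc 𝓝[<] (ξ m) ≤ 𝓝[Ioo (0:ℝ) (ξ m)] (ξ m) := nhdsWithin_le_of_mem hmemIoo
        _ ≤ 𝓝[Icc (0:ℝ) (ξ m)] (ξ m) := nhdsWithin_mono _ Ioo_subset_Icc_self
    · filter_upwards [hmemIoo] with y hy
      exact hDpos y ⟨hy.1.le, hy.2⟩
  obtain ⟨c, hcpos, hceq⟩ : ∃ c, 0 < c ∧ ∀ y, ψ m y = c * y / D y := by
    rcases Nat.eq_zero_or_pos m with h | h
    · subst h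
      exact ⟨d, hd, fun y => by simpa [hD] using hψ0 y⟩
    · refine ⟨d * (v m / w m + 1) / u m, ?_, ?_⟩
      · have hu' := hu m h hm; have hv' := hv m h hm; have hw' := hw m h hm
        positivity
      · intro y
        have hr := hψrec (m+1) (by omega) (by omega) y
        simp only [Nat.add_sub_cancel] at hr
        rw [hr]
        simp only [div_eq_mul_inv, mul_inv]
        ring
  have hnum : Tendsto (fun y => c * y) (𝓝[<] ξ m) (𝓝 (c * ξ m)) :=
    ((continuous_const.mul continuous_id).tendsto (ξ m)).mono_left nhdsWithin_le_nhds
  have hinv : Tendsto (fun y => (D y)⁻¹) (𝓝[<] ξ m) atTop :=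
    tendsto_inv_nhdsGT_zero.comp hDt
  have hmain : Tendsto (fun y => c * y * (D y)⁻¹) (𝓝[<] ξ m) atTop :=
    hnum.pos_mul_atTop (by positivity) hinv
  exact hmain.congr fun y => ((hceq y).trans (div_eq_mul_inv _ _)).symm
end

section
/- For every integer m with 0 ≤ m ≤ M−1, the function ψ_m is negative on the open interval (ξ_m, ξ_{m+1}) (where ξ_M = +∞, so that for m = M−1 the interval is (ξ_{M−1}, ∞)). -/
open Filter Set Topology

theorem stmt3
    (M : ℕ) (hM : 2 ≤ M)
    (d : ℝ) (hd : 0 < d)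
    (u v w : ℕ → ℝ)
    (hu : ∀ m, 1 ≤ m → m ≤ M - 1 → 0 < u m)
    (hv : ∀ m, 1 ≤ m → m ≤ M - 1 → 0 < v m)
    (hw : ∀ m, 1 ≤ m → m ≤ M - 1 → 0 < w m)
    (S lam mu : ℕ → ℝ)
    (hS : ∀ m, 1 ≤ m → m ≤ M → 0 < S m)
    (hlam : ∀ m, 1 ≤ m → m ≤ M → 0 < lam m)
    (hmu : ∀ m, 1 ≤ m → m ≤ M → 0 < mu m)
    (ψ : ℕ → ℝ → ℝ)
    (hψM : ∀ y, ψ M y = y)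
    (hψrec : ∀ m, 2 ≤ m → m ≤ M → ∀ y,
      ψ (m - 1) y = d * (v (m - 1) / w (m - 1) + 1) * y /
        (u (m - 1) * (S m - lam m * y - mu m * ψ m y)))
    (hψ0 : ∀ y, ψ 0 y = d * y / (S 1 - lam 1 * y - mu 1 * ψ 1 y))
    (ξ : ℕ → ℝ)
    (hξpos : ∀ m, 0 ≤ m → m ≤ M - 1 → 0 < ξ m)
    (hξlt : ∀ m, 0 ≤ m → m + 1 ≤ M - 1 → ξ m < ξ (m + 1))
    (hξzero : ∀ m, 0 ≤ m → m ≤ M - 1 →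
      S (m + 1) - lam (m + 1) * ξ m - mu (m + 1) * ψ (m + 1) (ξ m) = 0)
    (hξuniq : ∀ m, 0 ≤ m → m ≤ M - 1 → ∀ y, 0 < y → (m + 1 ≤ M - 1 → y < ξ (m + 1)) →
      S (m + 1) - lam (m + 1) * y - mu (m + 1) * ψ (m + 1) y = 0 → y = ξ m) :
    ∀ m, m ≤ M - 1 → ∀ y, ξ m < y → (m + 1 ≤ M - 1 → y < ξ (m + 1)) → ψ m y < 0 := by
  -- Key lemma: for 1 ≤ m ≤ M, ψ m is positive and strictly increasing on (0, ξ m)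
  -- (with no upper bound when m = M).
  have key : ∀ j m, m ≤ M → M ≤ m + j → ∀ y z : ℝ, 0 < y → y < z →
      (m ≤ M - 1 → z < ξ m) → 0 < ψ m y ∧ ψ m y < ψ m z := by
    intro j
    induction j with
    | zero =>
      intro m hmM hMm y z hy hyz _
      have hm : m = M := by omega
      subst hm
      simp only [hψM]
      exact ⟨hy, hyz⟩
    | succ j ih =>
      intro m hmM hMm y z hy hyz hz
      by_cases hm : m = M
      · subst hm; simp only [hψM]; exact ⟨hy, hyz⟩
      · have hmM' : m + 1 ≤ M := by omega
        have hmle : m ≤ M - 1 := by omega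
        have hzlt : z < ξ m := hz hmle
        have hξm : 0 < ξ m := hξpos m (by omega) hmle
        have hlam' := hlam (m+1) (by omega) hmM'
        have hmu' := hmu (m+1) (by omega) hmM'
        have hdec : ∀ a b : ℝ, 0 < a → a < b → (m + 1 ≤ M - 1 → b < ξ (m+1)) →
            S (m+1) - lam (m+1)*b - mu (m+1)*ψ (m+1) b
              < S (m+1) - lam (m+1)*a - mu (m+1)*ψ (m+1) a := by
          intro a b ha hab hb
          have h1 := ih (m+1) hmM' (by omega) a b ha hab hb
          nlinarith [h1.2]
        have hzero := hξzero m (by omega) hmle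
        have hub : m + 1 ≤ M - 1 → ξ m < ξ (m+1) := fun h => hξlt m (by omega) h
        have hDz : 0 < S (m+1) - lam (m+1)*z - mu (m+1)*ψ (m+1) z := by
          have := hdec z (ξ m) (lt_trans hy hyz) hzlt hub
          linarith
        have hDyz : S (m+1) - lam (m+1)*z - mu (m+1)*ψ (m+1) z
            < S (m+1) - lam (m+1)*y - mu (m+1)*ψ (m+1) y :=
          hdec y z hy hyz (fun h => lt_trans hzlt (hub h))
        have hDy : 0 < S (m+1) - lam (m+1)*y - mu (m+1)*ψ (m+1) y :=
          lt_trans hDz hDyz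
        rcases Nat.eq_zero_or_pos m with hm0 | hm1
        · subst hm0
          simp only [zero_add] at hDz hDy hDyz
          rw [hψ0 y, hψ0 z]
          constructor
          · exact div_pos (mul_pos hd hy) hDy
          · have hk : y * (S 1 - lam 1 * z - mu 1 * ψ 1 z)
                < z * (S 1 - lam 1 * y - mu 1 * ψ 1 y) := by
              nlinarith [mul_lt_mul_of_pos_left hDyz hy,
                mul_lt_mul_of_pos_right hyz hDy]
            rw [div_lt_div_iff₀ hDy hDz]
            nlinarith [mul_lt_mul_of_pos_left hk hd]
        · have hrw : ∀ x, ψ m x = d * (v m / w m + 1) * x /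
              (u m * (S (m+1) - lam (m+1)*x - mu (m+1)*ψ (m+1) x)) := by
            intro x
            have h := hψrec (m+1) (by omega) hmM' x
            simpa using h
          have hu' := hu m hm1 hmle
          have hc : (0:ℝ) < v m / w m + 1 := by
            have h1 := hv m hm1 hmle
            have h2 := hw m hm1 hmle
            have := div_pos h1 h2
            linarith
          rw [hrw y, hrw z]
          constructor
          · exact div_pos (mul_pos (mul_pos hd hc) hy) (mul_pos hu' hDy)
          · have hk : y * (S (m+1) - lam (m+1)*z - mu (m+1)*ψ (m+1) z)
                < z * (S (m+1) - lam (m+1)*y - mu (m+1)*ψ (m+1) y) := by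
              nlinarith [mul_lt_mul_of_pos_left hDyz hy,
                mul_lt_mul_of_pos_right hyz hDy]
            rw [div_lt_div_iff₀ (mul_pos hu' hDy) (mul_pos hu' hDz)]
            nlinarith [mul_lt_mul_of_pos_left hk (mul_pos (mul_pos hd hc) hu')]
  intro m hmle y hy hub
  have hmM' : m + 1 ≤ M := by omega
  have hξm : 0 < ξ m := hξpos m (by omega) hmle
  have hlam' := hlam (m+1) (by omega) hmM'
  have hmu' := hmu (m+1) (by omega) hmM'
  have hzero := hξzero m (by omega) hmle
  have hinc := key M (m+1) hmM' (by omega) (ξ m) y hξm hy hub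
  have hDy : S (m+1) - lam (m+1)*y - mu (m+1)*ψ (m+1) y < 0 := by
    nlinarith [hinc.2]
  rcases Nat.eq_zero_or_pos m with hm0 | hm1
  · subst hm0
    simp only [zero_add] at hDy
    rw [hψ0 y]
    exact div_neg_of_pos_of_neg (mul_pos hd (lt_trans hξm hy)) hDy
  · have hrw : ψ m y = d * (v m / w m + 1) * y /
        (u m * (S (m+1) - lam (m+1)*y - mu (m+1)*ψ (m+1) y)) := by
      have h := hψrec (m+1) (by omega) hmM' y
      simpa using h
    have hu' := hu m hm1 hmle
    have hc : (0:ℝ) < v m / w m + 1 := by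
      have h1 := hv m hm1 hmle
      have h2 := hw m hm1 hmle
      have := div_pos h1 h2
      linarith
    rw [hrw]
    exact div_neg_of_pos_of_neg (mul_pos (mul_pos hd hc) (lt_trans hξm hy))
      (mul_neg_of_pos_of_neg hu' hDy)
end

section
/- For every real number c > 0 there exists a unique y* in the interval [0, ξ_0) such that ψ_0(y*) = c; moreover this unique solution satisfies y* > 0. (This is the algebraic core of the theorem that the phosphorelay has a unique biologically meaningful steady state for every positive stimulus c.) -/
open Filter Set Topology

theorem stmt4
    (M : ℕ) (hM : 2 ≤ M)
    (d : ℝ) (hd : 0 < d)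
    (u v w : ℕ → ℝ)
    (hu : ∀ m, 1 ≤ m → m ≤ M - 1 → 0 < u m)
    (hv : ∀ m, 1 ≤ m → m ≤ M - 1 → 0 < v m)
    (hw : ∀ m, 1 ≤ m → m ≤ M - 1 → 0 < w m)
    (S lam mu : ℕ → ℝ)
    (hS : ∀ m, 1 ≤ m → m ≤ M → 0 < S m)
    (hlam : ∀ m, 1 ≤ m → m ≤ M → 0 < lam m)
    (hmu : ∀ m, 1 ≤ m → m ≤ M → 0 < mu m)
    (ψ : ℕ → ℝ → ℝ)
    (hψM : ∀ y, ψ M y = y)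
    (hψrec : ∀ m, 2 ≤ m → m ≤ M → ∀ y,
      ψ (m - 1) y = d * (v (m - 1) / w (m - 1) + 1) * y /
        (u (m - 1) * (S m - lam m * y - mu m * ψ m y)))
    (hψ0 : ∀ y, ψ 0 y = d * y / (S 1 - lam 1 * y - mu 1 * ψ 1 y))
    (ξ : ℕ → ℝ)
    (hξpos : ∀ m, 0 ≤ m → m ≤ M - 1 → 0 < ξ m)
    (hξlt : ∀ m, 0 ≤ m → m + 1 ≤ M - 1 → ξ m < ξ (m + 1))
    (hξzero : ∀ m, 0 ≤ m → m ≤ M - 1 →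
      S (m + 1) - lam (m + 1) * ξ m - mu (m + 1) * ψ (m + 1) (ξ m) = 0)
    (hξuniq : ∀ m, 0 ≤ m → m ≤ M - 1 → ∀ y, 0 < y → (m + 1 ≤ M - 1 → y < ξ (m + 1)) →
      S (m + 1) - lam (m + 1) * y - mu (m + 1) * ψ (m + 1) y = 0 → y = ξ m) :
    ∀ c : ℝ, 0 < c →
      (∃! y : ℝ, y ∈ Set.Ico (0 : ℝ) (ξ 0) ∧ ψ 0 y = c) ∧
      (∀ y : ℝ, y ∈ Set.Ico (0 : ℝ) (ξ 0) → ψ 0 y = c → 0 < y) := by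
  -- Main backward induction: regularity of ψ (k+1) on [0, ξ k].
  have key : ∀ n k, k ≤ M - 1 → M - 1 - k = n →
      ContinuousOn (ψ (k+1)) (Icc 0 (ξ k)) ∧
      StrictMonoOn (ψ (k+1)) (Icc 0 (ξ k)) ∧
      ψ (k+1) 0 = 0 := by
    intro n
    induction n with
    | zero =>
      intro k hk hk0
      have hkM : k + 1 = M := by omega
      have hid : ∀ y, ψ (k+1) y = y := by intro y; rw [hkM, hψM]
      refine ⟨continuousOn_id.congr fun y _ => hid y, ?_, hid 0⟩
      intro a _ b _ hab
      rw [hid a, hid b]; exact hab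
    | succ n ih =>
      intro k hk hk0
      have hk1 : k + 1 ≤ M - 1 := by omega
      obtain ⟨ihc, ihm, ih0⟩ := ih (k+1) hk1 (by omega)
      set A := d * (v (k+1) / w (k+1) + 1) with hA
      have hvp := hv (k+1) (by omega) hk1
      have hwp := hw (k+1) (by omega) hk1
      have hApos : 0 < A := by positivity
      have hupos : 0 < u (k+1) := hu (k+1) (by omega) hk1
      set g : ℝ → ℝ := fun y => S (k+2) - lam (k+2) * y - mu (k+2) * ψ (k+2) y with hgdef
      have hmupos : 0 < mu (k+2) := hmu (k+2) (by omega) (by omega)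
      have hlampos : 0 < lam (k+2) := hlam (k+2) (by omega) (by omega)
      have hgcont : ContinuousOn g (Icc 0 (ξ (k+1))) :=
        (continuousOn_const.sub (continuousOn_const.mul continuousOn_id)).sub
          (continuousOn_const.mul ihc)
      have hganti : StrictAntiOn g (Icc 0 (ξ (k+1))) := by
        intro a ha b hb hab
        have h1 : ψ (k+1+1) a < ψ (k+1+1) b := ihm ha hb hab
        simp only [hgdef]
        have h2 : k + 1 + 1 = k + 2 := rfl
        rw [h2] at h1
        nlinarith
      have hgz : g (ξ (k+1)) = 0 := by
        have := hξzero (k+1) (by omega) hk1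
        simpa [hgdef] using this
      have hξlt' : ξ k < ξ (k+1) := hξlt k (by omega) (by omega)
      have hξk1pos : 0 < ξ (k+1) := hξpos (k+1) (by omega) hk1
      have hmem : ∀ y ∈ Icc (0:ℝ) (ξ k), y ∈ Icc (0:ℝ) (ξ (k+1)) := by
        intro y hy
        exact ⟨hy.1, le_of_lt (lt_of_le_of_lt hy.2 hξlt')⟩
      have hgpos : ∀ y ∈ Icc (0:ℝ) (ξ k), 0 < g y := by
        intro y hy
        have := hganti (hmem y hy) (right_mem_Icc.mpr hξk1pos.le)
          (lt_of_le_of_lt hy.2 hξlt')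
        rwa [hgz] at this
      have hrec : ∀ y, ψ (k+1) y = A * y / (u (k+1) * g y) := by
        intro y
        have h := hψrec (k+2) (by omega) (by omega) y
        have h2 : k + 2 - 1 = k + 1 := rfl
        rw [h2] at h
        exact h
      refine ⟨?_, ?_, ?_⟩
      · have hco : ContinuousOn (fun y => A * y / (u (k+1) * g y)) (Icc 0 (ξ k)) := by
          apply ContinuousOn.div
          · exact continuousOn_const.mul continuousOn_id
          · exact continuousOn_const.mul
              (hgcont.mono (Icc_subset_Icc le_rfl hξlt'.le))
          · intro y hy; exact ne_of_gt (mul_pos hupos (hgpos y hy))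
        exact hco.congr fun y _ => hrec y
      · intro a ha b hb hab
        rw [hrec a, hrec b]
        have hga := hgpos a ha
        have hgb := hgpos b hb
        have hgba : g b < g a := hganti (hmem a ha) (hmem b hb) hab
        have ha0 : 0 ≤ a := ha.1
        rw [div_lt_div_iff₀ (by positivity) (by positivity)]
        calc A * a * (u (k+1) * g b) ≤ A * a * (u (k+1) * g a) :=
              mul_le_mul_of_nonneg_left
                (mul_le_mul_of_nonneg_left hgba.le hupos.le)
                (mul_nonneg hApos.le ha0)
          _ < A * b * (u (k+1) * g a) :=
              mul_lt_mul_of_pos_right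
                (mul_lt_mul_of_pos_left hab hApos) (mul_pos hupos hga)
      · rw [hrec 0, mul_zero, zero_div]
  obtain ⟨h1c, h1m, h10⟩ := key (M-1) 0 (by omega) rfl
  set g : ℝ → ℝ := fun y => S 1 - lam 1 * y - mu 1 * ψ 1 y with hgdef
  have hξ0pos : 0 < ξ 0 := hξpos 0 le_rfl (by omega)
  have hmupos : 0 < mu 1 := hmu 1 le_rfl (by omega)
  have hlampos : 0 < lam 1 := hlam 1 le_rfl (by omega)
  have h1c' : ContinuousOn (ψ 1) (Icc 0 (ξ 0)) := h1c
  have h1m' : StrictMonoOn (ψ 1) (Icc 0 (ξ 0)) := h1m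
  have hgcont : ContinuousOn g (Icc 0 (ξ 0)) :=
    (continuousOn_const.sub (continuousOn_const.mul continuousOn_id)).sub
      (continuousOn_const.mul h1c')
  have hganti : StrictAntiOn g (Icc 0 (ξ 0)) := by
    intro a ha b hb hab
    have h1 : ψ 1 a < ψ 1 b := h1m' ha hb hab
    simp only [hgdef]
    nlinarith
  have hgz : g (ξ 0) = 0 := by
    have := hξzero 0 le_rfl (by omega)
    simpa [hgdef] using this
  have hgpos : ∀ y ∈ Ico (0:ℝ) (ξ 0), 0 < g y := by
    intro y hy
    have := hganti ⟨hy.1, hy.2.le⟩ (right_mem_Icc.mpr hξ0pos.le) hy.2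
    rwa [hgz] at this
  have hrec0 : ∀ y, ψ 0 y = d * y / g y := hψ0
  have hcont0 : ContinuousOn (ψ 0) (Ico 0 (ξ 0)) := by
    have hco : ContinuousOn (fun y => d * y / g y) (Ico 0 (ξ 0)) := by
      apply ContinuousOn.div
      · exact continuousOn_const.mul continuousOn_id
      · exact hgcont.mono Ico_subset_Icc_self
      · intro y hy; exact ne_of_gt (hgpos y hy)
    exact hco.congr fun y _ => hrec0 y
  have hmono0 : StrictMonoOn (ψ 0) (Ico 0 (ξ 0)) := by
    intro a ha b hb hab
    rw [hrec0 a, hrec0 b]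
    have hga := hgpos a ha
    have hgb := hgpos b hb
    have hgba : g b < g a := hganti ⟨ha.1, ha.2.le⟩ ⟨hb.1, hb.2.le⟩ hab
    have ha0 : 0 ≤ a := ha.1
    rw [div_lt_div_iff₀ hga hgb]
    calc d * a * g b ≤ d * a * g a :=
          mul_le_mul_of_nonneg_left hgba.le (mul_nonneg hd.le ha0)
      _ < d * b * g a :=
          mul_lt_mul_of_pos_right (mul_lt_mul_of_pos_left hab hd) hga
  have hzero0 : ψ 0 0 = 0 := by rw [hrec0 0, mul_zero, zero_div]
  intro c hc
  -- find y in [0, ξ 0) with ψ 0 y > c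
  have hcl : ξ 0 ∈ closure (Ico 0 (ξ 0)) := by
    rw [closure_Ico hξ0pos.ne]
    exact right_mem_Icc.mpr hξ0pos.le
  haveI hne : (𝓝[Ico (0:ℝ) (ξ 0)] (ξ 0)).NeBot :=
    mem_closure_iff_nhdsWithin_neBot.mp hcl
  have hnum : Tendsto (fun y : ℝ => d * y) (𝓝[Ico (0:ℝ) (ξ 0)] (ξ 0)) (𝓝 (d * ξ 0)) :=
    ((continuous_const.mul continuous_id).tendsto (ξ 0)).mono_left nhdsWithin_le_nhds
  have hden : Tendsto g (𝓝[Ico (0:ℝ) (ξ 0)] (ξ 0)) (𝓝[>] 0) := by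
    rw [tendsto_nhdsWithin_iff]
    constructor
    · have h := hgcont (ξ 0) (right_mem_Icc.mpr hξ0pos.le)
      rw [ContinuousWithinAt, hgz] at h
      exact h.mono_left (nhdsWithin_mono _ Ico_subset_Icc_self)
    · filter_upwards [self_mem_nhdsWithin] with y hy using hgpos y hy
  have htop : Tendsto (ψ 0) (𝓝[Ico (0:ℝ) (ξ 0)] (ξ 0)) atTop := by
    have hinv : Tendsto (fun y => (g y)⁻¹) (𝓝[Ico (0:ℝ) (ξ 0)] (ξ 0)) atTop :=
      tendsto_inv_nhdsGT_zero.comp hden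
    have h := hnum.pos_mul_atTop (by positivity) hinv
    refine h.congr fun y => ?_
    rw [hrec0 y, div_eq_mul_inv]
  obtain ⟨y, hygt, hymem⟩ :=
    ((htop.eventually_gt_atTop c).and self_mem_nhdsWithin).exists
  have hy0 : 0 < y := by
    rcases hymem.1.lt_or_eq with h | h
    · exact h
    · exfalso; rw [← h, hzero0] at hygt; linarith
  have hsub : Icc 0 y ⊆ Ico 0 (ξ 0) := fun x hx => ⟨hx.1, lt_of_le_of_lt hx.2 hymem.2⟩
  have hivt := intermediate_value_Ioo hy0.le (hcont0.mono hsub)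
  have hcmem : c ∈ Ioo (ψ 0 0) (ψ 0 y) := by rw [hzero0]; exact ⟨hc, hygt⟩
  obtain ⟨x, hx, hxc⟩ := hivt hcmem
  have hxmem : x ∈ Ico (0:ℝ) (ξ 0) := ⟨hx.1.le, lt_trans hx.2 hymem.2⟩
  constructor
  · refine ⟨x, ⟨hxmem, hxc⟩, ?_⟩
    rintro z ⟨hz, hzc⟩
    exact hmono0.injOn hz hxmem (by rw [hzc, hxc])
  · intro z hz hzc
    rcases hz.1.lt_or_eq with h | h
    · exact h
    · exfalso; rw [← h, hzero0] at hzc; linarith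
end

section
/- Let c > 0 and let y* be the unique element of (0, ξ_0) with ψ_0(y*) = c. Then for every m with 1 ≤ m ≤ M one has ψ_m(y*) > 0 and λ_m y* + μ_m ψ_m(y*) < S^m_tot (so that the steady-state concentrations S^m_{N_m} = ψ_m(y*), S^m_0 = S^m_tot − λ_m y* − μ_m ψ_m(y*), and X^m = d y*/w_m are all strictly positive). -/
open Filter Set Topology

def Qprop (S lam mu : ℕ → ℝ) (ψ : ℕ → ℝ → ℝ) (ξ : ℕ → ℝ) (k : ℕ) : Prop :=
  ContinuousOn (ψ (k+1)) (Set.Ico 0 (ξ k)) ∧ ψ (k+1) 0 = 0 ∧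
  (∀ y ∈ Set.Ioo 0 (ξ k), 0 < ψ (k+1) y) ∧
  (∀ y ∈ Set.Ico 0 (ξ k), 0 < S (k+1) - lam (k+1) * y - mu (k+1) * ψ (k+1) y)

theorem stmt5
    (M : ℕ) (hM : 2 ≤ M)
    (d : ℝ) (hd : 0 < d)
    (u v w : ℕ → ℝ)
    (hu : ∀ m, 1 ≤ m → m ≤ M - 1 → 0 < u m)
    (hv : ∀ m, 1 ≤ m → m ≤ M - 1 → 0 < v m)
    (hw : ∀ m, 1 ≤ m → m ≤ M - 1 → 0 < w m)
    (S lam mu : ℕ → ℝ)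
    (hS : ∀ m, 1 ≤ m → m ≤ M → 0 < S m)
    (hlam : ∀ m, 1 ≤ m → m ≤ M → 0 < lam m)
    (hmu : ∀ m, 1 ≤ m → m ≤ M → 0 < mu m)
    (ψ : ℕ → ℝ → ℝ)
    (hψM : ∀ y, ψ M y = y)
    (hψrec : ∀ m, 2 ≤ m → m ≤ M → ∀ y,
      ψ (m - 1) y = d * (v (m - 1) / w (m - 1) + 1) * y /
        (u (m - 1) * (S m - lam m * y - mu m * ψ m y)))
    (hψ0 : ∀ y, ψ 0 y = d * y / (S 1 - lam 1 * y - mu 1 * ψ 1 y))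
    (ξ : ℕ → ℝ)
    (hξpos : ∀ m, 0 ≤ m → m ≤ M - 1 → 0 < ξ m)
    (hξlt : ∀ m, 0 ≤ m → m + 1 ≤ M - 1 → ξ m < ξ (m + 1))
    (hξzero : ∀ m, 0 ≤ m → m ≤ M - 1 →
      S (m + 1) - lam (m + 1) * ξ m - mu (m + 1) * ψ (m + 1) (ξ m) = 0)
    (hξuniq : ∀ m, 0 ≤ m → m ≤ M - 1 → ∀ y, 0 < y → (m + 1 ≤ M - 1 → y < ξ (m + 1)) →
      S (m + 1) - lam (m + 1) * y - mu (m + 1) * ψ (m + 1) y = 0 → y = ξ m)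
    (c : ℝ) (hc : 0 < c)
    (ystar : ℝ) (hy : ystar ∈ Set.Ioo 0 (ξ 0)) (hyc : ψ 0 ystar = c) :
    ∀ m, 1 ≤ m → m ≤ M →
      0 < ψ m ystar ∧ lam m * ystar + mu m * ψ m ystar < S m := by
  -- base case
  have hM1 : M - 1 + 1 = M := by omega
  have hbase : Qprop S lam mu ψ ξ (M - 1) := by
    unfold Qprop
    rw [hM1]
    have hlamM : 0 < lam M := hlam M (by omega) le_rfl
    have hmuM : 0 < mu M := hmu M (by omega) le_rfl
    have hz := hξzero (M-1) (by omega) le_rfl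
    rw [hM1, hψM] at hz
    refine ⟨continuousOn_id.congr (fun y _ => hψM y), hψM 0, fun y hy => by rw [hψM]; exact hy.1,
      fun y hy => ?_⟩
    rw [hψM]
    nlinarith [hy.2]
  -- step
  have hstep : ∀ k, k + 1 ≤ M - 1 → Qprop S lam mu ψ ξ (k+1) → Qprop S lam mu ψ ξ k := by
    intro k hk ⟨ihcont, ih0, ihpos, ihD⟩
    have hk2M : k + 2 ≤ M := by omega
    have hrec := hψrec (k+2) (by omega) hk2M
    simp only [show k + 2 - 1 = k + 1 from rfl] at hrec
    have hlt : ξ k < ξ (k+1) := hξlt k (by omega) hk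
    have hsub : Set.Ico (0:ℝ) (ξ k) ⊆ Set.Ico 0 (ξ (k+1)) :=
      Set.Ico_subset_Ico le_rfl hlt.le
    have huk : 0 < u (k+1) := hu (k+1) (by omega) hk
    -- continuity of ψ (k+1) on Ico 0 (ξ (k+1))
    have hcont : ContinuousOn (ψ (k+1)) (Set.Ico 0 (ξ (k+1))) := by
      have hD : ∀ y ∈ Set.Ico (0:ℝ) (ξ (k+1)),
          u (k+1) * (S (k+2) - lam (k+2) * y - mu (k+2) * ψ (k+2) y) ≠ 0 :=
        fun y hy => ne_of_gt (mul_pos huk (ihD y hy))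
      have : ContinuousOn (fun y => d * (v (k+1) / w (k+1) + 1) * y /
          (u (k+1) * (S (k+2) - lam (k+2) * y - mu (k+2) * ψ (k+2) y)))
          (Set.Ico 0 (ξ (k+1))) := by
        apply ContinuousOn.div
        · exact (continuousOn_const.mul continuousOn_id)
        · exact continuousOn_const.mul
            ((continuousOn_const.sub (continuousOn_const.mul continuousOn_id)).sub
              (continuousOn_const.mul ihcont))
        · exact hD
      exact this.congr (fun y _ => hrec y)
    have h0 : ψ (k+1) 0 = 0 := by
      rw [hrec 0]; simp
    have hpos : ∀ y ∈ Set.Ioo (0:ℝ) (ξ (k+1)), 0 < ψ (k+1) y := by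
      intro y hy
      rw [hrec y]
      apply div_pos
      · have hvw : 0 < v (k+1) / w (k+1) + 1 := by
          have h1 := hv (k+1) (by omega) hk
          have h2 := hw (k+1) (by omega) hk
          positivity
        exact mul_pos (mul_pos hd hvw) hy.1
      · exact mul_pos huk (ihD y ⟨hy.1.le, hy.2⟩)
    refine ⟨hcont.mono hsub, h0, fun y hy => hpos y ⟨hy.1, hy.2.trans hlt⟩, ?_⟩
    -- IVT argument for positivity of D_{k+1} on Ico 0 (ξ k)
    intro y hy
    by_contra hneg
    push_neg at hneg
    have hSk1 : 0 < S (k+1) := hS (k+1) (by omega) (by omega)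
    have hE0 : (0:ℝ) < S (k+1) - lam (k+1) * 0 - mu (k+1) * ψ (k+1) 0 := by
      rw [h0]; simpa using hSk1
    have hy0 : 0 < y := by
      rcases eq_or_lt_of_le hy.1 with h | h
      · exfalso; rw [← h] at hneg; linarith
      · exact h
    have hIcc : Set.Icc (0:ℝ) y ⊆ Set.Ico 0 (ξ (k+1)) :=
      fun z hz => ⟨hz.1, lt_of_le_of_lt hz.2 (hy.2.trans hlt)⟩
    have hEcont : ContinuousOn
        (fun z => S (k+1) - lam (k+1) * z - mu (k+1) * ψ (k+1) z) (Set.Icc 0 y) :=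
      ((continuousOn_const.sub (continuousOn_const.mul continuousOn_id)).sub
        (continuousOn_const.mul (hcont.mono hIcc)))
    have := intermediate_value_Icc' hy0.le hEcont
    have h0mem : (0:ℝ) ∈ Set.Icc (S (k+1) - lam (k+1) * y - mu (k+1) * ψ (k+1) y)
        (S (k+1) - lam (k+1) * 0 - mu (k+1) * ψ (k+1) 0) := ⟨hneg, hE0.le⟩
    obtain ⟨z, hz, hEz⟩ := this h0mem
    have hz0 : 0 < z := by
      rcases eq_or_lt_of_le hz.1 with h | h
      · exfalso; rw [← h] at hEz; simp at hEz; linarith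
      · exact h
    have hzlt : z < ξ k := lt_of_le_of_lt hz.2 hy.2
    have := hξuniq k (by omega) (by omega) z hz0 (fun _ => hzlt.trans hlt) hEz
    exact absurd this hzlt.ne
  -- downward induction
  have key : ∀ t k, k ≤ M - 1 → M - 1 - k ≤ t → Qprop S lam mu ψ ξ k := by
    intro t
    induction t with
    | zero =>
      intro k hk ht
      have : k = M - 1 := by omega
      rw [this]; exact hbase
    | succ t ih =>
      intro k hk ht
      by_cases h : k = M - 1
      · rw [h]; exact hbase
      · exact hstep k (by omega) (ih (k+1) (by omega) (by omega))
  -- monotonicity of ξ from 0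
  have hmono : ∀ k, k ≤ M - 1 → ξ 0 ≤ ξ k := by
    intro k
    induction k with
    | zero => intro _; exact le_rfl
    | succ k ih =>
      intro hk
      exact le_trans (ih (by omega)) (hξlt k (by omega) hk).le
  -- conclusion
  intro m hm1 hmM
  have hk : m - 1 ≤ M - 1 := by omega
  have hQ := key (M - 1) (m - 1) hk (by omega)
  have hm1' : m - 1 + 1 = m := by omega
  unfold Qprop at hQ
  rw [hm1'] at hQ
  have hymem : ystar ∈ Set.Ioo 0 (ξ (m - 1)) :=
    ⟨hy.1, lt_of_lt_of_le hy.2 (hmono (m-1) hk)⟩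
  refine ⟨hQ.2.2.1 ystar hymem, ?_⟩
  have := hQ.2.2.2 ystar ⟨hymem.1.le, hymem.2⟩
  linarith
end

section
/- For every integer m with 0 ≤ m ≤ M−1 there exist real polynomials p_m and q_m, each of degree exactly M − m, such that p_m(0) = 0 and ψ_m(y) = p_m(y)/q_m(y) for every real y at which q_m(y) ≠ 0 and all the denominators occurring in the recursive definition of ψ_m are nonzero. -/
open Filter Set Topology

open Polynomial

theorem stmt6
    (M : ℕ) (hM : 2 ≤ M)
    (d : ℝ) (hd : 0 < d)
    (u v w : ℕ → ℝ)
    (hu : ∀ m, 1 ≤ m → m ≤ M - 1 → 0 < u m)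
    (hv : ∀ m, 1 ≤ m → m ≤ M - 1 → 0 < v m)
    (hw : ∀ m, 1 ≤ m → m ≤ M - 1 → 0 < w m)
    (S lam mu : ℕ → ℝ)
    (hS : ∀ m, 1 ≤ m → m ≤ M → 0 < S m)
    (hlam : ∀ m, 1 ≤ m → m ≤ M → 0 < lam m)
    (hmu : ∀ m, 1 ≤ m → m ≤ M → 0 < mu m)
    (ψ : ℕ → ℝ → ℝ)
    (hψM : ∀ y, ψ M y = y)
    (hψrec : ∀ m, 2 ≤ m → m ≤ M → ∀ y,
      ψ (m - 1) y = d * (v (m - 1) / w (m - 1) + 1) * y /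
        (u (m - 1) * (S m - lam m * y - mu m * ψ m y)))
    (hψ0 : ∀ y, ψ 0 y = d * y / (S 1 - lam 1 * y - mu 1 * ψ 1 y)) :
    ∀ m, m ≤ M - 1 →
      ∃ p q : Polynomial ℝ,
        p.degree = (M - m : ℕ) ∧ q.degree = (M - m : ℕ) ∧ p.eval 0 = 0 ∧
        ∀ y : ℝ, q.eval y ≠ 0 →
          (∀ k, m ≤ k → k ≤ M - 1 →
            S (k + 1) - lam (k + 1) * y - mu (k + 1) * ψ (k + 1) y ≠ 0) →
          ψ m y = p.eval y / q.eval y := by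
  -- uniform constants
  set c : ℕ → ℝ := fun m => if m = 0 then d else d * (v m / w m + 1) with hc
  set e : ℕ → ℝ := fun m => if m = 0 then 1 else u m with he
  have hcpos : ∀ m, m ≤ M - 1 → 0 < c m := by
    intro m hm
    by_cases h0 : m = 0
    · simp [hc, h0, hd]
    · have h1 : 1 ≤ m := Nat.one_le_iff_ne_zero.2 h0
      have := hv m h1 hm; have := hw m h1 hm
      simp only [hc, h0, if_false]
      positivity
  have hepos : ∀ m, m ≤ M - 1 → 0 < e m := by
    intro m hm
    by_cases h0 : m = 0
    · simp [he, h0]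
    · simpa [he, h0] using hu m (Nat.one_le_iff_ne_zero.2 h0) hm
  -- uniform recursion
  have hrec : ∀ m, m ≤ M - 1 → ∀ y,
      ψ m y = c m * y / (e m * (S (m+1) - lam (m+1) * y - mu (m+1) * ψ (m+1) y)) := by
    intro m hm y
    by_cases h0 : m = 0
    · subst h0
      simpa [hc, he] using hψ0 y
    · have := hψrec (m+1) (by omega) (by omega) y
      simpa [hc, he, h0] using this
  -- strengthened induction
  have key : ∀ j, j ≤ M - 1 → ∀ m, m = M - 1 - j →
      ∃ p q : Polynomial ℝ,
        p.degree = (M - m : ℕ) ∧ q.degree = (M - m : ℕ) ∧ p.eval 0 = 0 ∧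
        ∀ y : ℝ,
          (∀ k, m ≤ k → k ≤ M - 1 →
            S (k + 1) - lam (k + 1) * y - mu (k + 1) * ψ (k + 1) y ≠ 0) →
          q.eval y ≠ 0 ∧ ψ m y = p.eval y / q.eval y := by
    intro j
    induction j with
    | zero =>
      intro _ m hm
      have hm1 : m = M - 1 := by omega
      have hmM : m + 1 = M := by omega
      have hmle : m ≤ M - 1 := by omega
      have hce : c m ≠ 0 := (hcpos m hmle).ne'
      have hee : e m ≠ 0 := (hepos m hmle).ne'
      have hlm : lam M + mu M ≠ 0 := by
        have := hlam M (by omega) le_rfl; have := hmu M (by omega) le_rfl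
        positivity
      refine ⟨C (c m) * X, C (e m) * (C (S M) - C (lam M + mu M) * X), ?_, ?_, by simp, ?_⟩
      · rw [degree_mul, degree_C hce, degree_X]
        have : M - m = 1 := by omega
        rw [this]; rfl
      · have hlin : (C (S M) - C (lam M + mu M) * X : Polynomial ℝ)
            = C (-(lam M + mu M)) * X + C (S M) := by rw [map_neg]; ring
        rw [degree_mul, degree_C hee, hlin, degree_linear (neg_ne_zero.2 hlm)]
        have : M - m = 1 := by omega
        rw [this]; rfl
      · intro y hden
        have hD := hden m le_rfl hmle
        rw [hmM, hψM y] at hD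
        have hD' : S M - lam M * y - mu M * y ≠ 0 := hD
        have hq : (C (e m) * (C (S M) - C (lam M + mu M) * X)).eval y ≠ 0 := by
          simp only [eval_mul, eval_C, eval_sub, eval_mul, eval_X]
          intro h
          apply hD'
          have := mul_eq_zero.1 h
          rcases this with h | h
          · exact absurd h hee
          · linarith [h]
        refine ⟨hq, ?_⟩
        rw [hrec m hmle y, hmM, hψM y]
        simp only [eval_mul, eval_C, eval_sub, eval_X]
        rw [div_eq_div_iff (by
          intro h; apply hD'
          rcases mul_eq_mul_left_iff.mp (h.trans (mul_zero (e m)).symm) with h' | h'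
          · linarith
          · exact absurd h' hee) (by simpa using hq)]
        ring
    | succ j ih =>
      intro hj m hm
      obtain ⟨p', q', hp'd, hq'd, hp'0, hval⟩ := ih (by omega) (m+1) (by omega)
      have hmle : m ≤ M - 1 := by omega
      have hce : c m ≠ 0 := (hcpos m hmle).ne'
      have hee : e m ≠ 0 := (hepos m hmle).ne'
      have hlmpos := hlam (m+1) (by omega) (by omega)
      have hmu' : mu (m+1) ≠ 0 := (hmu (m+1) (by omega) (by omega)).ne'
      set n := M - (m+1) with hn
      have hA : (C (S (m+1)) - C (lam (m+1)) * X : Polynomial ℝ)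
          = C (-(lam (m+1))) * X + C (S (m+1)) := by rw [map_neg]; ring
      have hdegA : (C (S (m+1)) - C (lam (m+1)) * X : Polynomial ℝ).degree = 1 := by
        rw [hA]; exact degree_linear (neg_ne_zero.2 hlmpos.ne')
      have hlt : (C (mu (m+1)) * p').degree
          < ((C (S (m+1)) - C (lam (m+1)) * X) * q').degree := by
        rw [degree_mul, degree_mul, degree_C hmu', hdegA, hq'd, hp'd, zero_add]
        exact_mod_cast (by omega : n < 1 + n)
      refine ⟨C (c m) * X * q',
        C (e m) * ((C (S (m+1)) - C (lam (m+1)) * X) * q' - C (mu (m+1)) * p'),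
        ?_, ?_, by simp, ?_⟩
      · rw [degree_mul, degree_mul, degree_C hce, degree_X, hq'd, zero_add]
        have h1 : M - m = 1 + n := by omega
        rw [h1, Nat.cast_add, Nat.cast_one]
      · rw [degree_mul, degree_C hee, degree_sub_eq_left_of_degree_lt hlt,
          degree_mul, hdegA, hq'd, zero_add]
        have h1 : M - m = 1 + n := by omega
        rw [h1, Nat.cast_add, Nat.cast_one]
      · intro y hden
        obtain ⟨hq'y, hψ'⟩ := hval y (fun k hk1 hk2 => hden k (by omega) hk2)
        have hD := hden m le_rfl hmle
        have hψexp := hrec m hmle y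
        have hp'y : p'.eval y = ψ (m+1) y * q'.eval y := by
          rw [hψ']; field_simp
        have hqval : (C (e m) * ((C (S (m+1)) - C (lam (m+1)) * X) * q'
            - C (mu (m+1)) * p')).eval y
            = e m * (q'.eval y * (S (m+1) - lam (m+1) * y - mu (m+1) * ψ (m+1) y)) := by
          simp only [eval_mul, eval_sub, eval_C, eval_X, hp'y]
          ring
        constructor
        · rw [hqval]; exact mul_ne_zero hee (mul_ne_zero hq'y hD)
        · rw [hψexp, hqval]
          simp only [eval_mul, eval_C, eval_X]
          rw [div_eq_div_iff (mul_ne_zero hee hD)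
            (mul_ne_zero hee (mul_ne_zero hq'y hD))]
          ring
  intro m hm
  obtain ⟨p, q, h1, h2, h3, h4⟩ := key (M - 1 - m) (by omega) m (by omega)
  exact ⟨p, q, h1, h2, h3, fun y hq hden => (h4 y hden).2⟩
end

section
/- The response is a strictly increasing continuous function of the stimulus: the map sending c > 0 to the unique y*(c) ∈ (0, ξ_0) with ψ_0(y*(c)) = c is strictly increasing and continuous on (0, ∞), and y*(c) → ξ_0 as c → ∞; hence ξ_0 is the least upper bound of all attainable responses (the maximal response). -/
open Filter Set Topology

/-!
Downward induction from `ψ_M = id` shows that every `ψ_m` with `m ≥ 1` is monotone on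
`[0, ξ_{m-1}]`: if `ψ_{m+1}` is monotone, the denominator `S - λ y - μ ψ_{m+1}(y)` of `ψ_m`
is strictly decreasing and vanishes at `ξ_m`, so it is positive on `[0, ξ_m)` and
`ψ_m(y) = K y / (u · denominator)` is strictly increasing there. The same argument makes `ψ_0`
strictly increasing and positive on `(0, ξ_0)`; as `y*` is a right inverse of `ψ_0`, it maps
`(0, ∞)` increasingly onto `(0, ξ_0)`, which gives continuity, the limit and the supremum.
-/

lemma strictAntiOn_sub_mul_sub_mul {f : ℝ → ℝ} {s : Set ℝ} {S lam mu : ℝ}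
    (hlam : 0 < lam) (hmu : 0 ≤ mu) (hf : MonotoneOn f s) :
    StrictAntiOn (fun y => S - lam * y - mu * f y) s := by
  intro a ha b hb hab
  have := mul_le_mul_of_nonneg_left (hf ha hb hab.le) hmu
  have := mul_lt_mul_of_pos_left hab hlam
  dsimp only
  linarith

lemma strictMonoOn_mul_div_mul_sub_mul_sub_mul {f : ℝ → ℝ} {S lam mu K c ξ : ℝ}
    (hK : 0 < K) (hc : 0 < c) (hlam : 0 < lam) (hmu : 0 ≤ mu)
    (hf : MonotoneOn f (Icc 0 ξ)) (hξ : S - lam * ξ - mu * f ξ = 0) :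
    StrictMonoOn (fun y => K * y / (c * (S - lam * y - mu * f y))) (Ico 0 ξ) := by
  have hanti := strictAntiOn_sub_mul_sub_mul (S := S) hlam hmu hf
  have hpos : ∀ y ∈ Ico 0 ξ, 0 < S - lam * y - mu * f y := fun y hy =>
    hξ ▸ hanti (Ico_subset_Icc_self hy) (right_mem_Icc.2 (hy.1.trans hy.2.le)) hy.2
  intro a ha b hb hab
  exact div_lt_div₀ (mul_lt_mul_of_pos_left hab hK)
    (mul_le_mul_of_nonneg_left (hanti.antitoneOn (Ico_subset_Icc_self ha)
      (Ico_subset_Icc_self hb) hab.le) hc.le)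
    (mul_nonneg hK.le hb.1) (mul_pos hc (hpos b hb))

section RightInverse

variable {φ Y : ℝ → ℝ} {ξ : ℝ}

lemma image_Ioi_eq_Ioo_of_rightInvOn (hφ : StrictMonoOn φ (Ioo 0 ξ))
    (hφpos : MapsTo φ (Ioo 0 ξ) (Ioi 0))
    (hY : ∀ c, 0 < c → Y c ∈ Ioo 0 ξ ∧ φ (Y c) = c) :
    Y '' Ioi 0 = Ioo 0 ξ := by
  refine Subset.antisymm (image_subset_iff.2 fun c hc => (hY c hc).1) fun y hy => ?_
  obtain ⟨hYmem, hφY⟩ := hY (φ y) (hφpos hy)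
  exact ⟨φ y, hφpos hy, hφ.injOn hYmem hy hφY⟩

lemma strictMonoOn_of_rightInvOn (hφ : StrictMonoOn φ (Ioo 0 ξ))
    (hY : ∀ c, 0 < c → Y c ∈ Ioo 0 ξ ∧ φ (Y c) = c) :
    StrictMonoOn Y (Ioi 0) := by
  intro a ha b hb hab
  rw [← hφ.lt_iff_lt (hY a ha).1 (hY b hb).1, (hY a ha).2, (hY b hb).2]
  exact hab

lemma tendsto_atTop_of_monotoneOn_of_image_eq_Ioo (hYmono : MonotoneOn Y (Ioi 0))
    (himage : Y '' Ioi 0 = Ioo 0 ξ) :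
    Tendsto Y atTop (𝓝 ξ) := by
  have hmem : ∀ c, 0 < c → Y c ∈ Ioo 0 ξ := fun c hc => himage ▸ mem_image_of_mem Y hc
  refine tendsto_order.2 ⟨fun a ha => ?_, fun b hb => ?_⟩
  · obtain ⟨y, hy, hyξ⟩ := exists_between
      (max_lt ha ((hmem 1 one_pos).1.trans (hmem 1 one_pos).2))
    obtain ⟨c₀, hc₀, rfl⟩ : y ∈ Y '' Ioi 0 := himage ▸ ⟨(le_max_right _ _).trans_lt hy, hyξ⟩
    filter_upwards [eventually_ge_atTop c₀] with c hc
    exact (le_max_left _ _).trans_lt (hy.trans_le (hYmono hc₀ (hc₀.trans_le hc) hc))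
  · filter_upwards [eventually_gt_atTop 0] with c hc
    exact (hmem c hc).2.trans hb

end RightInverse

lemma monotoneOn_psi_succ {M : ℕ} (hM : 1 ≤ M) {d : ℝ} (hd : 0 < d)
    {u v w S lam mu ξ : ℕ → ℝ} {ψ : ℕ → ℝ → ℝ}
    (hu : ∀ m, 1 ≤ m → m ≤ M - 1 → 0 < u m)
    (hv : ∀ m, 1 ≤ m → m ≤ M - 1 → 0 < v m)
    (hw : ∀ m, 1 ≤ m → m ≤ M - 1 → 0 < w m)
    (hlam : ∀ m, 1 ≤ m → m ≤ M → 0 < lam m)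
    (hmu : ∀ m, 1 ≤ m → m ≤ M → 0 < mu m)
    (hψM : ∀ y, ψ M y = y)
    (hψrec : ∀ m, 2 ≤ m → m ≤ M → ∀ y,
      ψ (m - 1) y = d * (v (m - 1) / w (m - 1) + 1) * y /
        (u (m - 1) * (S m - lam m * y - mu m * ψ m y)))
    (hξlt : ∀ m, 0 ≤ m → m + 1 ≤ M - 1 → ξ m < ξ (m + 1))
    (hξzero : ∀ m, 0 ≤ m → m ≤ M - 1 →
      S (m + 1) - lam (m + 1) * ξ m - mu (m + 1) * ψ (m + 1) (ξ m) = 0)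
    {m : ℕ} (hm : m ≤ M - 1) :
    MonotoneOn (ψ (m + 1)) (Icc 0 (ξ m)) := by
  induction hm using Nat.decreasingInduction with
  | self =>
    rw [Nat.sub_add_cancel hM]
    exact fun a _ b _ hab => by simpa only [hψM] using hab
  | of_succ k hk ih =>
    have hrec : ψ (k + 1) = fun y => d * (v (k + 1) / w (k + 1) + 1) * y /
        (u (k + 1) * (S (k + 2) - lam (k + 2) * y - mu (k + 2) * ψ (k + 2) y)) :=
      funext (hψrec (k + 2) (by omega) (by omega))
    have hv' := hv (k + 1) (by omega) (by omega)
    have hw' := hw (k + 1) (by omega) (by omega)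
    have hmono : StrictMonoOn (ψ (k + 1)) (Ico 0 (ξ (k + 1))) := by
      rw [hrec]
      exact strictMonoOn_mul_div_mul_sub_mul_sub_mul (by positivity)
        (hu (k + 1) (by omega) (by omega)) (hlam (k + 2) (by omega) (by omega))
        (hmu (k + 2) (by omega) (by omega)).le ih (hξzero (k + 1) (by omega) (by omega))
    exact hmono.monotoneOn.mono (Icc_subset_Ico_right (hξlt k (by omega) (by omega)))

theorem stmt7_general
    (M : ℕ) (hM : 2 ≤ M)
    (d : ℝ) (hd : 0 < d)
    (u v w : ℕ → ℝ)
    (hu : ∀ m, 1 ≤ m → m ≤ M - 1 → 0 < u m)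
    (hv : ∀ m, 1 ≤ m → m ≤ M - 1 → 0 < v m)
    (hw : ∀ m, 1 ≤ m → m ≤ M - 1 → 0 < w m)
    (S lam mu : ℕ → ℝ)
    (hlam : ∀ m, 1 ≤ m → m ≤ M → 0 < lam m)
    (hmu : ∀ m, 1 ≤ m → m ≤ M → 0 < mu m)
    (ψ : ℕ → ℝ → ℝ)
    (hψM : ∀ y, ψ M y = y)
    (hψrec : ∀ m, 2 ≤ m → m ≤ M → ∀ y,
      ψ (m - 1) y = d * (v (m - 1) / w (m - 1) + 1) * y /
        (u (m - 1) * (S m - lam m * y - mu m * ψ m y)))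
    (hψ0 : ∀ y, ψ 0 y = d * y / (S 1 - lam 1 * y - mu 1 * ψ 1 y))
    (ξ : ℕ → ℝ)
    (hξlt : ∀ m, 0 ≤ m → m + 1 ≤ M - 1 → ξ m < ξ (m + 1))
    (hξzero : ∀ m, 0 ≤ m → m ≤ M - 1 →
      S (m + 1) - lam (m + 1) * ξ m - mu (m + 1) * ψ (m + 1) (ξ m) = 0) :
    ∀ Y : ℝ → ℝ,
      (∀ c, 0 < c → Y c ∈ Set.Ioo 0 (ξ 0) ∧ ψ 0 (Y c) = c) →
      StrictMonoOn Y (Set.Ioi 0) ∧ ContinuousOn Y (Set.Ioi 0) ∧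
      Tendsto Y atTop (𝓝 (ξ 0)) ∧ IsLUB (Y '' Set.Ioi 0) (ξ 0) := by
  intro Y hY
  have hψ1 : MonotoneOn (ψ 1) (Icc 0 (ξ 0)) :=
    monotoneOn_psi_succ (by omega) hd hu hv hw hlam hmu hψM hψrec hξlt hξzero (Nat.zero_le _)
  have hψ0mono : StrictMonoOn (ψ 0) (Ico 0 (ξ 0)) := by
    have := strictMonoOn_mul_div_mul_sub_mul_sub_mul hd one_pos (hlam 1 le_rfl (by omega))
      (hmu 1 le_rfl (by omega)).le hψ1 (hξzero 0 le_rfl (Nat.zero_le _))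
    simpa only [one_mul, ← hψ0] using this
  have hψ0pos : MapsTo (ψ 0) (Ioo 0 (ξ 0)) (Ioi 0) := fun y hy => by
    have := hψ0mono ⟨le_rfl, hy.1.trans hy.2⟩ (Ioo_subset_Ico_self hy) hy.1
    rwa [hψ0, mul_zero, zero_div] at this
  have hψ0mono' := hψ0mono.mono Ioo_subset_Ico_self
  have hYmono := strictMonoOn_of_rightInvOn hψ0mono' hY
  have himage := image_Ioi_eq_Ioo_of_rightInvOn hψ0mono' hψ0pos hY
  refine ⟨hYmono, fun c hc => ?_, tendsto_atTop_of_monotoneOn_of_image_eq_Ioo hYmono.monotoneOn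
    himage, himage ▸ isLUB_Ioo ((hY 1 one_pos).1.1.trans (hY 1 one_pos).1.2)⟩
  refine (hYmono.continuousAt_of_image_mem_nhds (Ioi_mem_nhds hc) ?_).continuousWithinAt
  exact himage ▸ isOpen_Ioo.mem_nhds (hY c hc).1

theorem stmt7
    (M : ℕ) (hM : 2 ≤ M)
    (d : ℝ) (hd : 0 < d)
    (u v w : ℕ → ℝ)
    (hu : ∀ m, 1 ≤ m → m ≤ M - 1 → 0 < u m)
    (hv : ∀ m, 1 ≤ m → m ≤ M - 1 → 0 < v m)
    (hw : ∀ m, 1 ≤ m → m ≤ M - 1 → 0 < w m)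
    (S lam mu : ℕ → ℝ)
    (hS : ∀ m, 1 ≤ m → m ≤ M → 0 < S m)
    (hlam : ∀ m, 1 ≤ m → m ≤ M → 0 < lam m)
    (hmu : ∀ m, 1 ≤ m → m ≤ M → 0 < mu m)
    (ψ : ℕ → ℝ → ℝ)
    (hψM : ∀ y, ψ M y = y)
    (hψrec : ∀ m, 2 ≤ m → m ≤ M → ∀ y,
      ψ (m - 1) y = d * (v (m - 1) / w (m - 1) + 1) * y /
        (u (m - 1) * (S m - lam m * y - mu m * ψ m y)))
    (hψ0 : ∀ y, ψ 0 y = d * y / (S 1 - lam 1 * y - mu 1 * ψ 1 y))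
    (ξ : ℕ → ℝ)
    (hξpos : ∀ m, 0 ≤ m → m ≤ M - 1 → 0 < ξ m)
    (hξlt : ∀ m, 0 ≤ m → m + 1 ≤ M - 1 → ξ m < ξ (m + 1))
    (hξzero : ∀ m, 0 ≤ m → m ≤ M - 1 →
      S (m + 1) - lam (m + 1) * ξ m - mu (m + 1) * ψ (m + 1) (ξ m) = 0)
    (hξuniq : ∀ m, 0 ≤ m → m ≤ M - 1 → ∀ y, 0 < y → (m + 1 ≤ M - 1 → y < ξ (m + 1)) →
      S (m + 1) - lam (m + 1) * y - mu (m + 1) * ψ (m + 1) y = 0 → y = ξ m) :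
    ∀ Y : ℝ → ℝ,
      (∀ c, 0 < c → Y c ∈ Set.Ioo 0 (ξ 0) ∧ ψ 0 (Y c) = c) →
      StrictMonoOn Y (Set.Ioi 0) ∧ ContinuousOn Y (Set.Ioi 0) ∧
      Tendsto Y atTop (𝓝 (ξ 0)) ∧ IsLUB (Y '' Set.Ioi 0) (ξ 0) :=
  stmt7_general M hM d hd u v w hu hv hw S lam mu hlam hmu ψ hψM hψrec hψ0 ξ hξlt hξzero
end

section
/- Fix an index m_0 with 1 ≤ m_0 ≤ M and consider a second (barred) family of constants identical to the first except that λ̄_{m_0} ≥ λ_{m_0}, μ̄_{m_0} ≥ μ_{m_0} and S̄^{m_0}_tot ≤ S^{m_0}_tot, with at least one of these inequalities strict. Then the maximal responses satisfy ρ̄_m < ρ_m for all m with m_0 ≤ m ≤ M and ρ̄_m > ρ_m for all m with 1 ≤ m < m_0, where ρ_M = ξ_0, ρ_m = ψ_m(ξ_0) for 1 ≤ m < M, and ρ̄_m is defined analogously from the barred family. -/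
open Filter Set Topology
set_option maxHeartbeats 1600000

lemma xi_mono_aux (M : ℕ) (ξ : ℕ → ℝ)
    (hξlt : ∀ m, m + 1 ≤ M - 1 → ξ m < ξ (m + 1)) :
    ∀ a b, a < b → b ≤ M - 1 → ξ a < ξ b := by
  intro a b
  induction b with
  | zero => omega
  | succ n ih =>
    intro hab hbM
    rcases Nat.lt_succ_iff_lt_or_eq.mp hab with h | h
    · exact lt_trans (ih h (by omega)) (hξlt n hbM)
    · subst h; exact hξlt a hbM

lemma struct_aux
    (M : ℕ) (hM : 2 ≤ M)
    (d : ℝ) (hd : 0 < d)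
    (u v w : ℕ → ℝ)
    (hu : ∀ m, 1 ≤ m → m ≤ M - 1 → 0 < u m)
    (hv : ∀ m, 1 ≤ m → m ≤ M - 1 → 0 < v m)
    (hw : ∀ m, 1 ≤ m → m ≤ M - 1 → 0 < w m)
    (S lam mu : ℕ → ℝ)
    (hlam : ∀ m, 1 ≤ m → m ≤ M → 0 < lam m)
    (hmu : ∀ m, 1 ≤ m → m ≤ M → 0 < mu m)
    (ψ : ℕ → ℝ → ℝ)
    (hψM : ∀ y, ψ M y = y)
    (hψrec : ∀ m, 2 ≤ m → m ≤ M → ∀ y,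
      ψ (m - 1) y = d * (v (m - 1) / w (m - 1) + 1) * y /
        (u (m - 1) * (S m - lam m * y - mu m * ψ m y)))
    (ξ : ℕ → ℝ)
    (hξpos : ∀ m, m ≤ M - 1 → 0 < ξ m)
    (hξlt : ∀ m, m + 1 ≤ M - 1 → ξ m < ξ (m + 1))
    (hξzero : ∀ m, m ≤ M - 1 →
      S (m + 1) - lam (m + 1) * ξ m - mu (m + 1) * ψ (m + 1) (ξ m) = 0) :
    ∀ m, 1 ≤ m → m ≤ M →
      (∀ y z, 0 < y → y < z → (m < M → z < ξ m) → ψ m y < ψ m z) ∧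
      (∀ y, 0 < y → (m < M → y < ξ m) → 0 < ψ m y) ∧
      (∀ y, 0 < y → y < ξ (m - 1) → 0 < S m - lam m * y - mu m * ψ m y) := by
  have H : ∀ k m, M ≤ m + k → 1 ≤ m → m ≤ M →
      (∀ y z, 0 < y → y < z → (m < M → z < ξ m) → ψ m y < ψ m z) ∧
      (∀ y, 0 < y → (m < M → y < ξ m) → 0 < ψ m y) := by
    intro k
    induction k with
    | zero =>
      intro m hMm _ hmM
      have hm : m = M := by omega
      subst hm
      constructor
      · intro y z _ hyz _
        rw [hψM, hψM]; exact hyz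
      · intro y hy _
        rw [hψM]; exact hy
    | succ n ih =>
      intro m hMm h1m hmM
      by_cases hcase : M ≤ m + n
      · exact ih m hcase h1m hmM
      · have hmM' : m < M := by omega
        obtain ⟨mono1, pos1⟩ := ih (m + 1) (by omega) (by omega) (by omega)
        have Fpos1 : ∀ y, 0 < y → y < ξ m →
            0 < S (m+1) - lam (m+1) * y - mu (m+1) * ψ (m+1) y := by
          intro y hy hyx
          have hz := hξzero m (by omega)
          have hψlt : ψ (m+1) y < ψ (m+1) (ξ m) :=
            mono1 y (ξ m) hy hyx (fun _ => hξlt m (by omega))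
          nlinarith [hlam (m+1) (by omega) (by omega), hmu (m+1) (by omega) (by omega),
            hξpos m (by omega)]
        have hrec : ∀ y, ψ m y = d * (v m / w m + 1) * y /
            (u m * (S (m+1) - lam (m+1) * y - mu (m+1) * ψ (m+1) y)) := by
          intro y
          have := hψrec (m+1) (by omega) (by omega) y
          simpa using this
        have hCpos : 0 < d * (v m / w m + 1) := by
          have h1 := hv m h1m (by omega)
          have h2 := hw m h1m (by omega)
          positivity
        have hupos := hu m h1m (by omega)
        constructor
        · intro y z hy hyz hguard
          have hzx := hguard hmM'
          have hyx : y < ξ m := lt_trans hyz hzx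
          have hFz := Fpos1 z (lt_trans hy hyz) hzx
          have hψlt : ψ (m+1) y < ψ (m+1) z :=
            mono1 y z hy hyz (fun h => lt_trans hzx (hξlt m (by omega)))
          have hFyz : S (m+1) - lam (m+1) * z - mu (m+1) * ψ (m+1) z
              < S (m+1) - lam (m+1) * y - mu (m+1) * ψ (m+1) y := by
            nlinarith [hlam (m+1) (by omega) (by omega), hmu (m+1) (by omega) (by omega)]
          have hFy : 0 < S (m+1) - lam (m+1) * y - mu (m+1) * ψ (m+1) y :=
            lt_trans hFz hFyz
          rw [hrec y, hrec z, div_lt_div_iff₀ (by positivity) (by positivity)]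
          have h1 : y * (S (m+1) - lam (m+1) * z - mu (m+1) * ψ (m+1) z)
              < z * (S (m+1) - lam (m+1) * y - mu (m+1) * ψ (m+1) y) := by
            nlinarith
          nlinarith [mul_lt_mul_of_pos_left h1 (mul_pos hCpos hupos)]
        · intro y hy hguard
          have hyx := hguard hmM'
          have hFy := Fpos1 y hy hyx
          rw [hrec y]
          exact div_pos (mul_pos hCpos hy) (mul_pos hupos hFy)
  intro m h1m hmM
  obtain ⟨mono, pos⟩ := H M m (by omega) h1m hmM
  refine ⟨mono, pos, ?_⟩
  obtain ⟨n, rfl⟩ : ∃ n, m = n + 1 := ⟨m - 1, by omega⟩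
  intro y hy hyx
  simp only [Nat.add_sub_cancel] at hyx
  have hz := hξzero n (by omega)
  have hψlt : ψ (n+1) y < ψ (n+1) (ξ n) :=
    mono y (ξ n) hy hyx (fun h => hξlt n (by omega))
  nlinarith [hlam (n+1) h1m hmM, hmu (n+1) h1m hmM, hξpos n (by omega)]

theorem stmt8
    (M : ℕ) (hM : 2 ≤ M)
    (d : ℝ) (hd : 0 < d)
    (u v w : ℕ → ℝ)
    (hu : ∀ m, 1 ≤ m → m ≤ M - 1 → 0 < u m)
    (hv : ∀ m, 1 ≤ m → m ≤ M - 1 → 0 < v m)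
    (hw : ∀ m, 1 ≤ m → m ≤ M - 1 → 0 < w m)
    (S lam mu : ℕ → ℝ)
    (hS : ∀ m, 1 ≤ m → m ≤ M → 0 < S m)
    (hlam : ∀ m, 1 ≤ m → m ≤ M → 0 < lam m)
    (hmu : ∀ m, 1 ≤ m → m ≤ M → 0 < mu m)
    (ψ : ℕ → ℝ → ℝ)
    (hψM : ∀ y, ψ M y = y)
    (hψrec : ∀ m, 2 ≤ m → m ≤ M → ∀ y,
      ψ (m - 1) y = d * (v (m - 1) / w (m - 1) + 1) * y /
        (u (m - 1) * (S m - lam m * y - mu m * ψ m y)))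
    (hψ0 : ∀ y, ψ 0 y = d * y / (S 1 - lam 1 * y - mu 1 * ψ 1 y))
    (ξ : ℕ → ℝ)
    (hξpos : ∀ m, 0 ≤ m → m ≤ M - 1 → 0 < ξ m)
    (hξlt : ∀ m, 0 ≤ m → m + 1 ≤ M - 1 → ξ m < ξ (m + 1))
    (hξzero : ∀ m, 0 ≤ m → m ≤ M - 1 →
      S (m + 1) - lam (m + 1) * ξ m - mu (m + 1) * ψ (m + 1) (ξ m) = 0)
    (hξuniq : ∀ m, 0 ≤ m → m ≤ M - 1 → ∀ y, 0 < y → (m + 1 ≤ M - 1 → y < ξ (m + 1)) →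
      S (m + 1) - lam (m + 1) * y - mu (m + 1) * ψ (m + 1) y = 0 → y = ξ m)
    (S' lam' mu' : ℕ → ℝ)
    (hS' : ∀ m, 1 ≤ m → m ≤ M → 0 < S' m)
    (hlam' : ∀ m, 1 ≤ m → m ≤ M → 0 < lam' m)
    (hmu' : ∀ m, 1 ≤ m → m ≤ M → 0 < mu' m)
    (m₀ : ℕ) (hm₀ : 1 ≤ m₀) (hm₀M : m₀ ≤ M)
    (heq : ∀ m, m ≠ m₀ → S' m = S m ∧ lam' m = lam m ∧ mu' m = mu m)
    (hlam₀ : lam m₀ ≤ lam' m₀) (hmu₀ : mu m₀ ≤ mu' m₀) (hS₀ : S' m₀ ≤ S m₀)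
    (hstrict : lam m₀ < lam' m₀ ∨ mu m₀ < mu' m₀ ∨ S' m₀ < S m₀)
    (ψ' : ℕ → ℝ → ℝ)
    (hψ'M : ∀ y, ψ' M y = y)
    (hψ'rec : ∀ m, 2 ≤ m → m ≤ M → ∀ y,
      ψ' (m - 1) y = d * (v (m - 1) / w (m - 1) + 1) * y /
        (u (m - 1) * (S' m - lam' m * y - mu' m * ψ' m y)))
    (hψ'0 : ∀ y, ψ' 0 y = d * y / (S' 1 - lam' 1 * y - mu' 1 * ψ' 1 y))
    (ξ' : ℕ → ℝ)
    (hξ'pos : ∀ m, m ≤ M - 1 → 0 < ξ' m)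
    (hξ'lt : ∀ m, m + 1 ≤ M - 1 → ξ' m < ξ' (m + 1))
    (hξ'zero : ∀ m, m ≤ M - 1 →
      S' (m + 1) - lam' (m + 1) * ξ' m - mu' (m + 1) * ψ' (m + 1) (ξ' m) = 0)
    (hξ'uniq : ∀ m, m ≤ M - 1 → ∀ y, 0 < y → (m + 1 ≤ M - 1 → y < ξ' (m + 1)) →
      S' (m + 1) - lam' (m + 1) * y - mu' (m + 1) * ψ' (m + 1) y = 0 → y = ξ' m) :
    ξ' 0 < ξ 0 ∧
    (∀ m, m₀ ≤ m → m < M → ψ' m (ξ' 0) < ψ m (ξ 0)) ∧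
    (∀ m, 1 ≤ m → m < m₀ → ψ m (ξ 0) < ψ' m (ξ' 0)) := by
  have hξpos0 : ∀ m, m ≤ M - 1 → 0 < ξ m := fun m hm => hξpos m (Nat.zero_le m) hm
  have hξlt0 : ∀ m, m + 1 ≤ M - 1 → ξ m < ξ (m + 1) := fun m hm => hξlt m (Nat.zero_le m) hm
  have hξzero0 : ∀ m, m ≤ M - 1 →
      S (m + 1) - lam (m + 1) * ξ m - mu (m + 1) * ψ (m + 1) (ξ m) = 0 :=
    fun m hm => hξzero m (Nat.zero_le m) hm
  have hstr := struct_aux M hM d hd u v w hu hv hw S lam mu hlam hmu ψ hψM hψrec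
    ξ hξpos0 hξlt0 hξzero0
  have hstr' := struct_aux M hM d hd u v w hu hv hw S' lam' mu' hlam' hmu' ψ' hψ'M hψ'rec
    ξ' hξ'pos hξ'lt hξ'zero
  have ximono := xi_mono_aux M ξ hξlt0
  have ximono' := xi_mono_aux M ξ' hξ'lt
  -- ψ' = ψ above m₀
  have psEqK : ∀ k m, m + k = M → m₀ ≤ m → ∀ y, ψ' m y = ψ m y := by
    intro k
    induction k with
    | zero =>
      intro m hmk _ y
      have : m = M := by omega
      subst this
      rw [hψ'M, hψM]
    | succ n ih =>
      intro m hmk hm y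
      have hup := ih (m + 1) (by omega) (by omega)
      obtain ⟨hSe, hle, hme⟩ := heq (m + 1) (by omega)
      have h1 := hψ'rec (m + 1) (by omega) (by omega) y
      have h2 := hψrec (m + 1) (by omega) (by omega) y
      simp only [Nat.add_sub_cancel] at h1 h2
      rw [h1, h2, hSe, hle, hme, hup y]
  have psEq : ∀ m, m₀ ≤ m → m ≤ M → ∀ y, ψ' m y = ψ m y := by
    intro m hm hmM y
    exact psEqK (M - m) m (by omega) hm y
  -- ξ' = ξ above m₀
  have xiEqK : ∀ k m, m + k = M - 1 → m₀ ≤ m → ξ' m = ξ m := by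
    intro k
    induction k with
    | zero =>
      intro m hmk hm
      -- m = M - 1, guard for mono vacuous
      have hz := hξzero0 m (by omega)
      have hz' := hξ'zero m (by omega)
      obtain ⟨hSe, hle, hme⟩ := heq (m + 1) (by omega)
      rw [hSe, hle, hme, psEq (m + 1) (by omega) (by omega)] at hz'
      obtain ⟨mono, -, -⟩ := hstr (m + 1) (by omega) (by omega)
      by_contra hne
      rcases lt_trichotomy (ξ' m) (ξ m) with h | h | h
      · have := mono (ξ' m) (ξ m) (hξ'pos m (by omega)) h (fun hc => by omega)
        nlinarith [hlam (m+1) (by omega) (by omega), hmu (m+1) (by omega) (by omega)]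
      · exact hne h
      · have := mono (ξ m) (ξ' m) (hξpos0 m (by omega)) h (fun hc => by omega)
        nlinarith [hlam (m+1) (by omega) (by omega), hmu (m+1) (by omega) (by omega)]
    | succ n ih =>
      intro m hmk hm
      have hupEq : ξ' (m + 1) = ξ (m + 1) := ih (m + 1) (by omega) (by omega)
      have hz := hξzero0 m (by omega)
      have hz' := hξ'zero m (by omega)
      obtain ⟨hSe, hle, hme⟩ := heq (m + 1) (by omega)
      rw [hSe, hle, hme, psEq (m + 1) (by omega) (by omega)] at hz'
      obtain ⟨mono, -, -⟩ := hstr (m + 1) (by omega) (by omega)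
      by_contra hne
      rcases lt_trichotomy (ξ' m) (ξ m) with h | h | h
      · have := mono (ξ' m) (ξ m) (hξ'pos m (by omega)) h
          (fun hc => hξlt0 m (by omega))
        nlinarith [hlam (m+1) (by omega) (by omega), hmu (m+1) (by omega) (by omega)]
      · exact hne h
      · have := mono (ξ m) (ξ' m) (hξpos0 m (by omega)) h
          (fun hc => hupEq ▸ hξ'lt m (by omega))
        nlinarith [hlam (m+1) (by omega) (by omega), hmu (m+1) (by omega) (by omega)]
  have xiEq : ∀ m, m₀ ≤ m → m ≤ M - 1 → ξ' m = ξ m := by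
    intro m hm hmM
    exact xiEqK (M - 1 - m) m (by omega) hm

  -- a reusable step: from the F-comparison get ξ' m < ξ m
  have xistep : ∀ m, m + 1 ≤ m₀ →
      (∀ y, 0 < y → y ≤ ξ' m →
        S' (m+1) - lam' (m+1) * y - mu' (m+1) * ψ' (m+1) y <
        S (m+1) - lam (m+1) * y - mu (m+1) * ψ (m+1) y) →
      (m + 1 < M → ξ' m < ξ (m+1)) → ξ' m < ξ m := by
    intro m hmm Dpart hguard
    have h0' := hξ'zero m (by omega)
    have hD := Dpart (ξ' m) (hξ'pos m (by omega)) le_rfl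
    have hFpos : 0 < S (m+1) - lam (m+1) * ξ' m - mu (m+1) * ψ (m+1) (ξ' m) := by
      linarith
    have hz := hξzero0 m (by omega)
    obtain ⟨mono, -, -⟩ := hstr (m+1) (by omega) (by omega)
    by_contra hc
    push_neg at hc
    rcases eq_or_lt_of_le hc with h | h
    · rw [h] at hz; linarith
    · have hm2 := mono (ξ m) (ξ' m) (hξpos0 m (by omega)) h hguard
      nlinarith [hlam (m+1) (by omega) (by omega), hmu (m+1) (by omega) (by omega)]
  have down : ∀ k m, m + k + 1 = m₀ →
      (∀ y, 0 < y → y ≤ ξ' m →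
        S' (m+1) - lam' (m+1) * y - mu' (m+1) * ψ' (m+1) y <
        S (m+1) - lam (m+1) * y - mu (m+1) * ψ (m+1) y) ∧ ξ' m < ξ m := by
    intro k
    induction k with
    | zero =>
      intro m hmk
      have hm1 : m + 1 = m₀ := by omega
      have Dpart : ∀ y, 0 < y → y ≤ ξ' m →
          S' (m+1) - lam' (m+1) * y - mu' (m+1) * ψ' (m+1) y <
          S (m+1) - lam (m+1) * y - mu (m+1) * ψ (m+1) y := by
        intro y hy hyle
        have hψe : ψ' (m+1) y = ψ (m+1) y := psEq (m+1) (by omega) (by omega) y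
        have hψpos : 0 < ψ (m+1) y := by
          obtain ⟨-, pos, -⟩ := hstr (m+1) (by omega) (by omega)
          refine pos y hy (fun hlt => ?_)
          have h1 : ξ' m < ξ' (m+1) := hξ'lt m (by omega)
          have h2 : ξ' (m+1) = ξ (m+1) := xiEq (m+1) (by omega) (by omega)
          linarith
        rw [hψe, hm1]
        rw [hm1] at hψpos
        rcases hstrict with h | h | h <;>
          nlinarith [mul_nonneg (sub_nonneg.mpr hlam₀) hy.le,
            mul_nonneg (sub_nonneg.mpr hmu₀) hψpos.le, hψpos, hy, hS₀]
      refine ⟨Dpart, xistep m (by omega) Dpart (fun hlt => ?_)⟩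
      rw [← xiEq (m+1) (by omega) (by omega)]
      exact hξ'lt m (by omega)
    | succ n ih =>
      intro m hmk
      obtain ⟨D1, hlt1⟩ := ih (m+1) (by omega)
      have Dpart : ∀ y, 0 < y → y ≤ ξ' m →
          S' (m+1) - lam' (m+1) * y - mu' (m+1) * ψ' (m+1) y <
          S (m+1) - lam (m+1) * y - mu (m+1) * ψ (m+1) y := by
        intro y hy hyle
        have hy1 : y < ξ' (m+1) := lt_of_le_of_lt hyle (hξ'lt m (by omega))
        have hrec := hψrec (m+2) (by omega) (by omega) y
        have hrec' := hψ'rec (m+2) (by omega) (by omega) y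
        have e2 : m + 2 - 1 = m + 1 := by omega
        rw [e2] at hrec hrec'
        have hF2 := D1 y hy hy1.le
        obtain ⟨-, -, Fpos'⟩ := hstr' (m+2) (by omega) (by omega)
        rw [e2] at Fpos'
        have hF2pos' := Fpos' y hy hy1
        have hF2pos : 0 < S (m+2) - lam (m+2) * y - mu (m+2) * ψ (m+2) y :=
          lt_trans hF2pos' hF2
        have hCpos : 0 < d * (v (m+1) / w (m+1) + 1) := by
          have h1 := hv (m+1) (by omega) (by omega)
          have h2 := hw (m+1) (by omega) (by omega)
          positivity
        have hupos := hu (m+1) (by omega) (by omega)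
        have hψcmp : ψ (m+1) y < ψ' (m+1) y := by
          rw [hrec, hrec']
          rw [div_lt_div_iff₀ (mul_pos hupos hF2pos) (mul_pos hupos hF2pos')]
          nlinarith [mul_lt_mul_of_pos_left hF2 (mul_pos (mul_pos hCpos hy) hupos)]
        obtain ⟨hSe, hle, hme⟩ := heq (m+1) (by omega)
        rw [hSe, hle, hme]
        linarith [mul_pos (hmu (m+1) (by omega) (by omega)) (sub_pos.mpr hψcmp)]
      refine ⟨Dpart, xistep m (by omega) Dpart (fun hlt => ?_)⟩
      exact lt_trans (hξ'lt m (by omega)) hlt1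
  have hxi0 : ξ' 0 < ξ 0 := (down (m₀ - 1) 0 (by omega)).2
  refine ⟨hxi0, ?_, ?_⟩
  · -- m ≥ m₀
    intro m hm hmM
    rw [psEq m hm (by omega) (ξ' 0)]
    obtain ⟨mono, -, -⟩ := hstr m (by omega) (by omega)
    exact mono (ξ' 0) (ξ 0) (hξ'pos 0 (by omega)) hxi0
      (fun h => ximono 0 m (by omega) (by omega))

  · -- 1 ≤ m < m₀
    have up : ∀ m, 1 ≤ m → m + 1 ≤ m₀ →
        0 < ψ m (ξ 0) ∧ 0 < ψ' m (ξ' 0) ∧ ψ m (ξ 0) < ψ' m (ξ' 0) := by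
      intro m hm
      induction m, hm using Nat.le_induction with
      | base =>
        intro h2m
        have hz := hξzero0 0 (by omega)
        have hz' := hξ'zero 0 (by omega)
        norm_num at hz hz'
        obtain ⟨hSe, hle, hme⟩ := heq 1 (by omega)
        rw [hSe, hle, hme] at hz'
        have hxi01 : ξ 0 < ξ 1 := by
          have := hξlt0 0 (by omega); norm_num at this; exact this
        have hxi01' : ξ' 0 < ξ' 1 := by
          have := hξ'lt 0 (by omega); norm_num at this; exact this
        obtain ⟨-, pos, -⟩ := hstr 1 (by omega) (by omega)
        obtain ⟨-, pos', -⟩ := hstr' 1 (by omega) (by omega)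
        refine ⟨pos (ξ 0) (hξpos0 0 (by omega)) (fun _ => hxi01),
          pos' (ξ' 0) (hξ'pos 0 (by omega)) (fun _ => hxi01'), ?_⟩
        nlinarith [hmu 1 (by omega) (by omega), hlam 1 (by omega) (by omega), hxi0]
      | succ m hm ihm =>
        intro h2m
        obtain ⟨hA, hA', hAlt⟩ := ihm (by omega)
        have hrec := hψrec (m+1) (by omega) (by omega) (ξ 0)
        have hrec' := hψ'rec (m+1) (by omega) (by omega) (ξ' 0)
        simp only [Nat.add_sub_cancel] at hrec hrec'
        obtain ⟨hSe, hle, hme⟩ := heq (m+1) (by omega)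
        rw [hSe, hle, hme] at hrec'
        obtain ⟨-, posm1, Fpos1⟩ := hstr (m+1) (by omega) (by omega)
        obtain ⟨-, posm1', Fpos1'⟩ := hstr' (m+1) (by omega) (by omega)
        simp only [Nat.add_sub_cancel] at Fpos1 Fpos1'
        have hX : 0 < ξ 0 := hξpos0 0 (by omega)
        have hX' : 0 < ξ' 0 := hξ'pos 0 (by omega)
        have hF : 0 < S (m+1) - lam (m+1) * ξ 0 - mu (m+1) * ψ (m+1) (ξ 0) :=
          Fpos1 (ξ 0) hX (ximono 0 m (by omega) (by omega))
        have hF' : 0 < S' (m+1) - lam' (m+1) * ξ' 0 - mu' (m+1) * ψ' (m+1) (ξ' 0) :=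
          Fpos1' (ξ' 0) hX' (ximono' 0 m (by omega) (by omega))
        rw [hSe, hle, hme] at hF'
        have hCpos : 0 < d * (v m / w m + 1) := by
          have h1 := hv m (by omega) (by omega)
          have h2 := hw m (by omega) (by omega)
          positivity
        have hupos := hu m (by omega) (by omega)
        have hE := (eq_div_iff (ne_of_gt (mul_pos hupos hF))).mp hrec
        have hE' := (eq_div_iff (ne_of_gt (mul_pos hupos hF'))).mp hrec'
        clear hrec hrec'
        have hlm1 := hlam (m+1) (by omega) (by omega)
        have hmu1 := hmu (m+1) (by omega) (by omega)
        have hB : 0 < ψ (m+1) (ξ 0) :=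
          posm1 (ξ 0) hX (fun _ => ximono 0 (m+1) (by omega) (by omega))
        have hB' : 0 < ψ' (m+1) (ξ' 0) :=
          posm1' (ξ' 0) hX' (fun _ => ximono' 0 (m+1) (by omega) (by omega))
        refine ⟨hB, hB', ?_⟩
        by_contra hBB
        push_neg at hBB
        have hDD : S (m+1) - lam (m+1) * ξ 0 - mu (m+1) * ψ (m+1) (ξ 0) <
            S (m+1) - lam (m+1) * ξ' 0 - mu (m+1) * ψ' (m+1) (ξ' 0) := by
          linarith [mul_pos hlm1 (sub_pos.mpr hxi0),
            mul_nonneg hmu1.le (sub_nonneg.mpr hBB)]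
        have hCX : d * (v m / w m + 1) * ξ 0 < d * (v m / w m + 1) * ξ' 0 := by
          rw [← hE, ← hE']
          have h1 := mul_lt_mul_of_pos_right hAlt (mul_pos hupos hF)
          have h2 := mul_lt_mul_of_pos_left (mul_lt_mul_of_pos_left hDD hupos)
            (lt_trans hA hAlt)
          linarith
        linarith [mul_pos hCpos (sub_pos.mpr hxi0)]
    intro m h1 h2
    exact (up m h1 (by omega)).2.2
end

section
/- Fix an index m_0 with 1 ≤ m_0 ≤ M and consider a second (barred) family of constants identical to the first except that λ̄_{m_0} ≥ λ_{m_0}, μ̄_{m_0} ≥ μ_{m_0} and S̄^{m_0}_tot ≤ S^{m_0}_tot, with at least one of these inequalities strict. Fix c > 0, and let y* ∈ (0, ξ_0) and ȳ* ∈ (0, ξ̄_0) be the unique solutions of ψ_0(y*) = c and ψ̄_0(ȳ*) = c. Then the steady-state responses satisfy ψ̄_m(ȳ*) < ψ_m(y*) for all m with m_0 ≤ m ≤ M and ψ̄_m(ȳ*) > ψ_m(y*) for all m with 1 ≤ m < m_0. -/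
open Filter Set Topology

private lemma downInd (M : ℕ) (P : ℕ → Prop) (hbase : P M)
    (hstep : ∀ m, 2 ≤ m → m ≤ M → P m → P (m - 1)) :
    ∀ m, 1 ≤ m → m ≤ M → P m := by
  have H : ∀ k m, 1 ≤ m → m ≤ M → M - m = k → P m := by
    intro k
    induction k with
    | zero =>
      intro m h1 h2 h3
      have hm : m = M := by omega
      subst hm
      exact hbase
    | succ k ih =>
      intro m h1 h2 h3
      have h4 : m + 1 ≤ M := by omega
      have h5 := hstep (m + 1) (by omega) h4 (ih (m + 1) (by omega) h4 (by omega))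
      simpa using h5
  intro m h1 h2; exact H (M - m) m h1 h2 rfl

private lemma famC (M : ℕ) (hM : 2 ≤ M) (d : ℝ) (hd : 0 < d)
    (u v w : ℕ → ℝ)
    (hu : ∀ m, 1 ≤ m → m ≤ M - 1 → 0 < u m)
    (hv : ∀ m, 1 ≤ m → m ≤ M - 1 → 0 < v m)
    (hw : ∀ m, 1 ≤ m → m ≤ M - 1 → 0 < w m)
    (S lam mu : ℕ → ℝ)
    (hlam : ∀ m, 1 ≤ m → m ≤ M → 0 < lam m)
    (hmu : ∀ m, 1 ≤ m → m ≤ M → 0 < mu m)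
    (ψ : ℕ → ℝ → ℝ)
    (hψM : ∀ y, ψ M y = y)
    (hψrec : ∀ m, 2 ≤ m → m ≤ M → ∀ y,
      ψ (m - 1) y = d * (v (m - 1) / w (m - 1) + 1) * y /
        (u (m - 1) * (S m - lam m * y - mu m * ψ m y)))
    (ξ : ℕ → ℝ)
    (hξlt : ∀ m, m + 1 ≤ M - 1 → ξ m < ξ (m + 1))
    (hξzero : ∀ m, m ≤ M - 1 →
      S (m + 1) - lam (m + 1) * ξ m - mu (m + 1) * ψ (m + 1) (ξ m) = 0) :
    ∀ m, 1 ≤ m → m ≤ M →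
      ((∀ y, 0 < y → y ≤ ξ (m - 1) → 0 < ψ m y) ∧
       (∀ y₁ y₂, 0 < y₁ → y₁ < y₂ → y₂ ≤ ξ (m - 1) → ψ m y₁ < ψ m y₂) ∧
       (∀ y, 0 < y → y < ξ (m - 1) → 0 < S m - lam m * y - mu m * ψ m y)) := by
  apply downInd
  · refine ⟨?_, ?_, ?_⟩
    · intro y hy _; rw [hψM]; exact hy
    · intro y₁ y₂ _ h _; rw [hψM, hψM]; exact h
    · intro y hy hlt
      have hz := hξzero (M - 1) le_rfl
      have hM1 : M - 1 + 1 = M := by omega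
      rw [hM1] at hz
      rw [hψM] at hz ⊢
      have h1 := hlam M (by omega) le_rfl
      have h2 := hmu M (by omega) le_rfl
      nlinarith [mul_pos h1 (sub_pos.mpr hlt), mul_pos h2 (sub_pos.mpr hlt)]
  · rintro m hm2 hmM ⟨ha, hb, hc⟩
    have hm1 : (1:ℕ) ≤ m - 1 := by omega
    have e1 : m - 1 - 1 = m - 2 := by omega
    have e2 : m - 2 + 1 = m - 1 := by omega
    have hξstep : ξ (m - 2) < ξ (m - 1) := by
      have h := hξlt (m - 2) (by omega)
      rwa [e2] at h
    have hv1 := hv (m - 1) hm1 (by omega)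
    have hw1 := hw (m - 1) hm1 (by omega)
    have hA : 0 < d * (v (m - 1) / w (m - 1) + 1) :=
      mul_pos hd (by linarith [div_pos hv1 hw1])
    have hu1 := hu (m - 1) hm1 (by omega)
    have hden : ∀ y, 0 < y → y ≤ ξ (m - 2) → 0 < S m - lam m * y - mu m * ψ m y := by
      intro y hy hyle
      exact hc y hy (lt_of_le_of_lt hyle hξstep)
    have hform := hψrec m hm2 hmM
    have ha' : ∀ y, 0 < y → y ≤ ξ (m - 1 - 1) → 0 < ψ (m - 1) y := by
      intro y hy hyle
      rw [e1] at hyle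
      rw [hform y]
      exact div_pos (mul_pos hA hy) (mul_pos hu1 (hden y hy hyle))
    have hb' : ∀ y₁ y₂, 0 < y₁ → y₁ < y₂ → y₂ ≤ ξ (m - 1 - 1) → ψ (m - 1) y₁ < ψ (m - 1) y₂ := by
      intro y₁ y₂ h1 h12 h2le
      rw [e1] at h2le
      have h2 : 0 < y₂ := h1.trans h12
      have hD1 := hden y₁ h1 (le_of_lt (lt_of_lt_of_le h12 h2le))
      have hD2 := hden y₂ h2 h2le
      have hψlt : ψ m y₁ < ψ m y₂ := hb y₁ y₂ h1 h12 (le_of_lt (lt_of_le_of_lt h2le hξstep))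
      have hDlt : S m - lam m * y₂ - mu m * ψ m y₂ < S m - lam m * y₁ - mu m * ψ m y₁ := by
        have hl := hlam m (by omega) hmM
        have hmu2 := hmu m (by omega) hmM
        nlinarith [mul_pos hl (sub_pos.mpr h12), mul_pos hmu2 (sub_pos.mpr hψlt)]
      rw [hform y₁, hform y₂]
      rw [div_lt_div_iff₀ (mul_pos hu1 hD1) (mul_pos hu1 hD2)]
      nlinarith [mul_pos (mul_pos hA hu1) (mul_pos h1 (sub_pos.mpr hDlt)),
        mul_pos (mul_pos hA hu1) (mul_pos (sub_pos.mpr h12) hD1)]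
    refine ⟨ha', hb', ?_⟩
    intro y hy hylt
    rw [e1] at hylt
    have hz := hξzero (m - 2) (by omega)
    rw [e2] at hz
    have hξ2pos : 0 < ξ (m - 2) := hy.trans hylt
    have hmono : ψ (m - 1) y < ψ (m - 1) (ξ (m - 2)) :=
      hb' y (ξ (m - 2)) hy hylt (by rw [e1])
    have hl := hlam (m - 1) hm1 (by omega)
    have hmu1 := hmu (m - 1) hm1 (by omega)
    nlinarith [mul_pos hl (sub_pos.mpr hylt), mul_pos hmu1 (sub_pos.mpr hmono)]


set_option maxHeartbeats 2000000 in
theorem stmt9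
    (M : ℕ) (hM : 2 ≤ M)
    (d : ℝ) (hd : 0 < d)
    (u v w : ℕ → ℝ)
    (hu : ∀ m, 1 ≤ m → m ≤ M - 1 → 0 < u m)
    (hv : ∀ m, 1 ≤ m → m ≤ M - 1 → 0 < v m)
    (hw : ∀ m, 1 ≤ m → m ≤ M - 1 → 0 < w m)
    (S lam mu : ℕ → ℝ)
    (hS : ∀ m, 1 ≤ m → m ≤ M → 0 < S m)
    (hlam : ∀ m, 1 ≤ m → m ≤ M → 0 < lam m)
    (hmu : ∀ m, 1 ≤ m → m ≤ M → 0 < mu m)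
    (ψ : ℕ → ℝ → ℝ)
    (hψM : ∀ y, ψ M y = y)
    (hψrec : ∀ m, 2 ≤ m → m ≤ M → ∀ y,
      ψ (m - 1) y = d * (v (m - 1) / w (m - 1) + 1) * y /
        (u (m - 1) * (S m - lam m * y - mu m * ψ m y)))
    (hψ0 : ∀ y, ψ 0 y = d * y / (S 1 - lam 1 * y - mu 1 * ψ 1 y))
    (ξ : ℕ → ℝ)
    (hξpos : ∀ m, 0 ≤ m → m ≤ M - 1 → 0 < ξ m)
    (hξlt : ∀ m, 0 ≤ m → m + 1 ≤ M - 1 → ξ m < ξ (m + 1))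
    (hξzero : ∀ m, 0 ≤ m → m ≤ M - 1 →
      S (m + 1) - lam (m + 1) * ξ m - mu (m + 1) * ψ (m + 1) (ξ m) = 0)
    (hξuniq : ∀ m, 0 ≤ m → m ≤ M - 1 → ∀ y, 0 < y → (m + 1 ≤ M - 1 → y < ξ (m + 1)) →
      S (m + 1) - lam (m + 1) * y - mu (m + 1) * ψ (m + 1) y = 0 → y = ξ m)
    (S' lam' mu' : ℕ → ℝ)
    (hS' : ∀ m, 1 ≤ m → m ≤ M → 0 < S' m)
    (hlam' : ∀ m, 1 ≤ m → m ≤ M → 0 < lam' m)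
    (hmu' : ∀ m, 1 ≤ m → m ≤ M → 0 < mu' m)
    (m₀ : ℕ) (hm₀ : 1 ≤ m₀) (hm₀M : m₀ ≤ M)
    (heq : ∀ m, m ≠ m₀ → S' m = S m ∧ lam' m = lam m ∧ mu' m = mu m)
    (hlam₀ : lam m₀ ≤ lam' m₀) (hmu₀ : mu m₀ ≤ mu' m₀) (hS₀ : S' m₀ ≤ S m₀)
    (hstrict : lam m₀ < lam' m₀ ∨ mu m₀ < mu' m₀ ∨ S' m₀ < S m₀)
    (ψ' : ℕ → ℝ → ℝ)
    (hψ'M : ∀ y, ψ' M y = y)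
    (hψ'rec : ∀ m, 2 ≤ m → m ≤ M → ∀ y,
      ψ' (m - 1) y = d * (v (m - 1) / w (m - 1) + 1) * y /
        (u (m - 1) * (S' m - lam' m * y - mu' m * ψ' m y)))
    (hψ'0 : ∀ y, ψ' 0 y = d * y / (S' 1 - lam' 1 * y - mu' 1 * ψ' 1 y))
    (ξ' : ℕ → ℝ)
    (hξ'pos : ∀ m, m ≤ M - 1 → 0 < ξ' m)
    (hξ'lt : ∀ m, m + 1 ≤ M - 1 → ξ' m < ξ' (m + 1))
    (hξ'zero : ∀ m, m ≤ M - 1 →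
      S' (m + 1) - lam' (m + 1) * ξ' m - mu' (m + 1) * ψ' (m + 1) (ξ' m) = 0)
    (hξ'uniq : ∀ m, m ≤ M - 1 → ∀ y, 0 < y → (m + 1 ≤ M - 1 → y < ξ' (m + 1)) →
      S' (m + 1) - lam' (m + 1) * y - mu' (m + 1) * ψ' (m + 1) y = 0 → y = ξ' m)
    (c : ℝ) (hc : 0 < c)
    (ystar : ℝ) (hy : ystar ∈ Set.Ioo 0 (ξ 0)) (hyc : ψ 0 ystar = c)
    (ystar' : ℝ) (hy' : ystar' ∈ Set.Ioo 0 (ξ' 0)) (hyc' : ψ' 0 ystar' = c) :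
    (∀ m, m₀ ≤ m → m ≤ M → ψ' m ystar' < ψ m ystar) ∧
    (∀ m, 1 ≤ m → m < m₀ → ψ m ystar < ψ' m ystar') := by
  obtain ⟨hys0, hysξ⟩ := hy
  obtain ⟨hys0', hysξ'⟩ := hy'
  have hC := famC M hM d hd u v w hu hv hw S lam mu hlam hmu ψ hψM hψrec ξ
    (fun m h => hξlt m m.zero_le h) (fun m h => hξzero m m.zero_le h)
  have hC' := famC M hM d hd u v w hu hv hw S' lam' mu' hlam' hmu' ψ' hψ'M hψ'rec ξ' hξ'lt hξ'zero
  have chain : ∀ j, j ≤ M - 1 → ξ 0 ≤ ξ j := by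
    intro j
    induction j with
    | zero => intro _; exact le_rfl
    | succ j ih =>
      intro hj
      exact le_trans (ih (by omega)) (le_of_lt (hξlt j j.zero_le hj))
  have chain' : ∀ j, j ≤ M - 1 → ξ' 0 ≤ ξ' j := by
    intro j
    induction j with
    | zero => intro _; exact le_rfl
    | succ j ih =>
      intro hj
      exact le_trans (ih (by omega)) (le_of_lt (hξ'lt j hj))
  have eqHigh : ∀ m, 1 ≤ m → m ≤ M → (m₀ ≤ m → ∀ y, ψ' m y = ψ m y) := by
    apply downInd
    · intro _ y; rw [hψ'M, hψM]
    · intro m hm2 hmM2 ih hm₀m y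
      obtain ⟨hSe, hle, hme⟩ := heq m (by omega)
      rw [hψ'rec m hm2 hmM2 y, hψrec m hm2 hmM2 y, hSe, hle, hme, ih (by omega) y]
  have key : ∀ m, 1 ≤ m → m ≤ M →
      (m ≤ m₀ - 1 → ∀ y, 0 < y → y < ξ 0 → y < ξ' 0 → ψ m y < ψ' m y) := by
    apply downInd
    · intro h; exact absurd h (by omega)
    · intro m hm2 hmM2 ih hmle y hy0 hyξ hyξ'
      have hm1 : (1:ℕ) ≤ m - 1 := by omega
      have hyle : y < ξ (m - 1) := lt_of_lt_of_le hyξ (chain (m - 1) (by omega))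
      have hyle' : y < ξ' (m - 1) := lt_of_lt_of_le hyξ' (chain' (m - 1) (by omega))
      have hD : 0 < S m - lam m * y - mu m * ψ m y := (hC m (by omega) hmM2).2.2 y hy0 hyle
      have hD' : 0 < S' m - lam' m * y - mu' m * ψ' m y := (hC' m (by omega) hmM2).2.2 y hy0 hyle'
      have hDD : S' m - lam' m * y - mu' m * ψ' m y < S m - lam m * y - mu m * ψ m y := by
        rcases eq_or_lt_of_le (show m ≤ m₀ by omega) with heqm | hltm
        · have hψeq : ψ' m y = ψ m y := eqHigh m (by omega) hmM2 (le_of_eq heqm.symm) y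
          have hψpos : 0 < ψ m y := (hC m (by omega) hmM2).1 y hy0 (le_of_lt hyle)
          rw [hψeq]
          rw [← heqm] at hlam₀ hmu₀ hS₀ hstrict
          rcases hstrict with h | h | h
          · nlinarith [mul_pos (sub_pos.mpr h) hy0, mul_nonneg (sub_nonneg.mpr hmu₀) hψpos.le]
          · nlinarith [mul_pos (sub_pos.mpr h) hψpos, mul_nonneg (sub_nonneg.mpr hlam₀) hy0.le]
          · nlinarith [mul_nonneg (sub_nonneg.mpr hlam₀) hy0.le,
              mul_nonneg (sub_nonneg.mpr hmu₀) hψpos.le]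
        · obtain ⟨hSe, hle, hme⟩ := heq m (by omega)
          have hψlt : ψ m y < ψ' m y := ih (by omega) y hy0 hyξ hyξ'
          rw [hSe, hle, hme]
          have hmum := hmu m (by omega) hmM2
          nlinarith [mul_pos hmum (sub_pos.mpr hψlt)]
      have hv1 := hv (m - 1) hm1 (by omega)
      have hw1 := hw (m - 1) hm1 (by omega)
      have hA : 0 < d * (v (m - 1) / w (m - 1) + 1) :=
        mul_pos hd (by linarith [div_pos hv1 hw1])
      have hu1 := hu (m - 1) hm1 (by omega)
      rw [hψrec m hm2 hmM2 y, hψ'rec m hm2 hmM2 y]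
      exact div_lt_div_of_pos_left (mul_pos hA hy0) (mul_pos hu1 hD')
        ((mul_lt_mul_iff_right₀ hu1).mpr hDD)
  have cmp0 : ∀ y, 0 < y → y < ξ 0 → y < ξ' 0 → ψ 0 y < ψ' 0 y := by
    intro y hy0 hyξ hyξ'
    have hD : 0 < S 1 - lam 1 * y - mu 1 * ψ 1 y := (hC 1 le_rfl (by omega)).2.2 y hy0 hyξ
    have hD' : 0 < S' 1 - lam' 1 * y - mu' 1 * ψ' 1 y := (hC' 1 le_rfl (by omega)).2.2 y hy0 hyξ'
    have hDD : S' 1 - lam' 1 * y - mu' 1 * ψ' 1 y < S 1 - lam 1 * y - mu 1 * ψ 1 y := by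
      rcases eq_or_lt_of_le hm₀ with heqm | hltm
      · have hψeq : ψ' 1 y = ψ 1 y := eqHigh 1 le_rfl (by omega) (le_of_eq heqm.symm) y
        have hψpos : 0 < ψ 1 y := (hC 1 le_rfl (by omega)).1 y hy0 (le_of_lt hyξ)
        rw [hψeq]
        rw [← heqm] at hlam₀ hmu₀ hS₀ hstrict
        rcases hstrict with h | h | h
        · nlinarith [mul_pos (sub_pos.mpr h) hy0, mul_nonneg (sub_nonneg.mpr hmu₀) hψpos.le]
        · nlinarith [mul_pos (sub_pos.mpr h) hψpos, mul_nonneg (sub_nonneg.mpr hlam₀) hy0.le]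
        · nlinarith [mul_nonneg (sub_nonneg.mpr hlam₀) hy0.le,
            mul_nonneg (sub_nonneg.mpr hmu₀) hψpos.le]
      · obtain ⟨hSe, hle, hme⟩ := heq 1 (by omega)
        have hψlt : ψ 1 y < ψ' 1 y := key 1 le_rfl (by omega) (by omega) y hy0 hyξ hyξ'
        rw [hSe, hle, hme]
        have hmum := hmu 1 (by omega) (by omega)
        nlinarith [mul_pos hmum (sub_pos.mpr hψlt)]
    rw [hψ0 y, hψ'0 y]
    exact div_lt_div_of_pos_left (mul_pos hd hy0) hD' hDD
  have mono0' : ∀ y₁ y₂, 0 < y₁ → y₁ ≤ y₂ → y₂ < ξ' 0 → ψ' 0 y₁ ≤ ψ' 0 y₂ := by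
    intro y₁ y₂ h1 h12 h2
    rcases eq_or_lt_of_le h12 with rfl | hlt12
    · exact le_rfl
    · have hgt2 : 0 < y₂ := h1.trans hlt12
      have hD1 : 0 < S' 1 - lam' 1 * y₁ - mu' 1 * ψ' 1 y₁ :=
        (hC' 1 le_rfl (by omega)).2.2 y₁ h1 (hlt12.trans h2)
      have hD2 : 0 < S' 1 - lam' 1 * y₂ - mu' 1 * ψ' 1 y₂ :=
        (hC' 1 le_rfl (by omega)).2.2 y₂ hgt2 h2
      have hψlt : ψ' 1 y₁ < ψ' 1 y₂ := (hC' 1 le_rfl (by omega)).2.1 y₁ y₂ h1 hlt12 (le_of_lt h2)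
      have hDlt : S' 1 - lam' 1 * y₂ - mu' 1 * ψ' 1 y₂ < S' 1 - lam' 1 * y₁ - mu' 1 * ψ' 1 y₁ := by
        have hl := hlam' 1 le_rfl (by omega)
        have hm1 := hmu' 1 le_rfl (by omega)
        nlinarith [mul_pos hl (sub_pos.mpr hlt12), mul_pos hm1 (sub_pos.mpr hψlt)]
      rw [hψ'0 y₁, hψ'0 y₂]
      apply le_of_lt
      rw [div_lt_div_iff₀ hD1 hD2]
      nlinarith [mul_pos hd (mul_pos h1 (sub_pos.mpr hDlt)),
        mul_pos hd (mul_pos (sub_pos.mpr hlt12) hD1)]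
  have hyslt : ystar' < ystar := by
    by_contra hcon
    push_neg at hcon
    have h1 : ψ 0 ystar < ψ' 0 ystar := cmp0 ystar hys0 hysξ (lt_of_le_of_lt hcon hysξ')
    have h2 : ψ' 0 ystar ≤ ψ' 0 ystar' := mono0' ystar ystar' hys0 hcon hysξ'
    rw [hyc] at h1
    rw [hyc'] at h2
    linarith
  have part2 : ∀ m, 1 ≤ m → m < m₀ → ψ m ystar < ψ' m ystar' := by
    intro m
    induction m with
    | zero => intro h; omega
    | succ n ih =>
      intro _ hltm₀
      by_cases hn : n = 0
      · subst hn
        show ψ 1 ystar < ψ' 1 ystar'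
        have hD : 0 < S 1 - lam 1 * ystar - mu 1 * ψ 1 ystar :=
          (hC 1 le_rfl (by omega)).2.2 ystar hys0 hysξ
        have hD' : 0 < S' 1 - lam' 1 * ystar' - mu' 1 * ψ' 1 ystar' :=
          (hC' 1 le_rfl (by omega)).2.2 ystar' hys0' hysξ'
        have h := hψ0 ystar
        rw [hyc] at h
        have e1 : c * (S 1 - lam 1 * ystar - mu 1 * ψ 1 ystar) = d * ystar :=
          (eq_div_iff hD.ne').mp h
        have h' := hψ'0 ystar'
        rw [hyc'] at h'
        have e2 : c * (S' 1 - lam' 1 * ystar' - mu' 1 * ψ' 1 ystar') = d * ystar' :=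
          (eq_div_iff hD'.ne').mp h'
        have hDD' : S' 1 - lam' 1 * ystar' - mu' 1 * ψ' 1 ystar' <
            S 1 - lam 1 * ystar - mu 1 * ψ 1 ystar := by
          nlinarith [mul_pos hd (sub_pos.mpr hyslt)]
        obtain ⟨hSe, hle, hme⟩ := heq 1 (by omega)
        rw [hSe, hle, hme] at hDD'
        have hmu1 := hmu 1 le_rfl (by omega)
        have hl1 := hlam 1 le_rfl (by omega)
        nlinarith [mul_pos hl1 (sub_pos.mpr hyslt), hmu1]
      · have hn1 : (1:ℕ) ≤ n := by omega
        have hprev : ψ n ystar < ψ' n ystar' := ih hn1 (by omega)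
        have hnM : n + 1 ≤ M := by omega
        have hn2 : (2:ℕ) ≤ n + 1 := by omega
        have hψpos : 0 < ψ n ystar :=
          (hC n hn1 (by omega)).1 ystar hys0
            (le_of_lt (lt_of_lt_of_le hysξ (chain (n - 1) (by omega))))
        have hψ'pos : 0 < ψ' n ystar' := hψpos.trans hprev
        have hD : 0 < S (n + 1) - lam (n + 1) * ystar - mu (n + 1) * ψ (n + 1) ystar :=
          (hC (n + 1) (by omega) hnM).2.2 ystar hys0 (lt_of_lt_of_le hysξ (chain n (by omega)))
        have hD' : 0 < S' (n + 1) - lam' (n + 1) * ystar' - mu' (n + 1) * ψ' (n + 1) ystar' :=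
          (hC' (n + 1) (by omega) hnM).2.2 ystar' hys0' (lt_of_lt_of_le hysξ' (chain' n (by omega)))
        obtain ⟨hSe, hle, hme⟩ := heq (n + 1) (by omega)
        rw [hSe, hle, hme] at hD'
        have hv1 := hv n hn1 (by omega)
        have hw1 := hw n hn1 (by omega)
        have hu1 := hu n hn1 (by omega)
        have hA : 0 < d * (v n / w n + 1) := mul_pos hd (by linarith [div_pos hv1 hw1])
        have hf := hψrec (n + 1) hn2 hnM ystar
        have hf' := hψ'rec (n + 1) hn2 hnM ystar'
        simp only [Nat.add_sub_cancel] at hf hf'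
        rw [hSe, hle, hme] at hf'
        have e1 : d * (v n / w n + 1) * ystar =
            ψ n ystar * (u n * (S (n + 1) - lam (n + 1) * ystar - mu (n + 1) * ψ (n + 1) ystar)) :=
          (div_eq_iff (mul_pos hu1 hD).ne').mp hf.symm
        have e2 : d * (v n / w n + 1) * ystar' =
            ψ' n ystar' * (u n * (S (n + 1) - lam (n + 1) * ystar' -
              mu (n + 1) * ψ' (n + 1) ystar')) :=
          (div_eq_iff (mul_pos hu1 hD').ne').mp hf'.symm
        have hDD' : S (n + 1) - lam (n + 1) * ystar' - mu (n + 1) * ψ' (n + 1) ystar' <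
            S (n + 1) - lam (n + 1) * ystar - mu (n + 1) * ψ (n + 1) ystar := by
          nlinarith [mul_pos hA (sub_pos.mpr hyslt), mul_pos hψ'pos hu1,
            mul_pos (mul_pos hu1 hD) (sub_pos.mpr hprev)]
        have hlamn := hlam (n + 1) (by omega) hnM
        have hmun := hmu (n + 1) (by omega) hnM
        nlinarith [mul_pos hlamn (sub_pos.mpr hyslt), hmun]
  refine ⟨?_, part2⟩
  intro m hm₀m hmM2
  have hm1 : (1:ℕ) ≤ m := le_trans hm₀ hm₀m
  rw [eqHigh m hm1 hmM2 hm₀m ystar']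
  exact (hC m hm1 hmM2).2.1 ystar' ystar hys0' hyslt
    (le_of_lt (lt_of_lt_of_le hysξ (chain (m - 1) (by omega))))
end

section
/- For every integer m with 1 ≤ m ≤ M−1, every ε with 0 < ε < 1, and every y with 0 < y ≤ ξ_0, one has ψ_m(ε y) < ε ψ_m(y). -/
open Filter Set Topology

set_option maxHeartbeats 1000000 in
theorem stmt10
    (M : ℕ) (hM : 2 ≤ M)
    (d : ℝ) (hd : 0 < d)
    (u v w : ℕ → ℝ)
    (hu : ∀ m, 1 ≤ m → m ≤ M - 1 → 0 < u m)
    (hv : ∀ m, 1 ≤ m → m ≤ M - 1 → 0 < v m)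
    (hw : ∀ m, 1 ≤ m → m ≤ M - 1 → 0 < w m)
    (S lam mu : ℕ → ℝ)
    (hS : ∀ m, 1 ≤ m → m ≤ M → 0 < S m)
    (hlam : ∀ m, 1 ≤ m → m ≤ M → 0 < lam m)
    (hmu : ∀ m, 1 ≤ m → m ≤ M → 0 < mu m)
    (ψ : ℕ → ℝ → ℝ)
    (hψM : ∀ y, ψ M y = y)
    (hψrec : ∀ m, 2 ≤ m → m ≤ M → ∀ y,
      ψ (m - 1) y = d * (v (m - 1) / w (m - 1) + 1) * y /
        (u (m - 1) * (S m - lam m * y - mu m * ψ m y)))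
    (hψ0 : ∀ y, ψ 0 y = d * y / (S 1 - lam 1 * y - mu 1 * ψ 1 y))
    (ξ : ℕ → ℝ)
    (hξpos : ∀ m, 0 ≤ m → m ≤ M - 1 → 0 < ξ m)
    (hξlt : ∀ m, 0 ≤ m → m + 1 ≤ M - 1 → ξ m < ξ (m + 1))
    (hξzero : ∀ m, 0 ≤ m → m ≤ M - 1 →
      S (m + 1) - lam (m + 1) * ξ m - mu (m + 1) * ψ (m + 1) (ξ m) = 0)
    (hξuniq : ∀ m, 0 ≤ m → m ≤ M - 1 → ∀ y, 0 < y → (m + 1 ≤ M - 1 → y < ξ (m + 1)) →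
      S (m + 1) - lam (m + 1) * y - mu (m + 1) * ψ (m + 1) y = 0 → y = ξ m) :
    ∀ m, 1 ≤ m → m ≤ M - 1 → ∀ ε : ℝ, 0 < ε → ε < 1 →
      ∀ y : ℝ, 0 < y → y ≤ ξ 0 → ψ m (ε * y) < ε * ψ m y := by
  -- monotonicity of ξ
  have hximono : ∀ b, b ≤ M - 1 → ∀ a, a ≤ b → ξ a ≤ ξ b := by
    intro b
    induction b with
    | zero =>
      intro _ a ha
      have : a = 0 := Nat.le_zero.mp ha
      simp [this]
    | succ b ih =>
      intro hb a ha
      rcases Nat.lt_succ_iff_lt_or_eq.mp (Nat.lt_succ_of_le ha) with h | h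
      · have h1 : ξ a ≤ ξ b := ih (by omega) a (by omega)
        have h2 : ξ b < ξ (b + 1) := hξlt b (Nat.zero_le _) hb
        linarith
      · simp [h]
  have key : ∀ k m, 1 ≤ m → m + k = M →
      ((∀ y1 y2 : ℝ, 0 < y1 → y1 < y2 → y2 ≤ ξ (m - 1) → ψ m y1 < ψ m y2) ∧
       (∀ y : ℝ, 0 < y → y ≤ ξ (m - 1) → 0 < ψ m y) ∧
       (∀ ε : ℝ, 0 < ε → ε < 1 → ∀ y : ℝ, 0 < y → y ≤ ξ 0 →
         ψ m (ε * y) ≤ ε * ψ m y ∧ (m < M → ψ m (ε * y) < ε * ψ m y))) := by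
    intro k
    induction k with
    | zero =>
      intro m hm1 hmM
      have hmM' : m = M := by omega
      subst hmM'
      refine ⟨?_, ?_, ?_⟩
      · intro y1 y2 _ h12 _
        rw [hψM, hψM]; exact h12
      · intro y hy _
        rw [hψM]; exact hy
      · intro ε hε0 hε1 y hy _
        rw [hψM, hψM]
        exact ⟨le_refl _, fun h => absurd h (lt_irrefl _)⟩
    | succ k ih =>
      intro m hm1 hmM
      have hm1M : m + 1 ≤ M := by omega
      have hmle : m ≤ M - 1 := by omega
      obtain ⟨mono1, pos1, sub1⟩ := ih (m + 1) (by omega) (by omega)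
      simp only [Nat.add_sub_cancel] at mono1 pos1
      have hrec := hψrec (m + 1) (by omega) hm1M
      simp only [Nat.add_sub_cancel] at hrec
      have hlam' : 0 < lam (m + 1) := hlam (m + 1) (by omega) hm1M
      have hmu' : 0 < mu (m + 1) := hmu (m + 1) (by omega) hm1M
      have hu' : 0 < u m := hu m hm1 hmle
      have hc : 0 < d * (v m / w m + 1) := by
        have := hv m hm1 hmle
        have := hw m hm1 hmle
        positivity
      -- positivity of the denominator
      have Fpos : ∀ y : ℝ, 0 < y → y < ξ m →
          0 < S (m + 1) - lam (m + 1) * y - mu (m + 1) * ψ (m + 1) y := by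
        intro y hy hylt
        have hz := hξzero m (Nat.zero_le _) hmle
        have hmono := mono1 y (ξ m) hy hylt (le_refl _)
        nlinarith
      have hξlt' : ξ (m - 1) < ξ m := by
        have := hξlt (m - 1) (Nat.zero_le _) (by omega)
        have he : m - 1 + 1 = m := by omega
        rwa [he] at this
      refine ⟨?_, ?_, ?_⟩
      · -- monotonicity
        intro y1 y2 h1 h12 h2
        have hy2m : y2 < ξ m := lt_of_le_of_lt h2 hξlt'
        have hy1m : y1 < ξ m := lt_trans h12 hy2m
        have hA1 := Fpos y1 h1 hy1m
        have hA2 := Fpos y2 (lt_trans h1 h12) hy2m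
        have hψm := mono1 y1 y2 h1 h12 (le_of_lt hy2m)
        have hA21 : S (m + 1) - lam (m + 1) * y2 - mu (m + 1) * ψ (m + 1) y2 <
            S (m + 1) - lam (m + 1) * y1 - mu (m + 1) * ψ (m + 1) y1 := by
          nlinarith [mul_lt_mul_of_pos_left h12 hlam', mul_lt_mul_of_pos_left hψm hmu']
        have hy12A : y1 * (S (m + 1) - lam (m + 1) * y2 - mu (m + 1) * ψ (m + 1) y2) <
            y2 * (S (m + 1) - lam (m + 1) * y1 - mu (m + 1) * ψ (m + 1) y1) := by
          nlinarith [mul_lt_mul_of_pos_right h12 hA2,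
            mul_lt_mul_of_pos_left hA21 (lt_trans h1 h12)]
        rw [hrec y1, hrec y2, div_lt_div_iff₀ (by positivity) (by positivity)]
        nlinarith [mul_lt_mul_of_pos_left hy12A (mul_pos hc hu')]
      · -- positivity
        intro y hy hyle
        rw [hrec y]
        exact div_pos (mul_pos hc hy) (mul_pos hu' (Fpos y hy (lt_of_le_of_lt hyle hξlt')))
      · -- sublinearity
        intro ε hε0 hε1 y hy hyξ0
        have hξ0m1 : ξ 0 ≤ ξ (m - 1) := hximono (m - 1) (by omega) 0 (Nat.zero_le _)
        have hym : y < ξ m := lt_of_le_of_lt (le_trans hyξ0 hξ0m1) hξlt'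
        have hεy : 0 < ε * y := mul_pos hε0 hy
        have hεym : ε * y < ξ m := by nlinarith
        have hA := Fpos y hy hym
        have hAε := Fpos (ε * y) hεy hεym
        have hψpos := pos1 y hy (le_of_lt hym)
        have hsub := (sub1 ε hε0 hε1 y hy hyξ0).1
        have hAlt : S (m + 1) - lam (m + 1) * y - mu (m + 1) * ψ (m + 1) y <
            S (m + 1) - lam (m + 1) * (ε * y) - mu (m + 1) * ψ (m + 1) (ε * y) := by
          have h1 : ε * y < y := by nlinarith
          have h2 : ε * ψ (m + 1) y < ψ (m + 1) y := by nlinarith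
          nlinarith [mul_lt_mul_of_pos_left h1 hlam',
            mul_le_mul_of_nonneg_left hsub (le_of_lt hmu'),
            mul_lt_mul_of_pos_left h2 hmu']
        have hmain : ψ m (ε * y) < ε * ψ m y := by
          rw [hrec (ε * y), hrec y, ← mul_div_assoc,
            div_lt_div_iff₀ (by positivity) (by positivity)]
          have hkey := mul_lt_mul_of_pos_left hAlt
            (show (0:ℝ) < d * (v m / w m + 1) * u m * (ε * y) by positivity)
          nlinarith [hkey]
        exact ⟨le_of_lt hmain, fun _ => hmain⟩
  intro m hm1 hmM ε hε0 hε1 y hy hyξ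
  obtain ⟨_, _, sub⟩ := key (M - m) m hm1 (by omega)
  exact (sub ε hε0 hε1 y hy hyξ).2 (by omega)
end

section
/- For every integer m with 1 ≤ m ≤ M−1 and every ε with 0 < ε < 1, one has c_{M,ε} < c_{m,ε}; that is, ψ_0(ε ξ_0) < ψ_0(ψ_m^{-1}(ε ψ_m(ξ_0))). In other words, the normalized stimulus-response curve for the bottom layer is shifted to the left of the normalized stimulus-response curves of all other layers. -/
open Filter Set Topology

theorem stmt11
    (M : ℕ) (hM : 2 ≤ M)
    (d : ℝ) (hd : 0 < d)
    (u v w : ℕ → ℝ)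
    (hu : ∀ m, 1 ≤ m → m ≤ M - 1 → 0 < u m)
    (hv : ∀ m, 1 ≤ m → m ≤ M - 1 → 0 < v m)
    (hw : ∀ m, 1 ≤ m → m ≤ M - 1 → 0 < w m)
    (S lam mu : ℕ → ℝ)
    (hS : ∀ m, 1 ≤ m → m ≤ M → 0 < S m)
    (hlam : ∀ m, 1 ≤ m → m ≤ M → 0 < lam m)
    (hmu : ∀ m, 1 ≤ m → m ≤ M → 0 < mu m)
    (ψ : ℕ → ℝ → ℝ)
    (hψM : ∀ y, ψ M y = y)
    (hψrec : ∀ m, 2 ≤ m → m ≤ M → ∀ y,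
      ψ (m - 1) y = d * (v (m - 1) / w (m - 1) + 1) * y /
        (u (m - 1) * (S m - lam m * y - mu m * ψ m y)))
    (hψ0 : ∀ y, ψ 0 y = d * y / (S 1 - lam 1 * y - mu 1 * ψ 1 y))
    (ξ : ℕ → ℝ)
    (hξpos : ∀ m, 0 ≤ m → m ≤ M - 1 → 0 < ξ m)
    (hξlt : ∀ m, 0 ≤ m → m + 1 ≤ M - 1 → ξ m < ξ (m + 1))
    (hξzero : ∀ m, 0 ≤ m → m ≤ M - 1 →
      S (m + 1) - lam (m + 1) * ξ m - mu (m + 1) * ψ (m + 1) (ξ m) = 0)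
    (hξuniq : ∀ m, 0 ≤ m → m ≤ M - 1 → ∀ y, 0 < y → (m + 1 ≤ M - 1 → y < ξ (m + 1)) →
      S (m + 1) - lam (m + 1) * y - mu (m + 1) * ψ (m + 1) y = 0 → y = ξ m)
    (ψinv : ℕ → ℝ → ℝ)
    (hinv : ∀ m, 1 ≤ m → m ≤ M - 1 →
      (∀ y, 0 ≤ y → y < ξ m → ψinv m (ψ m y) = y) ∧
      (∀ x, 0 ≤ x → ψ m (ψinv m x) = x ∧ ψinv m x ∈ Set.Ico 0 (ξ m))) :
    ∀ m, 1 ≤ m → m ≤ M - 1 → ∀ ε : ℝ, 0 < ε → ε < 1 →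
      ψ 0 (ε * ξ 0) < ψ 0 (ψinv m (ε * ψ m (ξ 0))) := by
  intro m hm1 hm2 ε hε0 hε1
  have hξ0 : 0 < ξ 0 := hξpos 0 (le_refl _) (by omega)
  -- ξ 0 < ξ n for 1 ≤ n ≤ M-1
  have hξ0m : ∀ n, 1 ≤ n → n ≤ M - 1 → ξ 0 < ξ n := by
    intro n hn1 hn2
    induction n with
    | zero => omega
    | succ p ih =>
      rcases Nat.lt_or_ge 0 p with h | h
      · have h1 := ih (by omega) (by omega)
        have h2 := hξlt p (by omega) (by omega)
        linarith
      · have hp : p = 0 := by omega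
        subst hp
        exact hξlt 0 (le_refl _) (by omega)
  -- strict monotonicity of ψ n on the relevant interval, downward induction
  have hmonoAll : ∀ k n, n + k = M → 1 ≤ n →
      ∀ y z, 0 ≤ y → y < z → (n + 1 ≤ M → z < ξ n) → ψ n y < ψ n z := by
    intro k
    induction k with
    | zero =>
      intro n hnk _ y z _ hyz _
      have hnM : n = M := by omega
      subst hnM
      rw [hψM, hψM]; exact hyz
    | succ k ih =>
      intro n hnk hn1 y z hy hyz hz
      have hnM : n + 1 ≤ M := by omega
      have hzξ : z < ξ n := hz hnM
      have hξn : n ≤ M - 1 := by omega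
      have ihm := ih (n+1) (by omega) (by omega)
      have hl := hlam (n+1) (by omega) hnM
      have hmu' := hmu (n+1) (by omega) hnM
      have hDpos : ∀ t, 0 ≤ t → t < ξ n →
          0 < S (n+1) - lam (n+1) * t - mu (n+1) * ψ (n+1) t := by
        intro t ht htξ
        have h0 := hξzero n (by omega) hξn
        have hψlt : ψ (n+1) t < ψ (n+1) (ξ n) := by
          apply ihm t (ξ n) ht htξ
          intro h
          exact hξlt n (by omega) (by omega)
        nlinarith
      have hz0 : 0 < z := lt_of_le_of_lt hy hyz
      have hDy := hDpos y hy (lt_trans hyz hzξ)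
      have hDz := hDpos z hz0.le hzξ
      have hDlt : S (n+1) - lam (n+1) * z - mu (n+1) * ψ (n+1) z
          < S (n+1) - lam (n+1) * y - mu (n+1) * ψ (n+1) y := by
        have hψlt : ψ (n+1) y < ψ (n+1) z := by
          apply ihm y z hy hyz
          intro h
          have := hξlt n (by omega) (by omega)
          linarith
        nlinarith
      have hry := hψrec (n+1) (by omega) hnM y
      have hrz := hψrec (n+1) (by omega) hnM z
      simp only [Nat.add_sub_cancel] at hry hrz
      rw [hry, hrz]
      have hvm := hv n hn1 hξn
      have hwm := hw n hn1 hξn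
      have hum := hu n hn1 hξn
      have hC : 0 < d * (v n / w n + 1) := by positivity
      rw [div_lt_div_iff₀ (by positivity) (by positivity)]
      have e1 : d * (v n / w n + 1) * y * (u n * (S (n+1) - lam (n+1) * z - mu (n+1) * ψ (n+1) z))
          ≤ d * (v n / w n + 1) * z * (u n * (S (n+1) - lam (n+1) * z - mu (n+1) * ψ (n+1) z)) := by
        apply mul_le_mul_of_nonneg_right _ (by positivity)
        exact mul_le_mul_of_nonneg_left hyz.le hC.le
      have e2 : d * (v n / w n + 1) * z * (u n * (S (n+1) - lam (n+1) * z - mu (n+1) * ψ (n+1) z))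
          < d * (v n / w n + 1) * z * (u n * (S (n+1) - lam (n+1) * y - mu (n+1) * ψ (n+1) y)) := by
        apply mul_lt_mul_of_pos_left _ (by positivity)
        exact mul_lt_mul_of_pos_left hDlt hum
      linarith
  -- positivity of denominators
  have hposD : ∀ n, n ≤ M - 1 → ∀ t, 0 ≤ t → t < ξ n →
      0 < S (n+1) - lam (n+1) * t - mu (n+1) * ψ (n+1) t := by
    intro n hn t ht htξ
    have ihm := hmonoAll (M - (n+1)) (n+1) (by omega) (by omega)
    have h0 := hξzero n (by omega) hn
    have hψlt : ψ (n+1) t < ψ (n+1) (ξ n) := by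
      apply ihm t (ξ n) ht htξ
      intro h
      exact hξlt n (by omega) (by omega)
    have hl := hlam (n+1) (by omega) (by omega)
    have hmu' := hmu (n+1) (by omega) (by omega)
    nlinarith
  -- positivity of ψ n (ξ 0)
  have hψξ0pos : ∀ n, 1 ≤ n → n ≤ M → 0 < ψ n (ξ 0) := by
    intro n hn1 hnM
    rcases eq_or_lt_of_le hnM with h | h
    · subst h; rw [hψM]; exact hξ0
    · have hn2 : n ≤ M - 1 := by omega
      have hr := hψrec (n+1) (by omega) (by omega) (ξ 0)
      simp only [Nat.add_sub_cancel] at hr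
      rw [hr]
      have hD := hposD n hn2 (ξ 0) hξ0.le (hξ0m n hn1 hn2)
      have hvm := hv n hn1 hn2
      have hwm := hw n hn1 hn2
      have hum := hu n hn1 hn2
      positivity
  -- key sublinearity
  have hkeyAll : ∀ k n, n + k = M → 1 ≤ n →
      ψ n (ε * ξ 0) ≤ ε * ψ n (ξ 0) ∧
      (n + 1 ≤ M → ψ n (ε * ξ 0) < ε * ψ n (ξ 0)) := by
    intro k
    induction k with
    | zero =>
      intro n hnk _
      have hnM : n = M := by omega
      subst hnM
      rw [hψM, hψM]
      exact ⟨le_refl _, fun h => absurd h (by omega)⟩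
    | succ k ih =>
      intro n hnk hn1
      have hnM : n + 1 ≤ M := by omega
      have hn2 : n ≤ M - 1 := by omega
      have ihk := (ih (n+1) (by omega) (by omega)).1
      have hψp := hψξ0pos (n+1) (by omega) hnM
      have hl := hlam (n+1) (by omega) hnM
      have hmu' := hmu (n+1) (by omega) hnM
      have hD1 := hposD n hn2 (ξ 0) hξ0.le (hξ0m n hn1 hn2)
      have hDlt : S (n+1) - lam (n+1) * ξ 0 - mu (n+1) * ψ (n+1) (ξ 0)
          < S (n+1) - lam (n+1) * (ε * ξ 0) - mu (n+1) * ψ (n+1) (ε * ξ 0) := by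
        nlinarith [mul_pos hl hξ0, mul_pos hmu' hψp]
      have hDε : 0 < S (n+1) - lam (n+1) * (ε * ξ 0) - mu (n+1) * ψ (n+1) (ε * ξ 0) :=
        lt_trans hD1 hDlt
      have hr1 := hψrec (n+1) (by omega) hnM (ε * ξ 0)
      have hr2 := hψrec (n+1) (by omega) hnM (ξ 0)
      simp only [Nat.add_sub_cancel] at hr1 hr2
      have hvm := hv n hn1 hn2
      have hwm := hw n hn1 hn2
      have hum := hu n hn1 hn2
      have hC : 0 < d * (v n / w n + 1) := by positivity
      have hstrict : ψ n (ε * ξ 0) < ε * ψ n (ξ 0) := by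
        rw [hr1, hr2, ← mul_div_assoc]
        rw [div_lt_div_iff₀ (by positivity) (by positivity)]
        have e2 : ε * (d * (v n / w n + 1) * ξ 0) *
              (u n * (S (n+1) - lam (n+1) * ξ 0 - mu (n+1) * ψ (n+1) (ξ 0)))
            < ε * (d * (v n / w n + 1) * ξ 0) *
              (u n * (S (n+1) - lam (n+1) * (ε * ξ 0) - mu (n+1) * ψ (n+1) (ε * ξ 0))) := by
          apply mul_lt_mul_of_pos_left _ (by positivity)
          exact mul_lt_mul_of_pos_left hDlt hum
        nlinarith [e2]
      exact ⟨hstrict.le, fun _ => hstrict⟩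
  -- apply to our m
  have hψmξ0 : 0 < ψ m (ξ 0) := hψξ0pos m hm1 (by omega)
  obtain ⟨hinv1, hinv2⟩ := hinv m hm1 hm2
  obtain ⟨hxval, hxmem⟩ := hinv2 (ε * ψ m (ξ 0)) (by positivity)
  have hkey : ψ m (ε * ξ 0) < ε * ψ m (ξ 0) :=
    (hkeyAll (M - m) m (by omega) hm1).2 (by omega)
  have hmono := hmonoAll (M - m) m (by omega) hm1
  have hξ0ξm := hξ0m m hm1 hm2
  have ha0 : 0 < ε * ξ 0 := by positivity
  have haξ0 : ε * ξ 0 < ξ 0 := by nlinarith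
  have h1 : ε * ξ 0 < ψinv m (ε * ψ m (ξ 0)) := by
    by_contra h
    push_neg at h
    have hle : ψ m (ψinv m (ε * ψ m (ξ 0))) ≤ ψ m (ε * ξ 0) := by
      rcases eq_or_lt_of_le h with he | hl
      · exact le_of_eq (congrArg (ψ m) he)
      · exact (hmono _ _ hxmem.1 hl (fun _ => lt_trans haξ0 hξ0ξm)).le
    rw [hxval] at hle
    linarith
  have h2 : ψinv m (ε * ψ m (ξ 0)) < ξ 0 := by
    by_contra h
    push_neg at h
    have hle : ψ m (ξ 0) ≤ ψ m (ψinv m (ε * ψ m (ξ 0))) := by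
      rcases eq_or_lt_of_le h with he | hl
      · exact le_of_eq (congrArg (ψ m) he)
      · exact (hmono _ _ hξ0.le hl (fun _ => hxmem.2)).le
    rw [hxval] at hle
    nlinarith
  -- final comparison via ψ 0
  have hD0 : ∀ t, 0 ≤ t → t < ξ 0 → 0 < S 1 - lam 1 * t - mu 1 * ψ 1 t := by
    intro t ht htξ
    exact hposD 0 (by omega) t ht htξ
  have hDa := hD0 (ε * ξ 0) ha0.le haξ0
  have hDb := hD0 (ψinv m (ε * ψ m (ξ 0))) hxmem.1 h2
  have hψ1lt : ψ 1 (ε * ξ 0) < ψ 1 (ψinv m (ε * ψ m (ξ 0))) := by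
    apply hmonoAll (M - 1) 1 (by omega) (le_refl _) _ _ ha0.le h1
    intro _
    exact lt_trans h2 (hξlt 0 (le_refl _) (by omega))
  have hl1 := hlam 1 (le_refl _) (by omega)
  have hmu1 := hmu 1 (le_refl _) (by omega)
  have hDab : S 1 - lam 1 * (ψinv m (ε * ψ m (ξ 0))) - mu 1 * ψ 1 (ψinv m (ε * ψ m (ξ 0)))
      < S 1 - lam 1 * (ε * ξ 0) - mu 1 * ψ 1 (ε * ξ 0) := by
    nlinarith
  rw [hψ0, hψ0]
  rw [div_lt_div_iff₀ hDa hDb]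
  have hx0 : 0 < ψinv m (ε * ψ m (ξ 0)) := lt_trans ha0 h1
  have e1 : d * (ε * ξ 0) * (S 1 - lam 1 * (ψinv m (ε * ψ m (ξ 0))) - mu 1 * ψ 1 (ψinv m (ε * ψ m (ξ 0))))
      ≤ d * (ψinv m (ε * ψ m (ξ 0))) * (S 1 - lam 1 * (ψinv m (ε * ψ m (ξ 0))) - mu 1 * ψ 1 (ψinv m (ε * ψ m (ξ 0)))) := by
    apply mul_le_mul_of_nonneg_right _ hDb.le
    exact mul_le_mul_of_nonneg_left h1.le hd.le
  have e2 : d * (ψinv m (ε * ψ m (ξ 0))) * (S 1 - lam 1 * (ψinv m (ε * ψ m (ξ 0))) - mu 1 * ψ 1 (ψinv m (ε * ψ m (ξ 0))))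
      < d * (ψinv m (ε * ψ m (ξ 0))) * (S 1 - lam 1 * (ε * ξ 0) - mu 1 * ψ 1 (ε * ξ 0)) := by
    apply mul_lt_mul_of_pos_left hDab (by positivity)
  linarith
end

section
/- For all ε, δ with 0 < ε < δ < 1, the response coefficient of the bottom layer satisfies χ_{M,ε,δ} = ψ_0(ε ξ_0)/ψ_0(δ ξ_0) < ε/δ. In particular, taking ε = 0.1 and δ = 0.9, the degree of ultrasensitivity of the bottom layer of any phosphorelay is bounded by 1/9, independently of all reaction constants and total amounts. -/
open Filter Set Topology

theorem stmt12
    (M : ℕ) (hM : 2 ≤ M)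
    (d : ℝ) (hd : 0 < d)
    (u v w : ℕ → ℝ)
    (hu : ∀ m, 1 ≤ m → m ≤ M - 1 → 0 < u m)
    (hv : ∀ m, 1 ≤ m → m ≤ M - 1 → 0 < v m)
    (hw : ∀ m, 1 ≤ m → m ≤ M - 1 → 0 < w m)
    (S lam mu : ℕ → ℝ)
    (hS : ∀ m, 1 ≤ m → m ≤ M → 0 < S m)
    (hlam : ∀ m, 1 ≤ m → m ≤ M → 0 < lam m)
    (hmu : ∀ m, 1 ≤ m → m ≤ M → 0 < mu m)
    (ψ : ℕ → ℝ → ℝ)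
    (hψM : ∀ y, ψ M y = y)
    (hψrec : ∀ m, 2 ≤ m → m ≤ M → ∀ y,
      ψ (m - 1) y = d * (v (m - 1) / w (m - 1) + 1) * y /
        (u (m - 1) * (S m - lam m * y - mu m * ψ m y)))
    (hψ0 : ∀ y, ψ 0 y = d * y / (S 1 - lam 1 * y - mu 1 * ψ 1 y))
    (ξ : ℕ → ℝ)
    (hξpos : ∀ m, 0 ≤ m → m ≤ M - 1 → 0 < ξ m)
    (hξlt : ∀ m, 0 ≤ m → m + 1 ≤ M - 1 → ξ m < ξ (m + 1))
    (hξzero : ∀ m, 0 ≤ m → m ≤ M - 1 →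
      S (m + 1) - lam (m + 1) * ξ m - mu (m + 1) * ψ (m + 1) (ξ m) = 0)
    (hξuniq : ∀ m, 0 ≤ m → m ≤ M - 1 → ∀ y, 0 < y → (m + 1 ≤ M - 1 → y < ξ (m + 1)) →
      S (m + 1) - lam (m + 1) * y - mu (m + 1) * ψ (m + 1) y = 0 → y = ξ m) :
    (∀ ε δ : ℝ, 0 < ε → ε < δ → δ < 1 →
      ψ 0 (ε * ξ 0) / ψ 0 (δ * ξ 0) < ε / δ) ∧
    ψ 0 (0.1 * ξ 0) / ψ 0 (0.9 * ξ 0) < 1 / 9 := by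
  -- If ψ m is positive & strictly increasing on (0, ξ m), then the denominator
  -- S m - lam m * y - mu m * ψ m y is positive on (0, ξ (m-1)).
  have Gpos : ∀ m, 1 ≤ m → m ≤ M →
      (∀ y, 0 < y → (m < M → y < ξ m) →
        0 < ψ m y ∧ ∀ z, y < z → (m < M → z < ξ m) → ψ m y < ψ m z) →
      ∀ y, 0 < y → y < ξ (m - 1) → 0 < S m - lam m * y - mu m * ψ m y := by
    intro m h1 hmM hP y hy hylt
    have hz := hξzero (m - 1) (Nat.zero_le _) (by omega)
    rw [show m - 1 + 1 = m from by omega] at hz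
    have hξm1pos : 0 < ξ (m - 1) := hξpos _ (Nat.zero_le _) (by omega)
    have hdomy : m < M → y < ξ m := by
      intro hmM'
      have h := hξlt (m - 1) (Nat.zero_le _) (by omega)
      rw [show m - 1 + 1 = m from by omega] at h
      linarith
    have hdomξ : m < M → ξ (m - 1) < ξ m := by
      intro hmM'
      have h := hξlt (m - 1) (Nat.zero_le _) (by omega)
      rw [show m - 1 + 1 = m from by omega] at h
      exact h
    have hmono : ψ m y < ψ m (ξ (m - 1)) :=
      (hP y hy hdomy).2 (ξ (m - 1)) hylt hdomξ
    have hlamm := hlam m h1 hmM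
    have hmum := hmu m h1 hmM
    nlinarith [mul_lt_mul_of_pos_left hylt hlamm,
      mul_lt_mul_of_pos_left hmono hmum]
  -- downward induction: ψ m is positive & strictly increasing on (0, ξ m)
  have key : ∀ k m, m + k = M → 1 ≤ m →
      ∀ y, 0 < y → (m < M → y < ξ m) →
        0 < ψ m y ∧ ∀ z, y < z → (m < M → z < ξ m) → ψ m y < ψ m z := by
    intro k
    induction k with
    | zero =>
      intro m hm _ y hy _
      have hmM : m = M := by omega
      subst hmM
      rw [hψM]
      exact ⟨hy, fun z hz _ => by rw [hψM]; exact hz⟩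
    | succ k ih =>
      intro m hmk hm1 y hy hdom
      have hmM : m < M := by omega
      have hIH := ih (m + 1) (by omega) (by omega)
      have hG : ∀ x, 0 < x → x < ξ m →
          0 < S (m + 1) - lam (m + 1) * x - mu (m + 1) * ψ (m + 1) x := by
        have := Gpos (m + 1) (by omega) (by omega) hIH
        simpa using this
      have hform := hψrec (m + 1) (by omega) (by omega)
      simp only [Nat.add_sub_cancel] at hform
      have hum := hu m hm1 (by omega)
      have hvm := hv m hm1 (by omega)
      have hwm := hw m hm1 (by omega)
      have hC : 0 < d * (v m / w m + 1) := by positivity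
      have hyξ : y < ξ m := hdom hmM
      have hGy := hG y hy hyξ
      constructor
      · rw [hform]
        positivity
      · intro z hyz hzdom
        have hzξ : z < ξ m := hzdom hmM
        have hGz := hG z (lt_trans hy hyz) hzξ
        have hmonoψ : ψ (m + 1) y < ψ (m + 1) z := by
          have hsub : m + 1 < M → z < ξ (m + 1) := by
            intro h
            have := hξlt m (Nat.zero_le _) (by omega)
            linarith
          have hsuby : m + 1 < M → y < ξ (m + 1) := by
            intro h
            have := hξlt m (Nat.zero_le _) (by omega)
            linarith
          exact (hIH y hy hsuby).2 z hyz hsub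
        have hGzy : S (m + 1) - lam (m + 1) * z - mu (m + 1) * ψ (m + 1) z
            < S (m + 1) - lam (m + 1) * y - mu (m + 1) * ψ (m + 1) y := by
          have hlamm := hlam (m + 1) (by omega) (by omega)
          have hmum := hmu (m + 1) (by omega) (by omega)
          nlinarith
        rw [hform, hform]
        rw [div_lt_div_iff₀ (by positivity) (by positivity)]
        have hkey : y * (S (m + 1) - lam (m + 1) * z - mu (m + 1) * ψ (m + 1) z)
            < z * (S (m + 1) - lam (m + 1) * y - mu (m + 1) * ψ (m + 1) y) := by
          nlinarith
        nlinarith [mul_lt_mul_of_pos_left hkey (mul_pos hC hum)]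
  -- properties of ψ 1 and of F y = S 1 - lam 1 * y - mu 1 * ψ 1 y on (0, ξ 0)
  have hP1 := key (M - 1) 1 (by omega) le_rfl
  have hF : ∀ y, 0 < y → y < ξ 0 → 0 < S 1 - lam 1 * y - mu 1 * ψ 1 y := by
    have := Gpos 1 le_rfl (by omega) hP1
    simpa using this
  have hξ0 : 0 < ξ 0 := hξpos 0 le_rfl (by omega)
  have main : ∀ ε δ : ℝ, 0 < ε → ε < δ → δ < 1 →
      ψ 0 (ε * ξ 0) / ψ 0 (δ * ξ 0) < ε / δ := by
    intro ε δ hε hεδ hδ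
    have hδ0 : 0 < δ := lt_trans hε hεδ
    have hx : 0 < ε * ξ 0 := by positivity
    have hz : 0 < δ * ξ 0 := by positivity
    have hxξ : ε * ξ 0 < ξ 0 := by nlinarith
    have hzξ : δ * ξ 0 < ξ 0 := by nlinarith
    have hFx := hF _ hx hxξ
    have hFz := hF _ hz hzξ
    have hψmono : ψ 1 (ε * ξ 0) < ψ 1 (δ * ξ 0) := by
      have hdom : ∀ t : ℝ, t < ξ 0 → (1 < M → t < ξ 1) := by
        intro t ht h
        have := hξlt 0 le_rfl (by omega)
        linarith
      exact (hP1 _ hx (hdom _ hxξ)).2 _ (by nlinarith) (hdom _ hzξ)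
    have hFlt : S 1 - lam 1 * (δ * ξ 0) - mu 1 * ψ 1 (δ * ξ 0)
        < S 1 - lam 1 * (ε * ξ 0) - mu 1 * ψ 1 (ε * ξ 0) := by
      have hlam1 := hlam 1 le_rfl (by omega)
      have hmu1 := hmu 1 le_rfl (by omega)
      have h1 : ε * ξ 0 < δ * ξ 0 := by nlinarith
      nlinarith [mul_lt_mul_of_pos_left h1 hlam1,
        mul_lt_mul_of_pos_left hψmono hmu1]
    have hexp : ψ 0 (ε * ξ 0) / ψ 0 (δ * ξ 0) =
        (ε / δ) * ((S 1 - lam 1 * (δ * ξ 0) - mu 1 * ψ 1 (δ * ξ 0)) /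
          (S 1 - lam 1 * (ε * ξ 0) - mu 1 * ψ 1 (ε * ξ 0))) := by
      rw [hψ0, hψ0]
      field_simp
    rw [hexp]
    calc (ε / δ) * ((S 1 - lam 1 * (δ * ξ 0) - mu 1 * ψ 1 (δ * ξ 0)) /
          (S 1 - lam 1 * (ε * ξ 0) - mu 1 * ψ 1 (ε * ξ 0)))
        < (ε / δ) * 1 := by
          apply mul_lt_mul_of_pos_left _ (by positivity)
          rw [div_lt_one hFx]
          exact hFlt
      _ = ε / δ := mul_one _
  refine ⟨main, ?_⟩
  have h := main 0.1 0.9 (by norm_num) (by norm_num) (by norm_num)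
  calc ψ 0 (0.1 * ξ 0) / ψ 0 (0.9 * ξ 0) < 0.1 / 0.9 := h
    _ = 1 / 9 := by norm_num
end

section
/- Viewing the maximal final response as a function ρ_M(T) of the total amount T = S^1_tot in the top layer (i.e. ρ_M(T) is the unique y ∈ [0, ξ_1) with λ_1 y + μ_1 ψ_1(y) = T), the function ρ_M has a (right) derivative at T = 0 equal to u_1 S^2_tot / (λ_1 u_1 S^2_tot + μ_1 d(v_1/w_1 + 1)). -/
open Filter Set Topology

theorem stmt15
    (M : ℕ) (hM : 2 ≤ M)
    (d : ℝ) (hd : 0 < d)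
    (u v w : ℕ → ℝ)
    (hu : ∀ m, 1 ≤ m → m ≤ M - 1 → 0 < u m)
    (hv : ∀ m, 1 ≤ m → m ≤ M - 1 → 0 < v m)
    (hw : ∀ m, 1 ≤ m → m ≤ M - 1 → 0 < w m)
    (S lam mu : ℕ → ℝ)
    (hS : ∀ m, 2 ≤ m → m ≤ M → 0 < S m)
    (hlam : ∀ m, 1 ≤ m → m ≤ M → 0 < lam m)
    (hmu : ∀ m, 1 ≤ m → m ≤ M → 0 < mu m)
    (ψ : ℕ → ℝ → ℝ)
    (hψM : ∀ y, ψ M y = y)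
    (hψrec : ∀ m, 2 ≤ m → m ≤ M → ∀ y,
      ψ (m - 1) y = d * (v (m - 1) / w (m - 1) + 1) * y /
        (u (m - 1) * (S m - lam m * y - mu m * ψ m y)))
    (ξ : ℕ → ℝ)
    (hξpos : ∀ m, 1 ≤ m → m ≤ M - 1 → 0 < ξ m)
    (hξlt : ∀ m, 1 ≤ m → m + 1 ≤ M - 1 → ξ m < ξ (m + 1))
    (hξzero : ∀ m, 1 ≤ m → m ≤ M - 1 →
      S (m + 1) - lam (m + 1) * ξ m - mu (m + 1) * ψ (m + 1) (ξ m) = 0)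
    (hξuniq : ∀ m, 1 ≤ m → m ≤ M - 1 → ∀ y, 0 < y → (m + 1 ≤ M - 1 → y < ξ (m + 1)) →
      S (m + 1) - lam (m + 1) * y - mu (m + 1) * ψ (m + 1) y = 0 → y = ξ m)
    (hψprop : ∀ m, 1 ≤ m → m ≤ M →
      ContinuousOn (ψ m) {y : ℝ | 0 ≤ y ∧ (m ≤ M - 1 → y < ξ m)} ∧
      StrictMonoOn (ψ m) {y : ℝ | 0 ≤ y ∧ (m ≤ M - 1 → y < ξ m)} ∧
      (∀ y, 0 ≤ y → (m ≤ M - 1 → y < ξ m) → 0 ≤ ψ m y) ∧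
      ψ m 0 = 0)
    (hψtop : ∀ m, 1 ≤ m → m ≤ M - 1 → Tendsto (ψ m) (𝓝[<] (ξ m)) atTop)
    (ρ : ℝ → ℝ)
    (hρ : ∀ T, 0 ≤ T → ρ T ∈ Set.Ico 0 (ξ 1) ∧ lam 1 * ρ T + mu 1 * ψ 1 (ρ T) = T) :
    HasDerivWithinAt ρ (u 1 * S 2 / (lam 1 * u 1 * S 2 + mu 1 * d * (v 1 / w 1 + 1)))
      (Set.Ici 0) 0 := by
  have h1M1 : 1 ≤ M - 1 := by omega
  have hu1 : 0 < u 1 := hu 1 le_rfl h1M1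
  have hv1 : 0 < v 1 := hv 1 le_rfl h1M1
  have hw1 : 0 < w 1 := hw 1 le_rfl h1M1
  have hlam1 : 0 < lam 1 := hlam 1 le_rfl (by omega)
  have hmu1 : 0 < mu 1 := hmu 1 le_rfl (by omega)
  have hlam2 : 0 < lam 2 := hlam 2 (by omega) hM
  have hmu2 : 0 < mu 2 := hmu 2 (by omega) hM
  have hS2 : 0 < S 2 := hS 2 le_rfl hM
  set K : ℝ := d * (v 1 / w 1 + 1) with hK
  have hKpos : 0 < K := by positivity
  have hξ1 : 0 < ξ 1 := hξpos 1 le_rfl h1M1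
  obtain ⟨hψ1cont, hψ1mono, hψ1nonneg, hψ10⟩ := hψprop 1 le_rfl (by omega)
  obtain ⟨hψ2cont, hψ2mono, hψ2nonneg, hψ20⟩ := hψprop 2 (by omega) hM
  have hrec1 : ∀ y : ℝ, ψ 1 y = K * y / (u 1 * (S 2 - lam 2 * y - mu 2 * ψ 2 y)) := by
    intro y; simpa using hψrec 2 le_rfl hM y
  -- membership in the domain of ψ 2
  have hmem2 : ∀ y : ℝ, 0 ≤ y → y ≤ ξ 1 → y ∈ {y : ℝ | 0 ≤ y ∧ (2 ≤ M - 1 → y < ξ 2)} := by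
    intro y hy hy'
    refine ⟨hy, fun h2 => ?_⟩
    exact lt_of_le_of_lt hy' (hξlt 1 le_rfl (by omega))
  -- positivity of the denominator on [0, ξ 1)
  have hg : ∀ y : ℝ, 0 ≤ y → y < ξ 1 → 0 < S 2 - lam 2 * y - mu 2 * ψ 2 y := by
    intro y hy hy'
    have hz := hξzero 1 le_rfl h1M1
    have hψlt : ψ 2 y ≤ ψ 2 (ξ 1) :=
      (hψ2mono.monotoneOn (hmem2 y hy hy'.le) (hmem2 (ξ 1) hξ1.le le_rfl)) hy'.le
    nlinarith [hz, hy'.le]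
  -- ρ 0 = 0
  have hρ0 : ρ 0 = 0 := by
    obtain ⟨⟨h0le, h0lt⟩, heq⟩ := hρ 0 le_rfl
    by_contra h
    have hpos : 0 < ρ 0 := lt_of_le_of_ne h0le (Ne.symm h)
    have hψnn : 0 ≤ ψ 1 (ρ 0) := hψ1nonneg _ h0le (fun _ => h0lt)
    nlinarith
  -- basic facts for T in the punctured right neighborhood
  have hkey : ∀ T : ℝ, T ∈ Set.Ici (0:ℝ) \ {0} →
      0 < ρ T ∧ lam 1 * ρ T + mu 1 * ψ 1 (ρ T) = T := by
    intro T hT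
    have hT0 : 0 ≤ T := hT.1
    obtain ⟨⟨hle, hlt⟩, heq⟩ := hρ T hT0
    refine ⟨lt_of_le_of_ne hle ?_, heq⟩
    intro h
    apply hT.2
    simp only [Set.mem_singleton_iff]
    rw [← heq, ← h, hψ10]; ring
  -- ρ T → 0 along the filter
  have hLle : 𝓝[Set.Ici (0:ℝ) \ {0}] 0 ≤ 𝓝[Set.Ici (0:ℝ)] 0 :=
    nhdsWithin_mono _ (Set.diff_subset)
  have htendρ : Tendsto ρ (𝓝[Set.Ici (0:ℝ) \ {0}] 0) (𝓝 0) := by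
    have hub : ∀ᶠ T in 𝓝[Set.Ici (0:ℝ) \ {0}] 0, ρ T ≤ T / lam 1 := by
      filter_upwards [self_mem_nhdsWithin] with T hT
      obtain ⟨⟨hle, hlt⟩, heq⟩ := hρ T hT.1
      have hψnn : 0 ≤ ψ 1 (ρ T) := hψ1nonneg _ hle (fun _ => hlt)
      rw [le_div_iff₀ hlam1]
      nlinarith
    have hlb : ∀ᶠ T in 𝓝[Set.Ici (0:ℝ) \ {0}] 0, (0:ℝ) ≤ ρ T := by
      filter_upwards [self_mem_nhdsWithin] with T hT
      exact (hρ T hT.1).1.1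
    have hup : Tendsto (fun T : ℝ => T / lam 1) (𝓝[Set.Ici (0:ℝ) \ {0}] 0) (𝓝 0) := by
      have h0 : Tendsto (fun T : ℝ => T / lam 1) (𝓝 (0:ℝ)) (𝓝 (0 / lam 1)) :=
        tendsto_id.div_const _
      have := h0.mono_left (nhdsWithin_le_nhds (s := Set.Ici (0:ℝ) \ {0}) (a := (0:ℝ)))
      simpa using this
    exact tendsto_of_tendsto_of_tendsto_of_le_of_le' tendsto_const_nhds hup hlb hub
  -- ψ 2 (ρ T) → 0
  have htendψ2 : Tendsto (fun T => ψ 2 (ρ T)) (𝓝[Set.Ici (0:ℝ) \ {0}] 0) (𝓝 0) := by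
    have hmem0 : (0:ℝ) ∈ {y : ℝ | 0 ≤ y ∧ (2 ≤ M - 1 → y < ξ 2)} :=
      hmem2 0 le_rfl hξ1.le
    have hcw : ContinuousWithinAt (ψ 2) {y : ℝ | 0 ≤ y ∧ (2 ≤ M - 1 → y < ξ 2)} 0 :=
      hψ2cont.continuousWithinAt hmem0
    have hρin : Tendsto ρ (𝓝[Set.Ici (0:ℝ) \ {0}] 0)
        (𝓝[{y : ℝ | 0 ≤ y ∧ (2 ≤ M - 1 → y < ξ 2)}] 0) := by
      rw [tendsto_nhdsWithin_iff]
      refine ⟨htendρ, ?_⟩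
      filter_upwards [self_mem_nhdsWithin] with T hT
      obtain ⟨⟨hle, hlt⟩, _⟩ := hρ T hT.1
      exact hmem2 _ hle hlt.le
    have := hcw.tendsto.comp hρin
    rwa [hψ20] at this
  -- g (ρ T) → S 2
  have htendg : Tendsto (fun T => S 2 - lam 2 * ρ T - mu 2 * ψ 2 (ρ T))
      (𝓝[Set.Ici (0:ℝ) \ {0}] 0) (𝓝 (S 2)) := by
    have : Tendsto (fun T => S 2 - lam 2 * ρ T - mu 2 * ψ 2 (ρ T))
        (𝓝[Set.Ici (0:ℝ) \ {0}] 0) (𝓝 (S 2 - lam 2 * 0 - mu 2 * 0)) :=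
      ((tendsto_const_nhds.sub (htendρ.const_mul _)).sub (htendψ2.const_mul _))
    simpa using this
  -- limit of the simplified quotient
  have hdenompos : 0 < lam 1 * u 1 * S 2 + mu 1 * K := by positivity
  have hlim : Tendsto (fun T => u 1 * (S 2 - lam 2 * ρ T - mu 2 * ψ 2 (ρ T)) /
      (lam 1 * u 1 * (S 2 - lam 2 * ρ T - mu 2 * ψ 2 (ρ T)) + mu 1 * K))
      (𝓝[Set.Ici (0:ℝ) \ {0}] 0)
      (𝓝 (u 1 * S 2 / (lam 1 * u 1 * S 2 + mu 1 * K))) := by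
    apply Tendsto.div
    · exact htendg.const_mul _
    · have : Tendsto (fun T => lam 1 * u 1 * (S 2 - lam 2 * ρ T - mu 2 * ψ 2 (ρ T)) + mu 1 * K)
          (𝓝[Set.Ici (0:ℝ) \ {0}] 0) (𝓝 (lam 1 * u 1 * S 2 + mu 1 * K)) :=
        (htendg.const_mul _).add tendsto_const_nhds
      convert this using 2 <;> ring
    · exact ne_of_gt hdenompos
  rw [hasDerivWithinAt_iff_tendsto_slope]
  have : (u 1 * S 2 / (lam 1 * u 1 * S 2 + mu 1 * d * (v 1 / w 1 + 1)))
      = u 1 * S 2 / (lam 1 * u 1 * S 2 + mu 1 * K) := by rw [hK]; ring_nf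
  rw [this]
  refine hlim.congr' ?_
  filter_upwards [self_mem_nhdsWithin] with T hT
  obtain ⟨hρpos, heq⟩ := hkey T hT
  obtain ⟨⟨hle, hlt⟩, _⟩ := hρ T hT.1
  have hG : 0 < S 2 - lam 2 * ρ T - mu 2 * ψ 2 (ρ T) := hg _ hle hlt
  set G := S 2 - lam 2 * ρ T - mu 2 * ψ 2 (ρ T) with hGdef
  have hψ1eq : ψ 1 (ρ T) = K * ρ T / (u 1 * G) := hrec1 (ρ T)
  have hTeq : T = lam 1 * ρ T + mu 1 * (K * ρ T / (u 1 * G)) := by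
    rw [← hψ1eq]; exact heq.symm
  have hu1G : u 1 * G ≠ 0 := by positivity
  have hTval : ρ T * (lam 1 * u 1 * G + mu 1 * K) = u 1 * G * T := by
    conv_rhs => rw [hTeq]
    field_simp
  have hTne : T ≠ 0 := hT.2
  simp only [slope_def_field, hρ0, sub_zero]
  rw [div_eq_div_iff (ne_of_gt (by positivity : (0:ℝ) < lam 1 * u 1 * G + mu 1 * K)) hTne]
  linarith [hTval]
end

section
/- Fix ε, δ with 0 < ε < δ < 1 and for T > 0 set α_m(T) = ψ_m^{-1}(ε ψ_m(ρ_M(T))) / ψ_m^{-1}(δ ψ_m(ρ_M(T))) for 1 ≤ m ≤ M. Then α_M(T) = ε/δ for every T > 0, and for every m with 1 ≤ m ≤ M, α_m(T) → ε/δ as T → 0⁺. -/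
open Filter Set Topology

/-!
Every `ψ_m` is asymptotically linear at `0⁺`, `ψ_m(y) / y → c_m > 0`: `c_M = 1`, and once
`ψ_{m+1}(y) → 0` the recursion gives `c_m = d (v_m / w_m + 1) / (u_m S^{m+1}_tot)`. Hence
`ψ_m⁻¹(x) / x → 1 / c_m`, and since `ψ_m(ρ_M(T)) → 0⁺` as `T → 0⁺`, the two values of `ψ_m⁻¹`
in `α_m(T)` are asymptotically `ε / c_m` and `δ / c_m` times the same quantity.
-/

theorem tendsto_nhds_zero_of_tendsto_div {f : ℝ → ℝ} {c : ℝ}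
    (h : Tendsto (fun y => f y / y) (𝓝[>] 0) (𝓝 c)) : Tendsto f (𝓝[>] 0) (𝓝 0) := by
  have hid : Tendsto (fun y : ℝ => y) (𝓝[>] 0) (𝓝 0) := nhdsWithin_le_nhds
  refine (mul_zero c ▸ h.mul hid).congr' ?_
  filter_upwards [self_mem_nhdsWithin] with y (hy : 0 < y)
  exact div_mul_cancel₀ (f y) hy.ne'

theorem tendsto_nhdsGT_zero_of_tendsto_div {f : ℝ → ℝ} {c : ℝ} (hc : 0 < c)
    (h : Tendsto (fun y => f y / y) (𝓝[>] 0) (𝓝 c)) : Tendsto f (𝓝[>] 0) (𝓝[>] 0) := by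
  refine tendsto_nhdsWithin_iff.2 ⟨tendsto_nhds_zero_of_tendsto_div h, ?_⟩
  filter_upwards [h.eventually (lt_mem_nhds hc), self_mem_nhdsWithin] with y hfy (hy : 0 < y)
  exact (div_pos_iff_of_pos_right hy).1 hfy

theorem tendsto_div_of_eq_div_sub {φ ψ : ℝ → ℝ} {K u S l μ : ℝ}
    (hφ : Tendsto φ (𝓝[>] 0) (𝓝 0)) (huS : u * S ≠ 0)
    (hψ : ∀ y, ψ y = K * y / (u * (S - l * y - μ * φ y))) :
    Tendsto (fun y => ψ y / y) (𝓝[>] 0) (𝓝 (K / (u * S))) := by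
  have hid : Tendsto (fun y : ℝ => y) (𝓝[>] 0) (𝓝 0) := nhdsWithin_le_nhds
  have hden : Tendsto (fun y => u * (S - l * y - μ * φ y)) (𝓝[>] 0) (𝓝 (u * S)) := by
    simpa using ((tendsto_const_nhds.sub (hid.const_mul l)).sub (hφ.const_mul μ)).const_mul u
  refine (tendsto_const_nhds.div hden huS).congr' ?_
  filter_upwards [self_mem_nhdsWithin] with y (hy : 0 < y)
  rw [Pi.div_apply, hψ, div_div, mul_div_mul_right _ _ hy.ne']

theorem StrictMonoOn.tendsto_nhdsGT_of_rightInverse {f g : ℝ → ℝ} {D : Set ℝ} {a b : ℝ}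
    (hf : StrictMonoOn f D) (ha : a ∈ D) (hfa : f a = b) (hD : ∀ᶠ y in 𝓝[>] a, y ∈ D)
    (hg : ∀ x, b < x → g x ∈ D ∧ f (g x) = x) : Tendsto g (𝓝[>] b) (𝓝[>] a) := by
  have hgt : ∀ x, b < x → a < g x := fun x hx => by
    by_contra! hle
    have := hf.monotoneOn (hg x hx).1 ha hle
    rw [(hg x hx).2, hfa] at this
    exact this.not_gt hx
  refine tendsto_nhdsWithin_iff.2 ⟨tendsto_order.2 ⟨fun a' ha' => ?_, fun c hc => ?_⟩,
    eventually_nhdsWithin_of_forall hgt⟩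
  · exact eventually_nhdsWithin_of_forall fun x hx => ha'.trans (hgt x hx)
  · obtain ⟨η, hηD, haη, hηc⟩ := (hD.and (Ioo_mem_nhdsGT hc)).exists
    have hbη : b < f η := hfa ▸ hf ha hηD haη
    filter_upwards [Ioo_mem_nhdsGT hbη] with x hx
    by_contra! hηg
    have := hf.monotoneOn hηD (hg x hx.1).1 (hηc.le.trans hηg)
    rw [(hg x hx.1).2] at this
    exact this.not_gt hx.2

theorem tendsto_div_of_rightInverse {f g : ℝ → ℝ} {c : ℝ} (hc : c ≠ 0)
    (hf : Tendsto (fun y => f y / y) (𝓝[>] 0) (𝓝 c)) (hg : Tendsto g (𝓝[>] 0) (𝓝[>] 0))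
    (hfg : ∀ x, 0 < x → f (g x) = x) : Tendsto (fun x => g x / x) (𝓝[>] 0) (𝓝 c⁻¹) := by
  refine ((hf.comp hg).inv₀ hc).congr' ?_
  filter_upwards [self_mem_nhdsWithin] with x (hx : 0 < x)
  simp only [Function.comp_apply, inv_div, hfg x hx]

theorem tendsto_nhdsGT_zero_of_le_mul {ρ : ℝ → ℝ} {C : ℝ} (hpos : ∀ T, 0 < T → 0 < ρ T)
    (hle : ∀ T, 0 < T → ρ T ≤ C * T) : Tendsto ρ (𝓝[>] 0) (𝓝[>] 0) := by
  have hC : Tendsto (fun T : ℝ => C * T) (𝓝[>] 0) (𝓝 0) := by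
    simpa using (tendsto_id.const_mul C).mono_left (nhdsWithin_le_nhds (a := (0 : ℝ)))
  refine tendsto_nhdsWithin_iff.2 ⟨squeeze_zero' ?_ ?_ hC, eventually_nhdsWithin_of_forall hpos⟩
  · exact eventually_nhdsWithin_of_forall fun T hT => (hpos T hT).le
  · exact eventually_nhdsWithin_of_forall hle

theorem tendsto_nhdsGT_zero_const_mul {ε : ℝ} (hε : 0 < ε) :
    Tendsto (fun y : ℝ => ε * y) (𝓝[>] 0) (𝓝[>] 0) :=
  tendsto_nhdsGT_zero_of_le_mul (fun _ hy => mul_pos hε hy) (fun _ _ => le_rfl)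

theorem tendsto_div_comp_const_mul {α : Type*} {l : Filter α} {h : ℝ → ℝ} {s : α → ℝ} {L ε δ : ℝ}
    (hh : Tendsto (fun x => h x / x) (𝓝[>] 0) (𝓝 L)) (hL : L ≠ 0) (hs : Tendsto s l (𝓝[>] 0))
    (hε : 0 < ε) (hδ : 0 < δ) :
    Tendsto (fun t => h (ε * s t) / h (δ * s t)) l (𝓝 (ε / δ)) := by
  have hlim : ∀ a, 0 < a → Tendsto (fun t => h (a * s t) / (a * s t)) l (𝓝 L) := fun a ha =>
    hh.comp ((tendsto_nhdsGT_zero_const_mul ha).comp hs)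
  have := ((hlim ε hε).div (hlim δ hδ) hL).mul_const (ε / δ)
  rw [div_self hL, one_mul] at this
  refine this.congr' ?_
  filter_upwards [tendsto_nhdsWithin_iff.1 hs |>.2] with t (ht : 0 < s t)
  rw [Pi.div_apply]
  field_simp

theorem exists_pos_tendsto_div_of_recursion {M : ℕ} {d : ℝ} {u v w S lam mu : ℕ → ℝ}
    {ψ : ℕ → ℝ → ℝ} (hd : 0 < d)
    (hu : ∀ m, 1 ≤ m → m ≤ M - 1 → 0 < u m)
    (hv : ∀ m, 1 ≤ m → m ≤ M - 1 → 0 < v m)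
    (hw : ∀ m, 1 ≤ m → m ≤ M - 1 → 0 < w m)
    (hS : ∀ m, 2 ≤ m → m ≤ M → 0 < S m)
    (hψM : ∀ y, ψ M y = y)
    (hψrec : ∀ m, 2 ≤ m → m ≤ M → ∀ y,
      ψ (m - 1) y = d * (v (m - 1) / w (m - 1) + 1) * y /
        (u (m - 1) * (S m - lam m * y - mu m * ψ m y)))
    {m : ℕ} (hm : 1 ≤ m) (hmM : m ≤ M) :
    ∃ c, 0 < c ∧ Tendsto (fun y => ψ m y / y) (𝓝[>] 0) (𝓝 c) := by
  induction hmM using Nat.decreasingInduction with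
  | self =>
    refine ⟨1, one_pos, tendsto_const_nhds.congr' ?_⟩
    filter_upwards [self_mem_nhdsWithin] with y (hy : 0 < y)
    rw [hψM, div_self hy.ne']
  | of_succ k hk ih =>
    obtain ⟨c, -, hc⟩ := ih (by omega)
    have hrec := hψrec (k + 1) (by omega) hk
    simp only [Nat.add_sub_cancel] at hrec
    have hK : 0 < d * (v k / w k + 1) := by
      have := div_pos (hv k hm (by omega)) (hw k hm (by omega))
      positivity
    have huS : 0 < u k * S (k + 1) := mul_pos (hu k hm (by omega)) (hS (k + 1) (by omega) hk)
    exact ⟨_, div_pos hK huS,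
      tendsto_div_of_eq_div_sub (tendsto_nhds_zero_of_tendsto_div hc) huS.ne' hrec⟩

theorem stmt16_general
    (M : ℕ) (hM : 2 ≤ M)
    (d : ℝ) (hd : 0 < d)
    (u v w : ℕ → ℝ)
    (hu : ∀ m, 1 ≤ m → m ≤ M - 1 → 0 < u m)
    (hv : ∀ m, 1 ≤ m → m ≤ M - 1 → 0 < v m)
    (hw : ∀ m, 1 ≤ m → m ≤ M - 1 → 0 < w m)
    (S lam mu : ℕ → ℝ)
    (hS : ∀ m, 2 ≤ m → m ≤ M → 0 < S m)
    (hlam : ∀ m, 1 ≤ m → m ≤ M → 0 < lam m)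
    (hmu : ∀ m, 1 ≤ m → m ≤ M → 0 < mu m)
    (ψ : ℕ → ℝ → ℝ)
    (hψM : ∀ y, ψ M y = y)
    (hψrec : ∀ m, 2 ≤ m → m ≤ M → ∀ y,
      ψ (m - 1) y = d * (v (m - 1) / w (m - 1) + 1) * y /
        (u (m - 1) * (S m - lam m * y - mu m * ψ m y)))
    (ξ : ℕ → ℝ)
    (hξpos : ∀ m, 1 ≤ m → m ≤ M - 1 → 0 < ξ m)
    (hψprop : ∀ m, 1 ≤ m → m ≤ M →
      ContinuousOn (ψ m) {y : ℝ | 0 ≤ y ∧ (m ≤ M - 1 → y < ξ m)} ∧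
      StrictMonoOn (ψ m) {y : ℝ | 0 ≤ y ∧ (m ≤ M - 1 → y < ξ m)} ∧
      (∀ y, 0 ≤ y → (m ≤ M - 1 → y < ξ m) → 0 ≤ ψ m y) ∧
      ψ m 0 = 0)
    (ψinv : ℕ → ℝ → ℝ)
    (hinv : ∀ m, 1 ≤ m → m ≤ M →
      (∀ y, 0 ≤ y → (m ≤ M - 1 → y < ξ m) → ψinv m (ψ m y) = y) ∧
      (∀ x, 0 ≤ x → ψ m (ψinv m x) = x ∧ 0 ≤ ψinv m x ∧ (m ≤ M - 1 → ψinv m x < ξ m)))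
    (ρ : ℝ → ℝ)
    (hρ : ∀ T, 0 ≤ T → ρ T ∈ Set.Ico 0 (ξ 1) ∧ lam 1 * ρ T + mu 1 * ψ 1 (ρ T) = T)
    (ε δ : ℝ) (hε : 0 < ε) (hεδ : ε < δ) :
    (∀ T : ℝ, 0 < T →
      ψinv M (ε * ψ M (ρ T)) / ψinv M (δ * ψ M (ρ T)) = ε / δ) ∧
    (∀ m, 1 ≤ m → m ≤ M →
      Tendsto (fun T => ψinv m (ε * ψ m (ρ T)) / ψinv m (δ * ψ m (ρ T)))
        (𝓝[>] 0) (𝓝 (ε / δ))) := by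
  have hM1 : 1 ≤ M := by omega
  have hρpos : ∀ T, 0 < T → 0 < ρ T := fun T hT => by
    obtain ⟨⟨hρ0, -⟩, hρT⟩ := hρ T hT.le
    refine hρ0.lt_of_ne fun h => hT.ne ?_
    rw [← hρT, ← h, (hψprop 1 le_rfl hM1).2.2.2]
    ring
  refine ⟨fun T hT => ?_, fun m hm hmM => ?_⟩
  · have hid : ∀ x, 0 ≤ x → ψinv M x = x := fun x hx => by
      simpa [hψM] using ((hinv M hM1 le_rfl).2 x hx).1
    have hρT := hρpos T hT
    rw [hψM, hid _ (mul_pos hε hρT).le, hid _ (mul_pos (hε.trans hεδ) hρT).le,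
      mul_div_mul_right _ _ hρT.ne']
  obtain ⟨c, hc, hψc⟩ := exists_pos_tendsto_div_of_recursion hd hu hv hw hS hψM hψrec hm hmM
  obtain ⟨-, hmono, -, hψ0⟩ := hψprop m hm hmM
  have hdom : ∀ᶠ y in 𝓝[>] (0 : ℝ), 0 ≤ y ∧ (m ≤ M - 1 → y < ξ m) := by
    by_cases h : m ≤ M - 1
    · filter_upwards [Ioo_mem_nhdsGT (hξpos m hm h)] with y hy using ⟨hy.1.le, fun _ => hy.2⟩
    · filter_upwards [self_mem_nhdsWithin] with y (hy : 0 < y)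
        using ⟨hy.le, fun h' => absurd h' h⟩
  have hinvm : Tendsto (ψinv m) (𝓝[>] 0) (𝓝[>] 0) :=
    hmono.tendsto_nhdsGT_of_rightInverse ⟨le_rfl, hξpos m hm⟩ hψ0 hdom fun x hx =>
      have h := (hinv m hm hmM).2 x hx.le
      ⟨⟨h.2.1, h.2.2⟩, h.1⟩
  have hρlim : Tendsto ρ (𝓝[>] 0) (𝓝[>] 0) := by
    refine tendsto_nhdsGT_zero_of_le_mul (C := (lam 1)⁻¹) hρpos fun T hT => ?_
    obtain ⟨⟨hρ0, hρξ⟩, hρT⟩ := hρ T hT.le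
    have hψρ := (hψprop 1 le_rfl hM1).2.2.1 (ρ T) hρ0 fun _ => hρξ
    rw [le_inv_mul_iff₀ (hlam 1 le_rfl hM1)]
    nlinarith [hmu 1 le_rfl hM1]
  exact tendsto_div_comp_const_mul
    (tendsto_div_of_rightInverse hc.ne' hψc hinvm fun x hx => ((hinv m hm hmM).2 x hx.le).1)
    (inv_ne_zero hc.ne') ((tendsto_nhdsGT_zero_of_tendsto_div hc hψc).comp hρlim) hε
    (hε.trans hεδ)

theorem stmt16
    (M : ℕ) (hM : 2 ≤ M)
    (d : ℝ) (hd : 0 < d)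
    (u v w : ℕ → ℝ)
    (hu : ∀ m, 1 ≤ m → m ≤ M - 1 → 0 < u m)
    (hv : ∀ m, 1 ≤ m → m ≤ M - 1 → 0 < v m)
    (hw : ∀ m, 1 ≤ m → m ≤ M - 1 → 0 < w m)
    (S lam mu : ℕ → ℝ)
    (hS : ∀ m, 2 ≤ m → m ≤ M → 0 < S m)
    (hlam : ∀ m, 1 ≤ m → m ≤ M → 0 < lam m)
    (hmu : ∀ m, 1 ≤ m → m ≤ M → 0 < mu m)
    (ψ : ℕ → ℝ → ℝ)
    (hψM : ∀ y, ψ M y = y)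
    (hψrec : ∀ m, 2 ≤ m → m ≤ M → ∀ y,
      ψ (m - 1) y = d * (v (m - 1) / w (m - 1) + 1) * y /
        (u (m - 1) * (S m - lam m * y - mu m * ψ m y)))
    (ξ : ℕ → ℝ)
    (hξpos : ∀ m, 1 ≤ m → m ≤ M - 1 → 0 < ξ m)
    (hξlt : ∀ m, 1 ≤ m → m + 1 ≤ M - 1 → ξ m < ξ (m + 1))
    (hξzero : ∀ m, 1 ≤ m → m ≤ M - 1 →
      S (m + 1) - lam (m + 1) * ξ m - mu (m + 1) * ψ (m + 1) (ξ m) = 0)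
    (hξuniq : ∀ m, 1 ≤ m → m ≤ M - 1 → ∀ y, 0 < y → (m + 1 ≤ M - 1 → y < ξ (m + 1)) →
      S (m + 1) - lam (m + 1) * y - mu (m + 1) * ψ (m + 1) y = 0 → y = ξ m)
    (hψprop : ∀ m, 1 ≤ m → m ≤ M →
      ContinuousOn (ψ m) {y : ℝ | 0 ≤ y ∧ (m ≤ M - 1 → y < ξ m)} ∧
      StrictMonoOn (ψ m) {y : ℝ | 0 ≤ y ∧ (m ≤ M - 1 → y < ξ m)} ∧
      (∀ y, 0 ≤ y → (m ≤ M - 1 → y < ξ m) → 0 ≤ ψ m y) ∧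
      ψ m 0 = 0)
    (hψtop : ∀ m, 1 ≤ m → m ≤ M - 1 → Tendsto (ψ m) (𝓝[<] (ξ m)) atTop)
    (ψinv : ℕ → ℝ → ℝ)
    (hinv : ∀ m, 1 ≤ m → m ≤ M →
      (∀ y, 0 ≤ y → (m ≤ M - 1 → y < ξ m) → ψinv m (ψ m y) = y) ∧
      (∀ x, 0 ≤ x → ψ m (ψinv m x) = x ∧ 0 ≤ ψinv m x ∧ (m ≤ M - 1 → ψinv m x < ξ m)))
    (ρ : ℝ → ℝ)
    (hρ : ∀ T, 0 ≤ T → ρ T ∈ Set.Ico 0 (ξ 1) ∧ lam 1 * ρ T + mu 1 * ψ 1 (ρ T) = T)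
    (ε δ : ℝ) (hε : 0 < ε) (hεδ : ε < δ) (hδ : δ < 1) :
    (∀ T : ℝ, 0 < T →
      ψinv M (ε * ψ M (ρ T)) / ψinv M (δ * ψ M (ρ T)) = ε / δ) ∧
    (∀ m, 1 ≤ m → m ≤ M →
      Tendsto (fun T => ψinv m (ε * ψ m (ρ T)) / ψinv m (δ * ψ m (ρ T)))
        (𝓝[>] 0) (𝓝 (ε / δ))) :=
  stmt16_general M hM d hd u v w hu hv hw S lam mu hS hlam hmu ψ hψM hψrec ξ hξpos hψprop ψinv hinv
    ρ hρ ε δ hε hεδ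
end
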